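/- arXiv:2211.05706 — 12 statements merged into one kernel-verified Lean document; each statement's English description precedes it below -/
import Mathlib

section
/- Let K ⊆ L be a field extension and X an indeterminate. Then the intersection of the Laurent series field K((X)) with the rational function field L(X) (both viewed inside L((X))) equals K(X). -/
open HahnSeries

noncomputable section LaurentInterAux

variable {K L : Type*} [Field K] [Field L] [Algebra K L]

/-- coefficient of a finite sum of Hahn series -/
lemma hahn_coeff_sum {α : Type*} (t : Finset α) (F : α → LaurentSeries L) (n : ℤ) :
    (∑ j ∈ t, F j).coeff n = ∑ j ∈ t, (F j).coeff n := by
  classical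
  induction t using Finset.induction_on with
  | empty => simp
  | insert _ _ h ih => simp [Finset.sum_insert h, HahnSeries.coeff_add, ih]

lemma hahn_eq_sum_single (h : LaurentSeries L) (t : Finset ℤ) (ht : h.support ⊆ ↑t) :
    h = ∑ n ∈ t, HahnSeries.single n (h.coeff n) := by
  ext m
  rw [hahn_coeff_sum]
  by_cases hm : m ∈ t
  · rw [Finset.sum_eq_single_of_mem m hm
      (fun b _ hb => HahnSeries.coeff_single_of_ne hb.symm),
      HahnSeries.coeff_single_same]
  · have h0 : h.coeff m = 0 := by
      by_contra hc; exact hm (ht hc)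
    rw [h0]
    exact (Finset.sum_eq_zero fun b hb =>
      HahnSeries.coeff_single_of_ne (fun he => hm (by rw [he]; exact hb))).symm

lemma hahn_mul_coeff_of_supp (Q f : LaurentSeries L) (t : Finset ℤ) (hQ : Q.support ⊆ ↑t)
    (n : ℤ) : (Q * f).coeff n = ∑ j ∈ t, Q.coeff j * f.coeff (n - j) := by
  conv_lhs => rw [hahn_eq_sum_single Q t hQ]
  rw [Finset.sum_mul, hahn_coeff_sum]
  refine Finset.sum_congr rfl fun j _ => ?_
  have := HahnSeries.coeff_single_mul_add (r := Q.coeff j) (x := f) (a := n - j) (b := j)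
  simpa using this


/-- Descent of linear dependence: a nonzero `L`-solution of a `K`-linear system yields a
nonzero `K`-solution. -/
lemma descent_solution (t : Finset ℤ) (v : ℤ → ℤ → K) (c : ℤ → L) (j0 : ℤ) (hj0 : j0 ∈ t)
    (hc0 : c j0 ≠ 0)
    (h : ∀ n : ℤ, ∑ j ∈ t, c j * algebraMap K L (v j n) = 0) :
    ∃ c' : ℤ → K, c' j0 ≠ 0 ∧ ∀ n : ℤ, ∑ j ∈ t, c' j * v j n = 0 := by
  classical
  let b := Module.Basis.ofVectorSpace K L
  have hrepr : b.repr (c j0) ≠ 0 := fun hz => hc0 (by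
    have := congrArg b.repr.symm hz
    simpa using this)
  obtain ⟨β, hβ⟩ : ∃ β, b.repr (c j0) β ≠ 0 := by
    by_contra hcon
    push_neg at hcon
    exact hrepr (Finsupp.ext fun a => by simpa using hcon a)
  refine ⟨fun j => b.repr (c j) β, hβ, fun n => ?_⟩
  have key : ∑ j ∈ t, v j n • c j = 0 := by
    rw [← h n]
    refine Finset.sum_congr rfl fun j _ => ?_
    rw [Algebra.smul_def, mul_comm]
  have key2 : ∑ j ∈ t, v j n • b.repr (c j) = 0 := by
    have := congrArg b.repr key
    rw [map_sum, map_zero] at this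
    simpa only [map_smul] using this
  have := congrArg (fun F : _ →₀ K => F β) key2
  simpa [Finsupp.finset_sum_apply, smul_eq_mul, mul_comm] using this


/-- The ring hom `K((X)) →+* L((X))` induced by `algebraMap K L` on coefficients. -/
def laurentMapRH (K L : Type*) [Field K] [Field L] [Algebra K L] :
    LaurentSeries K →+* LaurentSeries L where
  toFun g := g.map (algebraMap K L)
  map_one' := by
    rw [← HahnSeries.single_zero_one, ← HahnSeries.single_zero_one]
    exact (HahnSeries.map_single (f := (algebraMap K L : ZeroHom K L)) ).trans (by simp)
  map_mul' x y := HahnSeries.map_mul ((algebraMap K L) : K →ₙ+* L)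
  map_zero' := HahnSeries.map_zero ((algebraMap K L) : ZeroHom K L)
  map_add' x y := HahnSeries.map_add ((algebraMap K L) : K →+ L)

lemma laurentMapRH_coeff (g : LaurentSeries K) (n : ℤ) :
    (laurentMapRH K L g).coeff n = algebraMap K L (g.coeff n) := rfl

/-- Laurent series with all coefficients in the image of `K` are exactly the image of
`K((X))`. -/
lemma mem_range_laurentMapRH (f : LaurentSeries L)
    (hf : ∀ n : ℤ, f.coeff n ∈ Set.range (algebraMap K L)) :
    ∃ g : LaurentSeries K, laurentMapRH K L g = f := by
  choose g hg using hf
  have hinj : Function.Injective (algebraMap K L) := (algebraMap K L).injective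
  refine ⟨⟨g, ?_⟩, ?_⟩
  · have hsupp : Function.support g = f.support := by
      ext n
      simp only [Function.mem_support, HahnSeries.mem_support]
      constructor
      · intro hn hc
        exact hn (hinj (by rw [hg n, hc, map_zero]))
      · intro hn hc
        exact hn (by rw [← hg n, hc, map_zero])
    rw [hsupp]
    exact f.isPWO_support
  · ext n
    exact hg n

/-- Finite-support Laurent series form a subring. -/
def finSuppSubring (L : Type*) [Field L] : Subring (LaurentSeries L) where
  carrier := {f | f.support.Finite}
  zero_mem' := by simp [Set.mem_setOf_eq]
  one_mem' := by
    rw [Set.mem_setOf_eq, ← HahnSeries.single_zero_one]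
    exact (Set.finite_singleton 0).subset HahnSeries.support_single_subset
  add_mem' {a b} ha hb := (ha.union hb).subset (HahnSeries.support_add_subset a b)
  neg_mem' {a} ha := by rwa [Set.mem_setOf_eq, HahnSeries.support_neg]
  mul_mem' {a b} ha hb := ((ha.add hb).subset HahnSeries.support_mul_subset)


/-- The subfield `K(X)` of `L((X))`. -/
def FK (K L : Type*) [Field K] [Field L] [Algebra K L] : Subfield (LaurentSeries L) :=
  Subfield.closure
    (Set.range ((HahnSeries.C : L →+* LaurentSeries L).comp (algebraMap K L)) ∪
      {(HahnSeries.single 1 1 : LaurentSeries L)})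

lemma single_intCast_one_mem_FK (n : ℤ) :
    (HahnSeries.single n 1 : LaurentSeries L) ∈ FK K L := by
  have hX : (HahnSeries.single (1 : ℤ) (1 : L)) ∈ FK K L :=
    Subfield.subset_closure (Or.inr rfl)
  induction n using Int.induction_on with
  | zero => rw [HahnSeries.single_zero_one]; exact Subfield.one_mem _
  | succ k ih =>
      have : (HahnSeries.single ((k : ℤ) + 1) 1 : LaurentSeries L)
          = HahnSeries.single (k : ℤ) 1 * HahnSeries.single 1 1 := by
        rw [HahnSeries.single_mul_single, mul_one]
      rw [this]
      exact Subfield.mul_mem _ ih hX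
  | pred k ih =>
      have hXne : (HahnSeries.single (1 : ℤ) (1 : L)) ≠ 0 :=
        HahnSeries.single_ne_zero one_ne_zero
      have hmul : (HahnSeries.single (-(k : ℤ) - 1) 1 : LaurentSeries L)
          * HahnSeries.single 1 1 = HahnSeries.single (-(k : ℤ)) 1 := by
        rw [HahnSeries.single_mul_single, mul_one, sub_add_cancel]
      have : (HahnSeries.single (-(k : ℤ) - 1) 1 : LaurentSeries L)
          = HahnSeries.single (-(k : ℤ)) 1 * (HahnSeries.single (1 : ℤ) (1 : L))⁻¹ := by
        rw [eq_mul_inv_iff_mul_eq₀ hXne]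
        exact hmul
      rw [this]
      exact Subfield.mul_mem _ ih (Subfield.inv_mem _ hX)

lemma mem_FK_of_finite_support (h : LaurentSeries L) (hfin : h.support.Finite)
    (hco : ∀ n : ℤ, h.coeff n ∈ Set.range (algebraMap K L)) : h ∈ FK K L := by
  classical
  rw [hahn_eq_sum_single h hfin.toFinset (by simp)]
  refine Subfield.sum_mem _ fun n _ => ?_
  obtain ⟨k, hk⟩ := hco n
  have : (HahnSeries.single n (h.coeff n) : LaurentSeries L)
      = HahnSeries.single n 1 * HahnSeries.C (h.coeff n) := by
    rw [HahnSeries.C_apply, HahnSeries.single_mul_single, add_zero, one_mul]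
  rw [this]
  refine Subfield.mul_mem _ (single_intCast_one_mem_FK n) ?_
  exact Subfield.subset_closure (Or.inl ⟨k, by rw [← hk]; rfl⟩)


lemma hahn_coeff_sum_single (t : Finset ℤ) (w : ℤ → L) (m : ℤ) :
    (∑ j ∈ t, HahnSeries.single j (w j) : LaurentSeries L).coeff m
      = if m ∈ t then w m else 0 := by
  rw [hahn_coeff_sum]
  split_ifs with hm
  · rw [Finset.sum_eq_single_of_mem m hm
      (fun b _ hb => HahnSeries.coeff_single_of_ne hb.symm),
      HahnSeries.coeff_single_same]
  · exact Finset.sum_eq_zero fun b hb =>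
      HahnSeries.coeff_single_of_ne (fun he => hm (by rw [he]; exact hb))

end LaurentInterAux



/-- Let `K ⊆ L` be a field extension and `X` an indeterminate. Inside the
Laurent series field `L((X))`, the intersection of `K((X))` (the Laurent series with all
coefficients in `K`) with the rational function field `L(X)` (the subfield generated by the
constants from `L` together with the variable `X`) equals `K(X)` (the subfield generated by the
constants from `K` together with `X`). -/
theorem laurent_inter_ratfunc (K L : Type*) [Field K] [Field L] [Algebra K L] :
    {f : LaurentSeries L | ∀ n : ℤ, f.coeff n ∈ Set.range (algebraMap K L)}
      ∩ (Subfield.closure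
          (Set.range (HahnSeries.C : L →+* LaurentSeries L) ∪
            {(HahnSeries.single 1 1 : LaurentSeries L)}) : Subfield (LaurentSeries L))
    = (Subfield.closure
        (Set.range ((HahnSeries.C : L →+* LaurentSeries L).comp (algebraMap K L)) ∪
          {(HahnSeries.single 1 1 : LaurentSeries L)}) : Subfield (LaurentSeries L)) := by
  classical
  apply Set.Subset.antisymm
  · -- hard direction: K((X)) ∩ L(X) ⊆ K(X)
    rintro f ⟨hco, hfL⟩
    show f ∈ FK K L
    obtain ⟨P, hP, Q, hQ, hPQ⟩ := Subfield.mem_closure_iff.mp hfL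
    by_cases hQ0 : Q = 0
    · have hf0 : f = 0 := by rw [← hPQ, hQ0, div_zero]
      rw [hf0]; exact Subfield.zero_mem _
    have hsub : Subring.closure
        (Set.range (HahnSeries.C : L →+* LaurentSeries L) ∪
          {(HahnSeries.single 1 1 : LaurentSeries L)}) ≤ finSuppSubring L := by
      rw [Subring.closure_le]
      rintro x (⟨a, rfl⟩ | rfl)
      · refine (Set.finite_singleton (0 : ℤ)).subset ?_
        rw [HahnSeries.C_apply]
        exact HahnSeries.support_single_subset
      · exact (Set.finite_singleton (1 : ℤ)).subset HahnSeries.support_single_subset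
    have hPfin : P.support.Finite := hsub hP
    have hQfin : Q.support.Finite := hsub hQ
    have hQf : Q * f = P := by
      rw [← hPQ, mul_comm, div_mul_cancel₀ _ hQ0]
    set t : Finset ℤ := hQfin.toFinset with ht
    obtain ⟨N, hN⟩ := hPfin.bddAbove
    obtain ⟨j0, hj0s⟩ := HahnSeries.support_nonempty_iff.mpr hQ0
    choose g hg using hco
    set v : ℤ → ℤ → K := fun j n => if N < n then g (n - j) else 0 with hv
    have hsys : ∀ n : ℤ, ∑ j ∈ t, Q.coeff j * algebraMap K L (v j n) = 0 := by
      intro n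
      by_cases hn : N < n
      · have h1 : (Q * f).coeff n = ∑ j ∈ t, Q.coeff j * f.coeff (n - j) :=
          hahn_mul_coeff_of_supp Q f t (by simp [ht]) n
        have h2 : P.coeff n = 0 := by
          by_contra hc
          exact absurd (hN hc) (not_le.mpr hn)
        calc ∑ j ∈ t, Q.coeff j * algebraMap K L (v j n)
            = ∑ j ∈ t, Q.coeff j * f.coeff (n - j) := by
              refine Finset.sum_congr rfl fun j _ => ?_
              rw [hv]; simp only [hn, if_true]; rw [hg]
          _ = (Q * f).coeff n := h1.symm
          _ = 0 := by rw [hQf, h2]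
      · simp [hv, hn]
    obtain ⟨c', hc'0, hc'⟩ := descent_solution t v Q.coeff j0 (by simp [ht]; exact hj0s)
      hj0s hsys
    set Q' : LaurentSeries L := ∑ j ∈ t, HahnSeries.single j (algebraMap K L (c' j)) with hQ'
    have hQ'coeff : ∀ m : ℤ, Q'.coeff m = if m ∈ t then algebraMap K L (c' m) else 0 :=
      fun m => hahn_coeff_sum_single t _ m
    have hQ'supp : Q'.support ⊆ ↑t := by
      intro m hm
      by_contra hmt
      exact hm (by rw [hQ'coeff, if_neg (fun hmem => hmt (Finset.mem_coe.mpr hmem))])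
    have hQ'0 : Q' ≠ 0 := by
      intro hz
      apply hc'0
      have h3 := hQ'coeff j0
      rw [hz] at h3
      simp only [HahnSeries.coeff_zero] at h3
      rw [if_pos (by simp [ht]; exact hj0s)] at h3
      exact (algebraMap K L).injective (by rw [← h3, map_zero])
    have hP'coeff : ∀ n : ℤ,
        (Q' * f).coeff n = algebraMap K L (∑ j ∈ t, c' j * g (n - j)) := by
      intro n
      rw [hahn_mul_coeff_of_supp Q' f t hQ'supp, map_sum]
      refine Finset.sum_congr rfl fun j hj => ?_
      rw [hQ'coeff, if_pos hj, map_mul, hg]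
    have hP'zero : ∀ n : ℤ, N < n → (Q' * f).coeff n = 0 := by
      intro n hn
      rw [hP'coeff]
      have h4 : ∑ j ∈ t, c' j * g (n - j) = ∑ j ∈ t, c' j * v j n :=
        Finset.sum_congr rfl fun j _ => by rw [hv]; simp [hn]
      rw [h4, hc' n, map_zero]
    have hP'fin : (Q' * f).support.Finite := by
      by_cases hP'0 : Q' * f = 0
      · rw [hP'0]; simp
      · have hne : (Q' * f).support.Nonempty := HahnSeries.support_nonempty_iff.2 hP'0
        refine (Set.finite_Icc ((Q' * f).isWF_support.min hne) N).subset fun n hn => ?_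
        refine ⟨Set.IsWF.min_le _ hne hn, ?_⟩
        by_contra hcn
        exact hn (hP'zero n (not_le.mp hcn))
    have hQ'fin : Q'.support.Finite := t.finite_toSet.subset hQ'supp
    have hf : f = (Q' * f) * Q'⁻¹ := by
      rw [mul_comm Q' f, mul_assoc, mul_inv_cancel₀ hQ'0, mul_one]
    rw [hf]
    refine Subfield.mul_mem _
      (mem_FK_of_finite_support _ hP'fin fun n => ⟨_, (hP'coeff n).symm⟩)
      (Subfield.inv_mem _ (mem_FK_of_finite_support _ hQ'fin fun n => ?_))
    rw [hQ'coeff]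
    split_ifs
    · exact ⟨_, rfl⟩
    · exact ⟨0, map_zero _⟩
  · -- easy direction
    intro f hf
    constructor
    · -- coefficients in K
      have hle : FK K L ≤ (laurentMapRH K L).fieldRange := by
        rw [FK, Subfield.closure_le]
        rintro x (⟨k, rfl⟩ | rfl)
        · exact ⟨HahnSeries.C k, HahnSeries.map_C k (algebraMap K L)⟩
        · refine ⟨HahnSeries.single 1 1, ?_⟩
          show (HahnSeries.single (1:ℤ) (1:K)).map ((algebraMap K L) : ZeroHom K L) = _
          rw [HahnSeries.map_single]
          simp
      obtain ⟨gg, hgg⟩ := hle hf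
      intro n
      exact ⟨gg.coeff n, by rw [← hgg]; rfl⟩
    · -- f ∈ L(X)
      refine Subfield.closure_mono ?_ hf
      apply Set.union_subset_union_left
      rintro _ ⟨k, rfl⟩
      exact ⟨algebraMap K L k, rfl⟩
end

section
/- Let K be a field of characteristic ℓ > 0. Then inside K((X)), the intersection K(X) ∩ K((X^ℓ)) equals K(X^ℓ). -/
open HahnSeries Polynomial

section Aux

variable {K : Type*} [Field K]

noncomputable abbrev auxLX : LaurentSeries K := HahnSeries.single 1 1

lemma auxAlgebraMap_LS (a : K) : algebraMap K (LaurentSeries K) a = HahnSeries.C a := by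
  rw [HahnSeries.algebraMap_apply' (Γ := ℤ), PowerSeries.algebraMap_apply]
  simp [HahnSeries.ofPowerSeries_C]

lemma auxLX_pow (n : ℕ) : (auxLX : LaurentSeries K) ^ n = HahnSeries.single (n : ℤ) 1 := by
  rw [auxLX, HahnSeries.single_pow]; simp

lemma aux_coeff_aeval (p : K[X]) (n : ℕ) :
    (Polynomial.aeval (auxLX : LaurentSeries K) p).coeff (n : ℤ) = p.coeff n := by
  induction p using Polynomial.induction_on' with
  | add p q hp hq => simp [map_add, HahnSeries.coeff_add, hp, hq]
  | monomial i a =>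
      rw [aeval_monomial, auxAlgebraMap_LS, auxLX_pow, HahnSeries.C_apply,
        HahnSeries.single_mul_single, zero_add, mul_one, coeff_monomial,
        HahnSeries.coeff_single]
      simp [eq_comm, Nat.cast_inj]

lemma aux_aeval_ne_zero {q : K[X]} (hq : q ≠ 0) :
    Polynomial.aeval (auxLX : LaurentSeries K) q ≠ 0 := by
  intro h
  have := aux_coeff_aeval q q.natDegree
  rw [h] at this
  exact (Polynomial.leadingCoeff_ne_zero.mpr hq) (by simpa using this.symm)

lemma aux_aeval_mem (F : Subfield (LaurentSeries K)) (hC : ∀ c : K, HahnSeries.C c ∈ F)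
    {a : LaurentSeries K} (ha : a ∈ F) (p : K[X]) : Polynomial.aeval a p ∈ F := by
  induction p using Polynomial.induction_on' with
  | add p q hp hq => simpa [map_add] using F.add_mem hp hq
  | monomial i c =>
      rw [aeval_monomial, auxAlgebraMap_LS]
      exact F.mul_mem (hC c) (pow_mem ha i)

variable (ℓ : ℕ) (hℓ : ℓ ≠ 0)

/-- The ring embedding `K((Y)) → K((X))`, `Y ↦ X^ℓ`. -/
noncomputable def auxPsi : LaurentSeries K →+* LaurentSeries K :=
  HahnSeries.embDomainRingHom (zmultiplesHom ℤ (ℓ : ℤ))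
    (@id (Function.Injective _) fun a b h => by
      simp only [zmultiplesHom_apply, smul_eq_mul] at h
      exact mul_right_cancel₀ (by exact_mod_cast hℓ) h)
    (fun a b => by
      simp only [zmultiplesHom_apply, smul_eq_mul]
      exact mul_le_mul_iff_of_pos_right (by positivity))

lemma aux_mem_psi_range (x : LaurentSeries K) :
    x ∈ (auxPsi (K := K) ℓ hℓ).fieldRange ↔ ∀ n : ℤ, x.coeff n ≠ 0 → (ℓ : ℤ) ∣ n := by
  constructor
  · rintro ⟨y, rfl⟩ n hn
    rw [auxPsi, HahnSeries.embDomainRingHom_apply] at hn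
    by_contra hdvd
    refine hn (HahnSeries.embDomain_notin_range ?_)
    rintro ⟨m, hm⟩
    simp only [RelEmbedding.coe_mk, Function.Embedding.coeFn_mk, zmultiplesHom_apply,
      smul_eq_mul] at hm
    exact hdvd ⟨m, by rw [← hm, mul_comm]⟩
  · intro h
    set y : LaurentSeries K :=
      { coeff := fun n => x.coeff ((ℓ : ℤ) * n)
        isPWO_support' := by
          rw [Set.IsPWO, Set.partiallyWellOrderedOn_iff_exists_lt]; intro f hf
          obtain ⟨m, n, hmn, hle⟩ := Set.PartiallyWellOrderedOn.exists_lt x.isPWO_support (f := fun n => (ℓ : ℤ) * f n)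
            (fun n => by simpa using hf n)
          exact ⟨m, n, hmn, le_of_mul_le_mul_left hle (by positivity)⟩ } with hy
    refine ⟨y, ?_⟩
    rw [auxPsi, HahnSeries.embDomainRingHom_apply]
    ext n
    by_cases hdvd : (ℓ : ℤ) ∣ n
    · obtain ⟨m, rfl⟩ := hdvd
      trans y.coeff m
      · convert HahnSeries.embDomain_coeff using 2
        simp [zmultiplesHom_apply, mul_comm]
      · simp [hy]
    · rw [HahnSeries.embDomain_notin_range, eq_comm]
      · by_contra hx
        exact hdvd (h _ hx)
      · rintro ⟨m, hm⟩
        simp only [RelEmbedding.coe_mk, Function.Embedding.coeFn_mk, zmultiplesHom_apply,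
          smul_eq_mul] at hm
        exact hdvd ⟨m, by rw [← hm, mul_comm]⟩

lemma aux_psi_C (c : K) : auxPsi (K := K) ℓ hℓ (HahnSeries.C c) = HahnSeries.C c :=
  HahnSeries.embDomainRingHom_C

lemma aux_psi_single : auxPsi (K := K) ℓ hℓ (HahnSeries.single 1 1)
    = (HahnSeries.single 1 1 : LaurentSeries K) ^ ℓ := by
  rw [auxPsi, HahnSeries.embDomainRingHom_apply, HahnSeries.embDomain_single, auxLX_pow]
  congr 1
  simp [zmultiplesHom_apply]

noncomputable def auxRF : Subfield (LaurentSeries K) where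
  carrier := {f | ∃ p q : K[X], q ≠ 0 ∧
    f = Polynomial.aeval (auxLX : LaurentSeries K) p / Polynomial.aeval auxLX q}
  one_mem' := ⟨1, 1, one_ne_zero, by simp⟩
  zero_mem' := ⟨0, 1, one_ne_zero, by simp⟩
  mul_mem' := by
    rintro a b ⟨p₁, q₁, h₁, rfl⟩ ⟨p₂, q₂, h₂, rfl⟩
    exact ⟨p₁ * p₂, q₁ * q₂, mul_ne_zero h₁ h₂, by
      rw [map_mul, map_mul, div_mul_div_comm]⟩
  add_mem' := by
    rintro a b ⟨p₁, q₁, h₁, rfl⟩ ⟨p₂, q₂, h₂, rfl⟩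
    refine ⟨p₁ * q₂ + q₁ * p₂, q₁ * q₂, mul_ne_zero h₁ h₂, ?_⟩
    rw [map_add, map_mul, map_mul, map_mul,
      div_add_div _ _ (aux_aeval_ne_zero h₁) (aux_aeval_ne_zero h₂)]
  neg_mem' := by
    rintro a ⟨p, q, h, rfl⟩
    exact ⟨-p, q, h, by rw [map_neg]; ring⟩
  inv_mem' := by
    rintro a ⟨p, q, h, rfl⟩
    by_cases hzero : Polynomial.aeval (auxLX : LaurentSeries K) p = 0
    · exact ⟨0, 1, one_ne_zero, by simp [hzero]⟩
    · have hpne : p ≠ 0 := fun h0 => by simp [h0] at hzero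
      exact ⟨q, p, hpne, by rw [inv_div]⟩


lemma aux_mem_RF {x : LaurentSeries K} :
    x ∈ (auxRF : Subfield (LaurentSeries K)) ↔ ∃ p q : K[X], q ≠ 0 ∧
      x = Polynomial.aeval (auxLX : LaurentSeries K) p / Polynomial.aeval auxLX q :=
  Iff.rfl

end Aux

/-- Let `K` be a field of characteristic `ℓ > 0`. Inside the Laurent series
field `K((X))`, the intersection of the rational function field `K(X)` (the subfield generated
by the constants together with `X`) with `K((X^ℓ))` (the Laurent series supported on multiples
of `ℓ`) equals `K(X^ℓ)` (the subfield generated by the constants together with `X^ℓ`). -/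
theorem ratfunc_inter_laurent_pow_char (K : Type*) [Field K] (ℓ : ℕ) (hℓ : ℓ ≠ 0)
    [CharP K ℓ] :
    ((Subfield.closure
        (Set.range (HahnSeries.C : K →+* LaurentSeries K) ∪
          {(HahnSeries.single 1 1 : LaurentSeries K)}) : Subfield (LaurentSeries K)) : Set (LaurentSeries K))
      ∩ {f : LaurentSeries K | ∀ n : ℤ, f.coeff n ≠ 0 → (ℓ : ℤ) ∣ n}
    = ((Subfield.closure
        (Set.range (HahnSeries.C : K →+* LaurentSeries K) ∪
          {(HahnSeries.single 1 1 : LaurentSeries K) ^ ℓ}) : Subfield (LaurentSeries K)) : Set (LaurentSeries K)) := by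
  have hp : ℓ.Prime := (CharP.char_is_prime_or_zero K ℓ).resolve_right hℓ
  haveI : Fact ℓ.Prime := ⟨hp⟩
  set Sf : Subfield (LaurentSeries K) := (auxPsi (K := K) ℓ hℓ).fieldRange with hSf
  have hSC : ∀ c : K, HahnSeries.C c ∈ Sf := fun c => ⟨HahnSeries.C c, aux_psi_C ℓ hℓ c⟩
  have hSA : (auxLX : LaurentSeries K) ^ ℓ ∈ Sf :=
    ⟨HahnSeries.single 1 1, aux_psi_single ℓ hℓ⟩
  apply Set.Subset.antisymm
  · -- hard direction
    rintro f ⟨hf1, hf2⟩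
    have hcl : Subfield.closure (Set.range (HahnSeries.C : K →+* LaurentSeries K)
        ∪ {(auxLX : LaurentSeries K)}) ≤ auxRF := by
      apply Subfield.closure_le.mpr
      rintro x (⟨c, rfl⟩ | hx)
      · exact ⟨Polynomial.C c, 1, one_ne_zero, by simp [aeval_C, auxAlgebraMap_LS]⟩
      · rw [Set.mem_singleton_iff] at hx
        subst hx
        exact ⟨Polynomial.X, 1, one_ne_zero, by simp⟩
    obtain ⟨p, q, hq, hfpq⟩ := aux_mem_RF.mp (hcl hf1)
    have hq' : Polynomial.aeval (auxLX : LaurentSeries K) q ≠ 0 := aux_aeval_ne_zero hq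
    set g : K[X] := q.map (frobenius K ℓ) with hg
    have hqℓ : q ^ ℓ = Polynomial.expand K ℓ g := by
      rw [hg, ← Polynomial.map_expand, Polynomial.map_frobenius_expand]
    set R : K[X] := p * q ^ (ℓ - 1) with hR
    have hDvalue : Polynomial.aeval ((auxLX : LaurentSeries K) ^ ℓ) g
        = (Polynomial.aeval (auxLX : LaurentSeries K) q) ^ ℓ := by
      rw [← Polynomial.expand_aeval, ← hqℓ, map_pow]
    have hD : Polynomial.aeval ((auxLX : LaurentSeries K) ^ ℓ) g ≠ 0 := by
      rw [hDvalue]; exact pow_ne_zero _ hq'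
    have hRf : Polynomial.aeval (auxLX : LaurentSeries K) R
        = f * Polynomial.aeval ((auxLX : LaurentSeries K) ^ ℓ) g := by
      rw [hDvalue, hR, map_mul, map_pow, hfpq]
      field_simp
      rw [mul_assoc, ← pow_succ, Nat.sub_add_cancel hp.one_le]
    have hfS : f ∈ Sf := (aux_mem_psi_range ℓ hℓ f).mpr hf2
    have hRS : Polynomial.aeval (auxLX : LaurentSeries K) R ∈ Sf := by
      rw [hRf]
      exact Sf.mul_mem hfS (aux_aeval_mem Sf hSC hSA g)
    have hRcoeff : ∀ n : ℕ, ¬ ℓ ∣ n → R.coeff n = 0 := by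
      intro n hn
      by_contra hne
      have h1 : (Polynomial.aeval (auxLX : LaurentSeries K) R).coeff (n : ℤ) ≠ 0 := by
        rw [aux_coeff_aeval]; exact hne
      have h2 := (aux_mem_psi_range ℓ hℓ _).mp hRS n h1
      exact hn (by exact_mod_cast h2)
    have hexp : Polynomial.expand K ℓ (R.contract ℓ) = R := by
      ext n
      rw [Polynomial.coeff_expand hp.pos, Polynomial.coeff_contract hℓ]
      split_ifs with h
      · rw [Nat.div_mul_cancel h]
      · exact (hRcoeff n h).symm
    have hfinal : f = Polynomial.aeval ((auxLX : LaurentSeries K) ^ ℓ) (R.contract ℓ)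
        / Polynomial.aeval ((auxLX : LaurentSeries K) ^ ℓ) g := by
      rw [← Polynomial.expand_aeval ℓ (R.contract ℓ) (auxLX : LaurentSeries K), hexp, hRf,
        mul_div_assoc, div_self hD, mul_one]
    rw [hfinal]
    have hXmem : (auxLX : LaurentSeries K) ^ ℓ ∈ Subfield.closure
        (Set.range (HahnSeries.C : K →+* LaurentSeries K) ∪ {(auxLX : LaurentSeries K) ^ ℓ}) :=
      Subfield.subset_closure (Set.mem_union_right _ rfl)
    have hCmem : ∀ c : K, HahnSeries.C c ∈ Subfield.closure
        (Set.range (HahnSeries.C : K →+* LaurentSeries K) ∪ {(auxLX : LaurentSeries K) ^ ℓ}) :=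
      fun c => Subfield.subset_closure (Set.mem_union_left _ ⟨c, rfl⟩)
    exact Subfield.div_mem _ (aux_aeval_mem _ hCmem hXmem _) (aux_aeval_mem _ hCmem hXmem _)
  · -- easy direction
    intro f hf
    constructor
    · have h2 : Subfield.closure (Set.range (HahnSeries.C : K →+* LaurentSeries K)
          ∪ {(auxLX : LaurentSeries K) ^ ℓ}) ≤ Subfield.closure
          (Set.range (HahnSeries.C : K →+* LaurentSeries K) ∪ {(auxLX : LaurentSeries K)}) := by
        apply Subfield.closure_le.mpr
        rintro x (⟨c, rfl⟩ | hx)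
        · exact Subfield.subset_closure (Set.mem_union_left _ ⟨c, rfl⟩)
        · rw [Set.mem_singleton_iff] at hx
          subst hx
          have hmem : (auxLX : LaurentSeries K) ∈ Subfield.closure
              (Set.range (HahnSeries.C : K →+* LaurentSeries K)
                ∪ {(auxLX : LaurentSeries K)}) :=
            Subfield.subset_closure (Set.mem_union_right _ rfl)
          exact pow_mem hmem ℓ
      exact h2 hf
    · have hle : Subfield.closure (Set.range (HahnSeries.C : K →+* LaurentSeries K)
          ∪ {(auxLX : LaurentSeries K) ^ ℓ}) ≤ Sf := by
        apply Subfield.closure_le.mpr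
        rintro x (⟨c, rfl⟩ | hx)
        · exact hSC c
        · rw [Set.mem_singleton_iff] at hx
          subst hx
          exact hSA
      exact (aux_mem_psi_range ℓ hℓ f).mp (hle hf)
end

section
/- Let k be a field of characteristic zero, α ∈ k nonzero, and D_α the k-derivation of k(y,z) given by D_α = y∂_y + αz∂_z. If α is not a rational number (i.e., not in the prime subfield ℚ ⊆ k), then the kernel of D_α equals k. -/
open MvPolynomial Finsupp

set_option linter.unusedSectionVars false

section aux
variable {k : Type*} [Field k] [CharZero k] (α : k)

noncomputable def wgt (α : k) (m : Fin 2 →₀ ℕ) : k := (m 0 : k) + α * (m 1 : k)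

noncomputable def Eul (α : k) (p : MvPolynomial (Fin 2) k) : MvPolynomial (Fin 2) k :=
  X 0 * pderiv 0 p + C α * (X 1 * pderiv 1 p)

theorem Eul_add (p q : MvPolynomial (Fin 2) k) : Eul α (p + q) = Eul α p + Eul α q := by
  simp [Eul]; ring

theorem Eul_C (a : k) : Eul α (C a) = 0 := by simp [Eul]

theorem Eul_mul (p q : MvPolynomial (Fin 2) k) :
    Eul α (p * q) = Eul α p * q + p * Eul α q := by
  simp only [Eul, Derivation.leibniz, smul_eq_mul]; ring

theorem single_add_sub (m : Fin 2 →₀ ℕ) (i : Fin 2) (h : m i ≠ 0) :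
    Finsupp.single i 1 + (m - Finsupp.single i 1) = m := by
  ext j
  by_cases hj : j = i
  · subst hj
    simp only [Finsupp.add_apply, Finsupp.single_eq_same, Finsupp.tsub_apply]
    omega
  · simp [Finsupp.single_eq_of_ne' (Ne.symm hj)]

theorem Eul_monomial (m : Fin 2 →₀ ℕ) (c : k) :
    Eul α (monomial m c) = wgt α m • monomial m c := by
  have key : ∀ i : Fin 2, X i * pderiv i (monomial m c) = ((m i : k)) • monomial m c := by
    intro i
    rw [pderiv_monomial]
    by_cases h : m i = 0
    · simp [h]
    · rw [show X i * (monomial (m - Finsupp.single i 1)) (c * (m i : k)) =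
        monomial (Finsupp.single i 1 + (m - Finsupp.single i 1)) (c * (m i : k)) by
          rw [monomial_single_add, pow_one],
        single_add_sub m i h, smul_monomial]
      rw [smul_eq_mul, mul_comm]
  simp only [Eul, key, wgt, smul_monomial, C_mul_monomial, add_smul]
  congr 2 <;> simp [smul_eq_mul] <;> ring

theorem coeff_Eul (p : MvPolynomial (Fin 2) k) (m : Fin 2 →₀ ℕ) :
    coeff m (Eul α p) = wgt α m * coeff m p := by
  induction p using MvPolynomial.induction_on' with
  | monomial n a =>
    rw [Eul_monomial]
    by_cases h : m = n
    · subst h; simp [coeff_monomial]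
    · simp [coeff_monomial, Ne.symm h, h]
  | add p q hp hq => rw [Eul_add, coeff_add, coeff_add, hp, hq]; ring
end aux

section aux2
variable {k : Type*} [Field k] [CharZero k] {α : k}

theorem wgt_inj (hα : ¬ ∃ r : ℚ, (r : k) = α) {m1 m2 : Fin 2 →₀ ℕ}
    (h : wgt α m1 = wgt α m2) : m1 = m2 := by
  unfold wgt at h
  have h1 : m1 1 = m2 1 := by
    by_contra hb
    apply hα
    refine ⟨((m2 0 : ℚ) - (m1 0 : ℚ)) / ((m1 1 : ℚ) - (m2 1 : ℚ)), ?_⟩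
    have hdenk : ((m1 1 : k) - (m2 1 : k)) ≠ 0 := by
      intro hc
      apply hb
      have : (m1 1 : k) = (m2 1 : k) := sub_eq_zero.mp hc
      exact_mod_cast this
    push_cast
    rw [div_eq_iff hdenk]
    linear_combination -h
  have h0 : m1 0 = m2 0 := by
    have hk : (m1 0 : k) = (m2 0 : k) := by
      rw [h1] at h
      linear_combination h
    exact_mod_cast hk
  ext j
  fin_cases j <;> assumption

/-- embedding of monomials into ℕ ×ₗ ℕ (deg-then-x lex) -/
def emb (m : Fin 2 →₀ ℕ) : ℕ ×ₗ ℕ := toLex (m 0 + m 1, m 0)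

theorem emb_add (a b : Fin 2 →₀ ℕ) : emb (a + b) = emb a + emb b := by
  unfold emb
  simp only [Finsupp.add_apply]
  rw [← toLex_add]
  congr 1
  simp [Prod.ext_iff]
  omega

theorem emb_inj {a b : Fin 2 →₀ ℕ} (h : emb a = emb b) : a = b := by
  unfold emb at h
  have h1 := congrArg (fun x => (ofLex x).1) h
  have h2 := congrArg (fun x => (ofLex x).2) h
  simp at h1 h2
  ext j; fin_cases j
  · exact h2
  · simpa [h2] using h1

/-- Lemma A: the leading monomials of p and q agree. -/
theorem lead_eq (hα : ¬ ∃ r : ℚ, (r : k) = α) {p q : MvPolynomial (Fin 2) k}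
    (h : Eul α p * q = p * Eul α q) {mp mq : Fin 2 →₀ ℕ}
    (hmp : mp ∈ p.support) (hmaxp : ∀ m ∈ p.support, emb m ≤ emb mp)
    (hmq : mq ∈ q.support) (hmaxq : ∀ m ∈ q.support, emb m ≤ emb mq) :
    mp = mq := by
  have key : ∀ x : (Fin 2 →₀ ℕ) × (Fin 2 →₀ ℕ), x ∈ Finset.HasAntidiagonal.antidiagonal (mp + mq) →
      x ≠ (mp, mq) → MvPolynomial.coeff x.1 p * MvPolynomial.coeff x.2 q = 0 := by
    rintro ⟨x1, x2⟩ hx hne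
    rw [Finset.HasAntidiagonal.mem_antidiagonal] at hx
    by_cases h1 : x1 ∈ p.support
    · by_cases h2 : x2 ∈ q.support
      · exfalso
        have e1 : emb x1 ≤ emb mp := hmaxp _ h1
        have e2 : emb x2 ≤ emb mq := hmaxq _ h2
        have esum : emb x1 + emb x2 = emb mp + emb mq := by
          rw [← emb_add, ← emb_add, hx]
        have hx1 : emb x1 = emb mp := by
          by_contra hc
          have : emb x1 + emb x2 < emb mp + emb mq :=
            add_lt_add_of_lt_of_le (lt_of_le_of_ne e1 hc) e2
          exact absurd esum (ne_of_lt this)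
        have hx2 : emb x2 = emb mq := by
          have := esum
          rw [hx1] at this
          exact add_left_cancel this
        exact hne (Prod.ext (emb_inj hx1) (emb_inj hx2))
      · simp [MvPolynomial.notMem_support_iff.mp h2]
    · simp [MvPolynomial.notMem_support_iff.mp h1]
  have hc := congrArg (MvPolynomial.coeff (mp + mq)) h
  rw [MvPolynomial.coeff_mul, MvPolynomial.coeff_mul] at hc
  rw [Finset.sum_eq_single (mp, mq)
      (fun x hx hne => by rw [coeff_Eul]; rw [mul_assoc]; rw [key x hx hne]; ring)
      (fun habs => absurd (Finset.HasAntidiagonal.mem_antidiagonal.mpr rfl) habs),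
    Finset.sum_eq_single (mp, mq)
      (fun x hx hne => by rw [coeff_Eul]
                          rw [show MvPolynomial.coeff x.1 p * (wgt α x.2 * MvPolynomial.coeff x.2 q)
                            = wgt α x.2 * (MvPolynomial.coeff x.1 p * MvPolynomial.coeff x.2 q) by ring,
                            key x hx hne]; ring)
      (fun habs => absurd (Finset.HasAntidiagonal.mem_antidiagonal.mpr rfl) habs)] at hc
  rw [coeff_Eul, coeff_Eul] at hc
  have hp0 := MvPolynomial.mem_support_iff.mp hmp
  have hq0 := MvPolynomial.mem_support_iff.mp hmq
  have hmul : wgt α mp * (MvPolynomial.coeff mp p * MvPolynomial.coeff mq q)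
      = wgt α mq * (MvPolynomial.coeff mp p * MvPolynomial.coeff mq q) := by
    linear_combination hc
  exact wgt_inj hα (mul_right_cancel₀ (mul_ne_zero hp0 hq0) hmul)
end aux2

section aux3
variable {k : Type*} [Field k] [CharZero k] {α : k}

/-- Lemma B: if Eul p * q = p * Eul q with q ≠ 0 then p is a constant multiple of q. -/
theorem prop_const (hα : ¬ ∃ r : ℚ, (r : k) = α) {p q : MvPolynomial (Fin 2) k}
    (hq : q ≠ 0) (h : Eul α p * q = p * Eul α q) :
    ∃ c : k, p = C c * q := by
  by_cases hp : p = 0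
  · exact ⟨0, by simp [hp]⟩
  obtain ⟨mq, hmq, hmaxq⟩ := Finset.exists_max_image q.support emb
    (MvPolynomial.support_nonempty.mpr hq)
  obtain ⟨mp, hmp, hmaxp⟩ := Finset.exists_max_image p.support emb
    (MvPolynomial.support_nonempty.mpr hp)
  have hm : mp = mq := lead_eq hα h hmp hmaxp hmq hmaxq
  subst hm
  have hq0 : MvPolynomial.coeff mp q ≠ 0 := MvPolynomial.mem_support_iff.mp hmq
  set c : k := MvPolynomial.coeff mp p / MvPolynomial.coeff mp q with hc
  refine ⟨c, ?_⟩
  set r : MvPolynomial (Fin 2) k := p - C c * q with hrdef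
  have hr : Eul α r * q = r * Eul α q := by
    have hEr : Eul α r = Eul α p - C c * Eul α q := by
      have : r + C c * q = p := by rw [hrdef]; ring
      have h2 := Eul_add α r (C c * q)
      rw [this, Eul_mul, Eul_C] at h2
      rw [h2]; ring
    rw [hEr, hrdef]
    ring_nf
    ring_nf at h
    linear_combination h
  have hcoeffr : MvPolynomial.coeff mp r = 0 := by
    rw [hrdef]
    simp [MvPolynomial.coeff_sub, hc]
    field_simp
    ring
  by_contra hne
  have hr0 : r ≠ 0 := by
    intro h0
    apply hne
    rw [← sub_eq_zero, ← hrdef, h0]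
  obtain ⟨mr, hmr, hmaxr⟩ := Finset.exists_max_image r.support emb
    (MvPolynomial.support_nonempty.mpr hr0)
  have : mr = mp := lead_eq hα hr hmr hmaxr hmq hmaxq
  rw [this] at hmr
  exact MvPolynomial.mem_support_iff.mp hmr hcoeffr
end aux3

/-- Let `k` be a field of characteristic zero, `α ∈ k` nonzero, and `D_α` the
`k`-derivation of `k(y,z)` with `D_α(y) = y` and `D_α(z) = αz`. If `α` is not a rational number
(not in the prime subfield `ℚ ⊆ k`), then the kernel of `D_α` equals `k`. -/
theorem kernel_D_alpha_irrational (k : Type*) [Field k] [CharZero k] (α : k) (hα0 : α ≠ 0)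
    (hα : ¬ ∃ r : ℚ, (r : k) = α)
    (d : Derivation k (FractionRing (MvPolynomial (Fin 2) k))
      (FractionRing (MvPolynomial (Fin 2) k)))
    (hy : d (algebraMap (MvPolynomial (Fin 2) k) _ (MvPolynomial.X 0)) =
      algebraMap (MvPolynomial (Fin 2) k) _ (MvPolynomial.X 0))
    (hz : d (algebraMap (MvPolynomial (Fin 2) k) _ (MvPolynomial.X 1)) =
      α • algebraMap (MvPolynomial (Fin 2) k) _ (MvPolynomial.X 1)) :
    ∀ f : FractionRing (MvPolynomial (Fin 2) k),
      d f = 0 ↔ f ∈ Set.range (algebraMap k (FractionRing (MvPolynomial (Fin 2) k))) := by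
  set P := MvPolynomial (Fin 2) k
  set K := FractionRing P
  set ι : P →+* K := algebraMap P K with hι
  have hιinj : Function.Injective ι := IsFractionRing.injective P K
  have hCconst : ∀ a : k, ι (C a) = algebraMap k K a := by
    intro a
    rw [IsScalarTower.algebraMap_apply k P K]
    rfl
  have dmap : ∀ p : P, d (ι p) = ι (Eul α p) := by
    intro p
    induction p using MvPolynomial.induction_on with
    | C a =>
      rw [Eul_C, map_zero, hCconst, Derivation.map_algebraMap]
    | add p q hp hq =>
      rw [ι.map_add, d.map_add, hp, hq, Eul_add, ι.map_add]
    | mul_X p i hp =>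
      have hXi : d (ι (X i)) = ι (Eul α (X i)) := by
        fin_cases i
        · show d (ι (X 0)) = ι (Eul α (X 0))
          have : Eul α (X (0 : Fin 2)) = X 0 := by
            simp [Eul]
          rw [this]; exact hy
        · show d (ι (X 1)) = ι (Eul α (X 1))
          have : Eul α (X (1 : Fin 2)) = C α * X 1 := by
            simp [Eul]
          rw [this, ι.map_mul, hCconst, ← Algebra.smul_def]
          exact hz
      rw [ι.map_mul, Derivation.leibniz, hp, hXi, Eul_mul, ι.map_add, ι.map_mul, ι.map_mul,
        smul_eq_mul, smul_eq_mul]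
      ring
  intro f
  constructor
  · intro hdf
    obtain ⟨⟨p, q⟩, hpq⟩ := IsLocalization.surj (nonZeroDivisors P) f
    simp only at hpq
    have hq0 : (q : P) ≠ 0 := nonZeroDivisors.coe_ne_zero q
    have hd := congrArg d hpq
    rw [Derivation.leibniz, hdf, dmap, dmap, smul_eq_mul, smul_eq_mul, mul_zero,
      add_zero] at hd
    -- hd : f * ι (Eul α q) = ι (Eul α p)
    have hkey : (Eul α p) * q = p * (Eul α q) := by
      apply hιinj
      rw [ι.map_mul, ι.map_mul]
      calc ι (Eul α p) * ι q = (f * ι (Eul α q)) * ι q := by rw [hd]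
        _ = (f * ι q) * ι (Eul α q) := by ring
        _ = ι p * ι (Eul α q) := by rw [hpq]
    obtain ⟨c, hcq⟩ := prop_const hα hq0 hkey
    refine ⟨c, ?_⟩
    have hq0K : ι (q : P) ≠ 0 := fun h => hq0 (hιinj (by rw [h, ι.map_zero]))
    have : f * ι q = algebraMap k K c * ι q := by
      rw [hpq, hcq, ι.map_mul, hCconst]
    exact (mul_right_cancel₀ hq0K this).symm
  · rintro ⟨c, rfl⟩
    exact Derivation.map_algebraMap d c
end

section
/- Let k be a field of characteristic zero and α = p/q ∈ ℚ ⊆ k nonzero with p, q ∈ ℤ, q ≠ 0, gcd(p,q) = 1. Then the kernel of the derivation D_α = y∂_y + αz∂_z of k(y,z) equals k(y^p z^{-q}), the subfield generated over k by y^p z^{-q}. -/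
open MvPolynomial AddMonoidAlgebra

namespace KernelDAlphaAux

set_option linter.unusedSectionVars false

variable {k : Type*} [Field k] [CharZero k] (p q : ℤ)

local notation "R2" => MvPolynomial (Fin 2) k
local notation "K2" => FractionRing (MvPolynomial (Fin 2) k)

/-- weight of a monomial -/
def wt (m : Fin 2 →₀ ℕ) : ℤ := q * (m 0 : ℤ) + p * (m 1 : ℤ)

/-- the grading ring hom, sending a polynomial to the family of its
weighted-homogeneous components -/
noncomputable def Phi : R2 →+* AddMonoidAlgebra R2 ℤ :=
  eval₂Hom (AddMonoidAlgebra.singleZeroRingHom.comp (C : k →+* R2))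
    (fun i => if i = 0 then AddMonoidAlgebra.single q (X 0) else AddMonoidAlgebra.single p (X 1))

theorem Phi_C (c : k) : Phi p q (C c) = AddMonoidAlgebra.single 0 (C c) := by
  simp only [Phi, eval₂Hom_C, RingHom.comp_apply]; rfl

theorem Phi_X0 : Phi p q (X 0 : R2) = AddMonoidAlgebra.single q (X 0) := by simp [Phi]

theorem Phi_X1 : Phi p q (X 1 : R2) = AddMonoidAlgebra.single p (X 1) := by simp [Phi]

theorem Phi_monomial (m : Fin 2 →₀ ℕ) (c : k) :
    Phi p q (monomial m c) = AddMonoidAlgebra.single (wt p q m) (monomial m c) := by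
  rw [show (monomial m c : R2) = C c * X 0 ^ m 0 * X 1 ^ m 1 by
    rw [monomial_eq, Finsupp.prod_fintype _ _ (fun i => pow_zero _), Fin.prod_univ_two]; ring]
  rw [map_mul, map_mul, map_pow, map_pow, Phi_C, Phi_X0, Phi_X1,
    single_pow, single_pow, single_mul_single, single_mul_single]
  congr 1
  simp only [wt, zero_add, nsmul_eq_mul]
  ring

/-- the "forget the grading" algebra hom -/
noncomputable def ev : AddMonoidAlgebra R2 ℤ →ₐ[R2] R2 :=
  AddMonoidAlgebra.lift _ _ ℤ 1

theorem ev_single (n : ℤ) (x : R2) : ev (AddMonoidAlgebra.single n x) = x := by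
  rw [ev, AddMonoidAlgebra.lift_single]
  simp

theorem ev_Phi (x : R2) : ev (Phi p q x) = x := by
  have h : ((ev (k := k)).toRingHom.comp (Phi p q) : R2 →+* R2) = RingHom.id _ := by
    apply MvPolynomial.ringHom_ext
    · intro c
      rw [RingHom.comp_apply, RingHom.id_apply, Phi_C]
      exact ev_single _ _
    · intro i
      fin_cases i
      · rw [RingHom.comp_apply, RingHom.id_apply]
        rw [show (X (⟨0, by omega⟩ : Fin 2) : R2) = X 0 from rfl, Phi_X0]
        exact ev_single _ _
      · rw [RingHom.comp_apply, RingHom.id_apply]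
        rw [show (X (⟨1, by omega⟩ : Fin 2) : R2) = X 1 from rfl, Phi_X1]
        exact ev_single _ _
  exact RingHom.congr_fun h x

theorem Phi_ne_zero {x : R2} (hx : x ≠ 0) : Phi p q x ≠ 0 := by
  intro h
  apply hx
  have := ev_Phi p q x
  rw [h, map_zero] at this
  exact this.symm

theorem coeff_Phi (x : R2) (n : ℤ) (m : Fin 2 →₀ ℕ) :
    coeff m ((Phi p q x).coeff n) = if wt p q m = n then coeff m x else 0 := by
  induction x using MvPolynomial.induction_on' with
  | monomial m' c =>
    rw [Phi_monomial, AddMonoidAlgebra.coeff_single_apply]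
    rcases eq_or_ne (wt p q m') n with h | h
    · rw [if_pos h]
      rcases eq_or_ne (wt p q m) n with h2 | h2
      · rw [if_pos h2]
      · rw [if_neg h2, coeff_monomial, if_neg]
        intro hmm
        exact h2 (hmm ▸ h)
    · rw [if_neg h, MvPolynomial.coeff_zero]
      rcases eq_or_ne (wt p q m) n with h2 | h2
      · rw [if_pos h2, coeff_monomial, if_neg]
        intro hmm
        exact h (hmm ▸ h2)
      · rw [if_neg h2]
  | add f g hf hg =>
    rw [map_add, AddMonoidAlgebra.coeff_add, Finsupp.add_apply, MvPolynomial.coeff_add,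
      MvPolynomial.coeff_add, hf, hg]
    split_ifs <;> simp

/-- support of a Phi-component: if `(Phi x) n ≠ 0` then ... ; more usefully,
if the support of `Phi x` is inside `{n1}`, every monomial of `x` has weight `n1`. -/
theorem wt_eq_of_support_subset {x : R2} {n1 : ℤ}
    (h : (Phi p q x).coeff.support ⊆ {n1}) {m : Fin 2 →₀ ℕ} (hm : m ∈ x.support) :
    wt p q m = n1 := by
  have hc : coeff m ((Phi p q x).coeff (wt p q m)) = coeff m x := by
    rw [coeff_Phi, if_pos rfl]
  have hmx : coeff m x ≠ 0 := mem_support_iff.mp hm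
  have : (Phi p q x).coeff (wt p q m) ≠ 0 := by
    intro h0
    rw [h0, MvPolynomial.coeff_zero] at hc
    exact hmx hc.symm
  have := Finsupp.mem_support_iff.mpr this
  have := h this
  simpa using this

/-- the weighted Euler derivation on polynomials (multiplied by q) -/
noncomputable def Ew : Derivation k R2 R2 :=
  mkDerivation k (fun i => if i = 0 then (q : k) • X 0 else (p : k) • X 1)

theorem derivation_pow_eig {A : Type*} [CommRing A] [Algebra k A]
    (D : Derivation k A A) (x : A) (c : k) (h : D x = c • x) (n : ℕ) :
    D (x ^ n) = ((n : k) * c) • x ^ n := by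
  induction n with
  | zero => simp
  | succ n ih =>
    rw [pow_succ, Derivation.leibniz, ih, h, smul_eq_mul, smul_eq_mul,
      mul_smul_comm, mul_smul_comm, ← pow_succ, ← pow_succ', ← add_smul]
    congr 1
    push_cast
    ring

theorem Ew_monomial (m : Fin 2 →₀ ℕ) (c : k) :
    Ew p q (monomial m c) = ((wt p q m : ℤ) : k) • monomial m c := by
  have hX0 : Ew p q (X 0 : R2) = (q : k) • X 0 := by
    simp [Ew, mkDerivation_X]
  have hX1 : Ew p q (X 1 : R2) = (p : k) • X 1 := by
    simp [Ew, mkDerivation_X]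
  have h0 := derivation_pow_eig (Ew p q) (X 0 : R2) (q : k) hX0 (m 0)
  have h1 := derivation_pow_eig (Ew p q) (X 1 : R2) (p : k) hX1 (m 1)
  rw [show (monomial m c : R2) = c • (X 0 ^ m 0 * X 1 ^ m 1) by
    rw [smul_eq_C_mul, monomial_eq, Finsupp.prod_fintype _ _ (fun i => pow_zero _),
      Fin.prod_univ_two]]
  rw [Derivation.map_smul, Derivation.leibniz, h0, h1,
    smul_comm (X 0 ^ m 0 : R2) ((m 1 : k) * (p : k)),
    smul_comm (X 1 ^ m 1 : R2) ((m 0 : k) * (q : k)),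
    smul_eq_mul, smul_eq_mul, mul_comm (X 1 ^ m 1 : R2) (X 0 ^ m 0 : R2),
    ← add_smul, smul_smul, smul_smul]
  congr 1
  simp only [wt]
  push_cast
  ring

theorem Phi_Ew (x : R2) (n : ℤ) :
    (Phi p q (Ew p q x)).coeff n = ((n : ℤ) : k) • ((Phi p q x).coeff n) := by
  induction x using MvPolynomial.induction_on' with
  | monomial m c =>
    rw [Ew_monomial, smul_eq_C_mul, map_mul, Phi_C, Phi_monomial,
      AddMonoidAlgebra.coeff_single_zero_mul, AddMonoidAlgebra.coeff_single_apply]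
    rcases eq_or_ne (wt p q m) n with h | h
    · rw [if_pos h, ← smul_eq_C_mul, h]
    · rw [if_neg h, mul_zero, smul_zero]
  | add f g hf hg =>
    rw [map_add, map_add, map_add, AddMonoidAlgebra.coeff_add, AddMonoidAlgebra.coeff_add,
      Finsupp.add_apply, Finsupp.add_apply, hf, hg, smul_add]

/-- top-coefficient multiplicativity in `AddMonoidAlgebra S ℤ` -/
theorem mul_apply_max {S : Type*} [CommRing S] (x y : AddMonoidAlgebra S ℤ)
    (hx : x.coeff.support.Nonempty) (hy : y.coeff.support.Nonempty) :
    (x * y).coeff (x.coeff.support.max' hx + y.coeff.support.max' hy) =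
      x.coeff (x.coeff.support.max' hx) * y.coeff (y.coeff.support.max' hy) := by
  classical
  simp_rw [AddMonoidAlgebra.coeff_mul, Finsupp.sum]
  rw [Finset.sum_eq_single (x.coeff.support.max' hx)]
  · rw [Finset.sum_eq_single (y.coeff.support.max' hy)]
    · rw [if_pos rfl]
    · intro b hb hne
      refine if_neg fun he => ?_
      have hblt : b < y.coeff.support.max' hy := lt_of_le_of_ne (Finset.le_max' _ _ hb) hne
      omega
    · intro hnot
      exact absurd (y.coeff.support.max'_mem hy) hnot
  · intro a ha hne
    refine Finset.sum_eq_zero fun b hb => if_neg fun he => ?_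
    have halt : a < x.coeff.support.max' hx := lt_of_le_of_ne (Finset.le_max' _ _ ha) hne
    have hble : b ≤ y.coeff.support.max' hy := Finset.le_max' _ _ hb
    omega
  · intro hnot
    exact absurd (x.coeff.support.max'_mem hx) hnot

/-- bottom-coefficient multiplicativity -/
theorem mul_apply_min {S : Type*} [CommRing S] (x y : AddMonoidAlgebra S ℤ)
    (hx : x.coeff.support.Nonempty) (hy : y.coeff.support.Nonempty) :
    (x * y).coeff (x.coeff.support.min' hx + y.coeff.support.min' hy) =
      x.coeff (x.coeff.support.min' hx) * y.coeff (y.coeff.support.min' hy) := by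
  classical
  simp_rw [AddMonoidAlgebra.coeff_mul, Finsupp.sum]
  rw [Finset.sum_eq_single (x.coeff.support.min' hx)]
  · rw [Finset.sum_eq_single (y.coeff.support.min' hy)]
    · rw [if_pos rfl]
    · intro b hb hne
      refine if_neg fun he => ?_
      have hblt : y.coeff.support.min' hy < b := lt_of_le_of_ne (Finset.min'_le _ _ hb) (Ne.symm hne)
      omega
    · intro hnot
      exact absurd (y.coeff.support.min'_mem hy) hnot
  · intro a ha hne
    refine Finset.sum_eq_zero fun b hb => if_neg fun he => ?_
    have halt : x.coeff.support.min' hx < a := lt_of_le_of_ne (Finset.min'_le _ _ ha) (Ne.symm hne)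
    have hble : y.coeff.support.min' hy ≤ b := Finset.min'_le _ _ hb
    omega
  · intro hnot
    exact absurd (x.coeff.support.min'_mem hx) hnot

section Derivations

variable {K' : Type*} [Field K'] [Algebra k K']

theorem derivation_inv (d : Derivation k K' K') (x : K') (hx : x ≠ 0) :
    d x⁻¹ = -((x⁻¹ * x⁻¹) • d x) := by
  have h0 : d (x * x⁻¹) = 0 := by rw [mul_inv_cancel₀ hx, Derivation.map_one_eq_zero]
  rw [Derivation.leibniz] at h0
  have h1 : x * d x⁻¹ = -(x⁻¹ * d x) := by
    have := eq_neg_of_add_eq_zero_left h0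
    simpa [smul_eq_mul] using this
  apply mul_left_cancel₀ hx
  rw [h1, smul_eq_mul]
  field_simp

theorem derivation_zpow_eig (d : Derivation k K' K') (x : K') (hx : x ≠ 0) (c : k)
    (h : d x = c • x) : ∀ n : ℤ, d (x ^ n) = ((n : k) * c) • x ^ n := by
  intro n
  cases n with
  | ofNat n =>
    rw [Int.ofNat_eq_coe, zpow_natCast, derivation_pow_eig d x c h n]
    norm_num
  | negSucc n =>
    have hy : (x ^ (n + 1) : K') ≠ 0 := pow_ne_zero _ hx
    have hm : (x ^ (n + 1))⁻¹ * (x ^ (n + 1))⁻¹ * x ^ (n + 1) = (x ^ (n + 1))⁻¹ := by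
      field_simp
    rw [zpow_negSucc, derivation_inv d _ hy, derivation_pow_eig d x c h (n + 1),
      smul_comm, smul_eq_mul, hm, ← neg_smul]
    congr 1
    push_cast [Int.cast_negSucc]
    ring

end Derivations

theorem bridge (α : k) (hqα : (q : k) * α = (p : k))
    (d : Derivation k K2 K2)
    (hy : d (algebraMap R2 K2 (X 0)) = algebraMap R2 K2 (X 0))
    (hz : d (algebraMap R2 K2 (X 1)) = α • algebraMap R2 K2 (X 1)) (x : R2) :
    algebraMap R2 K2 (Ew p q x) = (q : k) • d (algebraMap R2 K2 x) := by
  have hsm : ∀ (c : k) (z : R2), algebraMap R2 K2 (c • z) = c • algebraMap R2 K2 z := by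
    intro c z
    rw [Algebra.smul_def, map_mul, ← IsScalarTower.algebraMap_apply, ← Algebra.smul_def]
  have hD : (Algebra.linearMap R2 K2).compDer (Ew p q) =
      (q : k) • (Derivation.compAlgebraMap R2 d) := by
    apply MvPolynomial.derivation_ext
    intro i
    have h0 : ((Algebra.linearMap R2 K2).compDer (Ew p q)) (X i)
        = algebraMap R2 K2 (Ew p q (X i)) := rfl
    have h1 : (((q : k)) • (Derivation.compAlgebraMap R2 d)) (X i)
        = (q : k) • d (algebraMap R2 K2 (X i)) := rfl
    rw [h0, h1]
    fin_cases i
    · rw [show (X (⟨0, by omega⟩ : Fin 2) : R2) = X 0 from rfl]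
      rw [show Ew p q (X 0 : R2) = (q : k) • X 0 by simp [Ew, mkDerivation_X], hsm, hy]
    · rw [show (X (⟨1, by omega⟩ : Fin 2) : R2) = X 1 from rfl]
      rw [show Ew p q (X 1 : R2) = (p : k) • X 1 by simp [Ew, mkDerivation_X], hsm, hz,
        smul_smul, hqα]
  exact DFunLike.congr_fun hD x

/-- the generating set -/
noncomputable def Sgen : Set K2 :=
  Set.range (algebraMap k K2) ∪
    {(algebraMap R2 K2 (X 0)) ^ p * (algebraMap R2 K2 (X 1)) ^ (-q)}

theorem monomial_div_mem (hp : p ≠ 0) (hpq : Int.gcd p q = 1) (m m0 : Fin 2 →₀ ℕ)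
    (h : wt p q m = wt p q m0) (c : k) :
    algebraMap R2 K2 (monomial m c) / algebraMap R2 K2 (monomial m0 1) ∈
      Subfield.closure (Sgen p q) := by
  set ι := algebraMap R2 K2 with hι
  have hinj : Function.Injective ι := IsFractionRing.injective R2 K2
  set Y := ι (X 0) with hYdef
  set Z := ι (X 1) with hZdef
  have hY0 : Y ≠ 0 := fun hh => X_ne_zero (0 : Fin 2) (hinj (by rwa [map_zero]))
  have hZ0 : Z ≠ 0 := fun hh => X_ne_zero (1 : Fin 2) (hinj (by rwa [map_zero]))
  -- the exponent arithmetic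
  have hΔ : q * ((m 0 : ℤ) - (m0 0 : ℤ)) + p * ((m 1 : ℤ) - (m0 1 : ℤ)) = 0 := by
    have h' : q * ((m 0 : ℕ) : ℤ) + p * ((m 1 : ℕ) : ℤ)
        = q * ((m0 0 : ℕ) : ℤ) + p * ((m0 1 : ℕ) : ℤ) := h
    linear_combination h'
  have hco : IsCoprime (p : ℤ) q := Int.isCoprime_iff_gcd_eq_one.mpr hpq
  have hdvd : p ∣ ((m 0 : ℤ) - (m0 0 : ℤ)) := by
    apply hco.dvd_of_dvd_mul_left
    exact ⟨-((m 1 : ℤ) - (m0 1 : ℤ)), by linear_combination hΔ⟩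
  obtain ⟨t, ht⟩ := hdvd
  have htj : (m 1 : ℤ) - (m0 1 : ℤ) = -(q * t) := by
    have h2 : p * (q * t + ((m 1 : ℤ) - (m0 1 : ℤ))) = 0 := by linear_combination hΔ - q * ht
    rcases mul_eq_zero.mp h2 with h3 | h3
    · exact absurd h3 (by exact_mod_cast hp)
    · linarith
  -- the monomial identity
  have hmono : ∀ (m' : Fin 2 →₀ ℕ) (c' : k), (monomial m' c' : R2) = C c' * X 0 ^ m' 0 * X 1 ^ m' 1 := by
    intro m' c'
    rw [monomial_eq, Finsupp.prod_fintype _ _ (fun i => pow_zero _), Fin.prod_univ_two]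
    ring
  have he1 : p * t + (m0 0 : ℤ) = (m 0 : ℤ) := by linarith
  have he2 : -q * t + (m0 1 : ℤ) = (m 1 : ℤ) := by linarith
  have key : (Y ^ p * Z ^ (-q)) ^ t * ι (monomial m0 1) = ι (monomial m 1) := by
    rw [hmono m0 1, hmono m 1]
    simp only [C_1, one_mul, map_mul, map_pow]
    rw [← zpow_natCast Y (m0 0), ← zpow_natCast Z (m0 1), ← zpow_natCast Y (m 0),
      ← zpow_natCast Z (m 1), mul_zpow, ← zpow_mul, ← zpow_mul, mul_mul_mul_comm,
      ← zpow_add₀ hY0, ← zpow_add₀ hZ0, neg_mul q t, ← neg_mul, he1, he2]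
  have hM0 : ι (monomial m0 1) ≠ 0 := by
    intro hh
    have h0 : (monomial m0 (1 : k) : R2) = 0 := hinj (by rwa [map_zero])
    exact one_ne_zero ((monomial_eq_zero).mp h0)
  have hres : ι (monomial m c) / ι (monomial m0 1)
      = algebraMap k K2 c * (Y ^ p * Z ^ (-q)) ^ t := by
    rw [div_eq_iff hM0, mul_assoc, key]
    rw [show (monomial m c : R2) = C c * monomial m 1 by rw [C_mul_monomial, mul_one]]
    rw [map_mul, IsScalarTower.algebraMap_apply k R2 (FractionRing R2) c, algebraMap_eq]
  rw [hres]
  apply Subfield.mul_mem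
  · exact Subfield.subset_closure (Or.inl ⟨c, rfl⟩)
  · exact (Subfield.closure (Sgen p q)).zpow_mem (Subfield.subset_closure (Or.inr rfl)) t

theorem homog_div_mem (hp : p ≠ 0) (hpq : Int.gcd p q = 1) (x : R2) (m0 : Fin 2 →₀ ℕ)
    (hxw : ∀ m ∈ x.support, wt p q m = wt p q m0) :
    algebraMap R2 K2 x / algebraMap R2 K2 (monomial m0 1) ∈ Subfield.closure (Sgen p q) := by
  have hx : algebraMap R2 K2 x
      = ∑ m ∈ x.support, algebraMap R2 K2 (monomial m (coeff m x)) := by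
    rw [← map_sum, support_sum_monomial_coeff]
  rw [hx, Finset.sum_div]
  apply Subfield.sum_mem
  intro m hm
  exact monomial_div_mem p q hp hpq m m0 (hxw m hm) (coeff m x)

set_option maxHeartbeats 1000000 in
theorem main (α : k) (hα0 : α ≠ 0) (hq : q ≠ 0) (hpq : Int.gcd p q = 1)
    (hα : α = (p : k) / (q : k)) (d : Derivation k K2 K2)
    (hy : d (algebraMap R2 K2 (X 0)) = algebraMap R2 K2 (X 0))
    (hz : d (algebraMap R2 K2 (X 1)) = α • algebraMap R2 K2 (X 1)) (f : K2) :
    d f = 0 ↔ f ∈ Subfield.closure (Sgen p q) := by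
  have hqk : (q : k) ≠ 0 := Int.cast_ne_zero.mpr hq
  have hqα : (q : k) * α = (p : k) := by rw [hα]; field_simp
  have hpk : (p : k) ≠ 0 := by rw [← hqα]; exact mul_ne_zero hqk hα0
  have hp : p ≠ 0 := fun h => hpk (by rw [h]; simp)
  have hinj : Function.Injective (algebraMap R2 K2) := IsFractionRing.injective R2 K2
  have hY0 : algebraMap R2 K2 (X 0) ≠ 0 :=
    fun hh => X_ne_zero (0 : Fin 2) (hinj (by rwa [map_zero]))
  have hZ0 : algebraMap R2 K2 (X 1) ≠ 0 :=
    fun hh => X_ne_zero (1 : Fin 2) (hinj (by rwa [map_zero]))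
  constructor
  · -- hard direction: kernel elements lie in the closure
    intro hdf
    set ι := algebraMap R2 K2 with hι
    set a := IsFractionRing.num R2 f with ha
    set b := (IsFractionRing.den R2 f : R2) with hb
    have hbnz : b ≠ 0 := nonZeroDivisors.coe_ne_zero _
    have hfab : ι a / ι b = f := IsFractionRing.mk'_num_den' R2 f
    by_cases ha0 : a = 0
    · have hf0 : f = 0 := by rw [← hfab, ha0, map_zero, zero_div]
      rw [hf0]
      exact Subfield.zero_mem _
    have hbK : ι b ≠ 0 := fun h => hbnz (hinj (by rwa [map_zero]))
    have hfb : f * ι b = ι a := by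
      rw [← hfab]
      field_simp
    have hda : d (ι a) = f * d (ι b) := by
      conv_lhs => rw [← hfb]
      rw [Derivation.leibniz, hdf]
      simp [smul_eq_mul]
    have hrel : Ew p q a * b = a * Ew p q b := by
      apply hinj
      rw [map_mul, map_mul, bridge p q α hqα d hy hz, bridge p q α hqα d hy hz, hda]
      rw [smul_mul_assoc, mul_smul_comm, ← hfb]
      congr 1
      ring
    have hba : IsRelPrime b a := (IsFractionRing.num_den_reduced R2 f).symm
    have hdvd : b ∣ Ew p q b := by
      apply hba.dvd_of_dvd_mul_left
      exact ⟨Ew p q a, by rw [← hrel]; ring⟩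
    obtain ⟨c, hc⟩ := hdvd
    set B := Phi p q b with hB
    have hBne : B ≠ 0 := Phi_ne_zero p q hbnz
    have hBsupp : B.coeff.support.Nonempty := Finsupp.support_nonempty_iff.mpr (mt AddMonoidAlgebra.coeff_eq_zero.mp hBne)
    set Cc := Phi p q c with hCc
    have heig : ∀ n : ℤ, (Cc * B).coeff n = ((n : ℤ) : k) • B.coeff n := by
      intro n
      have h1 := Phi_Ew p q b n
      rw [hc, map_mul, mul_comm (Phi p q b) (Phi p q c)] at h1
      exact h1
    have hCsupp : Cc.coeff.support ⊆ {0} := by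
      intro n0 hn0
      have hCne : Cc.coeff.support.Nonempty := ⟨n0, hn0⟩
      -- max argument
      have hmax : Cc.coeff.support.max' hCne ≤ 0 := by
        by_contra hpos
        push_neg at hpos
        have h1 := mul_apply_max Cc B hCne hBsupp
        have h2 : Cc.coeff (Cc.coeff.support.max' hCne) * B.coeff (B.coeff.support.max' hBsupp) ≠ 0 :=
          mul_ne_zero (Finsupp.mem_support_iff.mp (Cc.coeff.support.max'_mem hCne))
            (Finsupp.mem_support_iff.mp (B.coeff.support.max'_mem hBsupp))
        rw [heig] at h1
        have h4 : B.coeff (Cc.coeff.support.max' hCne + B.coeff.support.max' hBsupp) ≠ 0 := by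
          intro h5
          rw [h5, smul_zero] at h1
          exact h2 h1.symm
        have h6 := Finset.le_max' _ _ (Finsupp.mem_support_iff.mpr h4)
        omega
      have hmin : 0 ≤ Cc.coeff.support.min' hCne := by
        by_contra hneg
        push_neg at hneg
        have h1 := mul_apply_min Cc B hCne hBsupp
        have h2 : Cc.coeff (Cc.coeff.support.min' hCne) * B.coeff (B.coeff.support.min' hBsupp) ≠ 0 :=
          mul_ne_zero (Finsupp.mem_support_iff.mp (Cc.coeff.support.min'_mem hCne))
            (Finsupp.mem_support_iff.mp (B.coeff.support.min'_mem hBsupp))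
        rw [heig] at h1
        have h4 : B.coeff (Cc.coeff.support.min' hCne + B.coeff.support.min' hBsupp) ≠ 0 := by
          intro h5
          rw [h5, smul_zero] at h1
          exact h2 h1.symm
        have h6 := Finset.min'_le _ _ (Finsupp.mem_support_iff.mpr h4)
        omega
      have hle : n0 ≤ Cc.coeff.support.max' hCne := Finset.le_max' _ _ hn0
      have hge : Cc.coeff.support.min' hCne ≤ n0 := Finset.min'_le _ _ hn0
      have : n0 = 0 := by omega
      simp [this]
    have hCc_eq : Cc = AddMonoidAlgebra.single 0 c := by
      have h : Cc = AddMonoidAlgebra.single 0 (Cc.coeff 0) :=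
          AddMonoidAlgebra.coeff_injective (Finsupp.support_subset_singleton.mp hCsupp)
      have hcev : Cc.coeff 0 = c := by
        have h2 := ev_Phi p q c
        rw [← hCc] at h2
        conv_lhs at h2 => rw [h]
        rw [ev_single] at h2
        exact h2
      rw [h, hcev]
    have heig2 : ∀ n : ℤ, ((n : ℤ) : k) • B.coeff n = c * B.coeff n := by
      intro n
      rw [← heig n, hCc_eq, AddMonoidAlgebra.coeff_single_zero_mul]
    obtain ⟨n1, hn1⟩ := hBsupp
    have hBn1 : B.coeff n1 ≠ 0 := Finsupp.mem_support_iff.mp hn1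
    have hceq : c = C ((n1 : ℤ) : k) := by
      have h2 := heig2 n1
      rw [smul_eq_C_mul] at h2
      exact (mul_right_cancel₀ hBn1 h2).symm
    have hsuppB : B.coeff.support ⊆ {n1} := by
      intro n hn
      have h2 := heig2 n
      rw [hceq, smul_eq_C_mul] at h2
      have h3 : (C ((n : ℤ) : k) - C ((n1 : ℤ) : k)) * B.coeff n = 0 := by
        rw [sub_mul, h2, sub_self]
      have h4 := (mul_eq_zero.mp h3).resolve_right (Finsupp.mem_support_iff.mp hn)
      rw [← map_sub, C_eq_zero, sub_eq_zero] at h4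
      have : n = n1 := Int.cast_injective h4
      simp [this]
    have hEa : Ew p q a = c * a := by
      have h2 : Ew p q a * b = c * a * b := by
        rw [hrel, hc]
        ring
      exact mul_right_cancel₀ hbnz h2
    have hsuppA : (Phi p q a).coeff.support ⊆ {n1} := by
      intro n hn
      have h1 := Phi_Ew p q a n
      rw [hEa, map_mul, hceq, Phi_C, AddMonoidAlgebra.coeff_single_zero_mul] at h1
      have h3 : (C ((n : ℤ) : k) - C ((n1 : ℤ) : k)) * (Phi p q a).coeff n = 0 := by
        rw [sub_mul, ← smul_eq_C_mul, h1, smul_eq_C_mul, sub_self]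
      have h4 := (mul_eq_zero.mp h3).resolve_right (Finsupp.mem_support_iff.mp hn)
      rw [← map_sub, C_eq_zero, sub_eq_zero] at h4
      have : n = n1 := Int.cast_injective h4
      simp [this]
    -- conclude
    obtain ⟨m0, hm0⟩ := support_nonempty.mpr hbnz
    have hwb : ∀ m ∈ b.support, wt p q m = wt p q m0 := by
      intro m hm
      rw [wt_eq_of_support_subset p q hsuppB hm, wt_eq_of_support_subset p q hsuppB hm0]
    have hwa : ∀ m ∈ a.support, wt p q m = wt p q m0 := by
      intro m hm
      rw [wt_eq_of_support_subset p q hsuppA hm, wt_eq_of_support_subset p q hsuppB hm0]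
    have hM0 : ι (monomial m0 1) ≠ 0 := by
      intro hh
      have h0 : (monomial m0 (1 : k) : R2) = 0 := hinj (by rwa [map_zero])
      exact one_ne_zero ((monomial_eq_zero).mp h0)
    have hfeq : ι a / ι (monomial m0 1) / (ι b / ι (monomial m0 1)) = f := by
      rw [← hfab]
      field_simp
    rw [← hfeq]
    exact Subfield.div_mem _ (homog_div_mem p q hp hpq a m0 hwa)
      (homog_div_mem p q hp hpq b m0 hwb)
  · -- easy direction: the closure is contained in the kernel
    intro hf
    let Sker : Subfield K2 :=
      { carrier := {x : K2 | d x = 0}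
        mul_mem' := by
          intro x y hx hy2
          show d (x * y) = 0
          rw [Derivation.leibniz, hx, hy2]
          simp
        one_mem' := by
          show d 1 = 0
          exact Derivation.map_one_eq_zero d
        add_mem' := by
          intro x y hx hy2
          show d (x + y) = 0
          rw [map_add, hx, hy2, add_zero]
        zero_mem' := by
          show d 0 = 0
          exact map_zero d
        neg_mem' := by
          intro x hx
          show d (-x) = 0
          rw [map_neg, hx, neg_zero]
        inv_mem' := by
          intro x hx
          show d x⁻¹ = 0
          rcases eq_or_ne x 0 with h0 | h0
          · rw [h0, inv_zero]
            exact map_zero d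
          · rw [derivation_inv d x h0, hx, smul_zero, neg_zero] }
    have hle : Subfield.closure (Sgen p q) ≤ Sker := by
      rw [Subfield.closure_le]
      rintro x (⟨cx, rfl⟩ | hx)
      · exact Derivation.map_algebraMap d cx
      · rw [Set.mem_singleton_iff] at hx
        subst hx
        show d _ = 0
        have hdy : d (algebraMap R2 K2 (X 0)) = (1 : k) • algebraMap R2 K2 (X 0) := by
          rw [one_smul]
          exact hy
        have h1 := derivation_zpow_eig d _ hY0 (1 : k) hdy p
        have h2 := derivation_zpow_eig d _ hZ0 α hz (-q)
        rw [Derivation.leibniz, h1, h2, smul_comm (algebraMap R2 K2 (X 0) ^ p),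
          smul_comm (algebraMap R2 K2 (X 1) ^ (-q)), smul_eq_mul, smul_eq_mul,
          mul_comm (algebraMap R2 K2 (X 1) ^ (-q)) (algebraMap R2 K2 (X 0) ^ p), ← add_smul]
        have hz0 : ((-q : ℤ) : k) * α + (p : k) * 1 = 0 := by
          push_cast
          linear_combination -hqα
        rw [hz0, zero_smul]
    exact hle hf

end KernelDAlphaAux

open KernelDAlphaAux

/-- Let `k` be a field of characteristic zero and `α = p/q ∈ ℚ ⊆ k` nonzero,
with `p, q ∈ ℤ`, `q ≠ 0`, `gcd(p,q) = 1`. Then the kernel of the `k`-derivation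
`D_α = y∂_y + αz∂_z` of `k(y,z)` equals `k(y^p z^{-q})`, the subfield generated over `k` by
`y^p z^{-q}`. -/
theorem kernel_D_alpha_rational (k : Type*) [Field k] [CharZero k] (α : k) (hα0 : α ≠ 0)
    (p q : ℤ) (hq : q ≠ 0) (hpq : Int.gcd p q = 1) (hα : α = (p : k) / (q : k))
    (d : Derivation k (FractionRing (MvPolynomial (Fin 2) k))
      (FractionRing (MvPolynomial (Fin 2) k)))
    (hy : d (algebraMap (MvPolynomial (Fin 2) k) _ (MvPolynomial.X 0)) =
      algebraMap (MvPolynomial (Fin 2) k) _ (MvPolynomial.X 0))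
    (hz : d (algebraMap (MvPolynomial (Fin 2) k) _ (MvPolynomial.X 1)) =
      α • algebraMap (MvPolynomial (Fin 2) k) _ (MvPolynomial.X 1)) :
    ∀ f : FractionRing (MvPolynomial (Fin 2) k),
      d f = 0 ↔ f ∈ Subfield.closure
        (Set.range (algebraMap k (FractionRing (MvPolynomial (Fin 2) k))) ∪
          {(algebraMap (MvPolynomial (Fin 2) k) (FractionRing (MvPolynomial (Fin 2) k))
              (MvPolynomial.X 0)) ^ p *
            (algebraMap (MvPolynomial (Fin 2) k) (FractionRing (MvPolynomial (Fin 2) k))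
              (MvPolynomial.X 1)) ^ (-q)}) :=
  fun f => KernelDAlphaAux.main p q α hα0 hq hpq hα d hy hz f
end

section
/- Let k be a field of characteristic ℓ > 0 and α ∈ k with α ∉ 𝔽_ℓ (the prime subfield). Then the kernel of the derivation D_α = y∂_y + αz∂_z of k(y,z) equals k(y^ℓ, z^ℓ). -/
/-- Kernel of a derivation on a field, as a subfield. -/
def derKernel {k F : Type*} [CommRing k] [Field F] [Algebra k F]
    (d : Derivation k F F) : Subfield F where
  carrier := {f | d f = 0}
  mul_mem' {a b} ha hb := by
    simp only [Set.mem_setOf_eq] at *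
    rw [Derivation.leibniz, ha, hb, smul_zero, smul_zero, add_zero]
  one_mem' := d.map_one_eq_zero
  add_mem' {a b} ha hb := by
    simp only [Set.mem_setOf_eq] at *
    rw [map_add, ha, hb, add_zero]
  zero_mem' := map_zero d
  neg_mem' {a} ha := by
    simp only [Set.mem_setOf_eq] at *
    rw [map_neg, ha, neg_zero]
  inv_mem' a ha := by
    simp only [Set.mem_setOf_eq] at *
    rcases eq_or_ne a 0 with rfl | h
    · simp
    · have h1 : d (a * a⁻¹) = 0 := by rw [mul_inv_cancel₀ h, d.map_one_eq_zero]
      rw [Derivation.leibniz, ha, smul_zero, add_zero, smul_eq_mul] at h1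
      exact (mul_eq_zero.mp h1).resolve_left h

theorem derKernel_mem {k F : Type*} [CommRing k] [Field F] [Algebra k F]
    (d : Derivation k F F) (f : F) : f ∈ derKernel d ↔ d f = 0 := Iff.rfl

/-- eigenvalue of a power -/
theorem der_pow_eig {k F : Type*} [CommRing k] [Field F] [Algebra k F]
    (d : Derivation k F F) {x : F} {μ : k} (hx : d x = μ • x) (n : ℕ) :
    d (x ^ n) = ((n : k) * μ) • x ^ n := by
  induction n with
  | zero => simp [d.map_one_eq_zero]
  | succ n ih =>
    rw [pow_succ, Derivation.leibniz, ih, hx, smul_comm, smul_comm (x : F) ((n : k) * μ),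
      smul_eq_mul, smul_eq_mul, ← pow_succ, ← pow_succ']
    rw [← add_smul]
    push_cast
    ring_nf

/-- linear independence of eigenvectors, in summed form -/
theorem eigen_sum_zero {k F : Type*} [Field k] [Field F] [Algebra k F]
    (d : Derivation k F F) {G : Type*} [DecidableEq G] (s : Finset G) (lam : G → k) (w : G → F)
    (hw : ∀ g ∈ s, d (w g) = lam g • w g)
    (hdist : ∀ g ∈ s, ∀ g' ∈ s, g ≠ g' → lam g ≠ lam g')
    (hs : ∑ g ∈ s, w g = 0) : ∀ g ∈ s, w g = 0 := by
  induction s using Finset.induction_on generalizing w with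
  | empty => intro g hg; simp at hg
  | insert a s ha ih =>
    have key : ∀ g ∈ s, (lam g - lam a) • w g = 0 := by
      apply ih
      · intro g hg
        rw [smul_comm, d.map_smul, hw g (Finset.mem_insert_of_mem hg)]
      · intro g hg g' hg' hne
        exact hdist g (Finset.mem_insert_of_mem hg) g' (Finset.mem_insert_of_mem hg') hne
      · have h1 : ∑ g ∈ insert a s, lam g • w g = 0 := by
          have := congrArg d hs
          rw [map_sum, map_zero] at this
          rw [← this]
          exact Finset.sum_congr rfl fun g hg => (hw g hg).symm
        have h2 : ∑ g ∈ insert a s, lam a • w g = 0 := by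
          rw [← Finset.smul_sum, hs, smul_zero]
        have h3 : ∑ g ∈ insert a s, (lam g - lam a) • w g = 0 := by
          calc ∑ g ∈ insert a s, (lam g - lam a) • w g
              = ∑ g ∈ insert a s, (lam g • w g - lam a • w g) :=
                Finset.sum_congr rfl fun g _ => sub_smul _ _ _
            _ = 0 := by rw [Finset.sum_sub_distrib, h1, h2, sub_zero]
        rw [Finset.sum_insert ha, sub_self, zero_smul, zero_add] at h3
        exact h3
    have hws : ∀ g ∈ s, w g = 0 := by
      intro g hg
      have hne : lam g - lam a ≠ 0 := by
        refine sub_ne_zero.mpr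
          (hdist g (Finset.mem_insert_of_mem hg) a (Finset.mem_insert_self a s) ?_)
        rintro rfl; exact ha hg
      have h := congrArg (fun x => (lam g - lam a)⁻¹ • x) (key g hg)
      simpa [inv_smul_smul₀ hne] using h
    intro g hg
    rcases Finset.mem_insert.mp hg with rfl | hg'
    · rw [Finset.sum_insert ha] at hs
      rw [Finset.sum_eq_zero hws, add_zero] at hs
      exact hs
    · exact hws g hg'


/-- the basic monomials -/
noncomputable def mono {F : Type*} [Field F] (ℓ : ℕ) (Y Z : F) (g : Fin ℓ × Fin ℓ) : F :=
  Y ^ (g.1 : ℕ) * Z ^ (g.2 : ℕ)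

theorem mono_zero_eq_one {F : Type*} [Field F] {ℓ : ℕ} [NeZero ℓ] (Y Z : F) :
    mono ℓ Y Z 0 = 1 := by simp [mono]

theorem mono_mul_Y {F : Type*} [Field F] {ℓ : ℕ} [NeZero ℓ] {Y Z : F} {L : Subfield F}
    (hYl : Y ^ ℓ ∈ L) {x : F} (hx : x ∈ Submodule.span L (Set.range (mono ℓ Y Z))) :
    x * Y ∈ Submodule.span L (Set.range (mono ℓ Y Z)) := by
  induction hx using Submodule.span_induction with
  | mem x hx =>
    obtain ⟨g, rfl⟩ := hx
    rcases lt_or_eq_of_le (Nat.succ_le_of_lt g.1.isLt) with hlt | heq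
    · apply Submodule.subset_span
      refine ⟨(⟨(g.1 : ℕ) + 1, hlt⟩, g.2), ?_⟩
      simp only [mono, pow_succ]
      ring
    · have hkey : mono ℓ Y Z g * Y = (⟨Y ^ ℓ, hYl⟩ : L) • mono ℓ Y Z (0, g.2) := by
        rw [Subfield.smul_def]
        simp only [mono, Fin.val_zero, pow_zero, one_mul]
        rw [mul_right_comm, ← pow_succ]
        congr 2 <;> omega
      rw [hkey]
      exact Submodule.smul_mem _ _ (Submodule.subset_span ⟨(0, g.2), rfl⟩)
  | zero => simpa using Submodule.zero_mem _
  | add a b _ _ ha hb => rw [add_mul]; exact Submodule.add_mem _ ha hb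
  | smul c a _ ha => rw [smul_mul_assoc]; exact Submodule.smul_mem _ c ha

theorem mono_mul_Z {F : Type*} [Field F] {ℓ : ℕ} [NeZero ℓ] {Y Z : F} {L : Subfield F}
    (hZl : Z ^ ℓ ∈ L) {x : F} (hx : x ∈ Submodule.span L (Set.range (mono ℓ Y Z))) :
    x * Z ∈ Submodule.span L (Set.range (mono ℓ Y Z)) := by
  induction hx using Submodule.span_induction with
  | mem x hx =>
    obtain ⟨g, rfl⟩ := hx
    rcases lt_or_eq_of_le (Nat.succ_le_of_lt g.2.isLt) with hlt | heq
    · apply Submodule.subset_span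
      refine ⟨(g.1, ⟨(g.2 : ℕ) + 1, hlt⟩), ?_⟩
      simp only [mono, pow_succ]
      ring
    · have hkey : mono ℓ Y Z g * Z = (⟨Z ^ ℓ, hZl⟩ : L) • mono ℓ Y Z (g.1, 0) := by
        rw [Subfield.smul_def]
        simp only [mono, Fin.val_zero, pow_zero, mul_one]
        rw [mul_assoc, ← pow_succ, mul_comm (Y ^ (g.1 : ℕ))]
        congr 2 <;> omega
      rw [hkey]
      exact Submodule.smul_mem _ _ (Submodule.subset_span ⟨(g.1, 0), rfl⟩)
  | zero => simpa using Submodule.zero_mem _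
  | add a b _ _ ha hb => rw [add_mul]; exact Submodule.add_mem _ ha hb
  | smul c a _ ha => rw [smul_mul_assoc]; exact Submodule.smul_mem _ c ha

/-- eigenvalue equation for the monomials -/
theorem der_mono {k F : Type*} [Field k] [Field F] [Algebra k F] (d : Derivation k F F)
    {ℓ : ℕ} {Y Z : F} {α : k} (hy : d Y = Y) (hz : d Z = α • Z) (g : Fin ℓ × Fin ℓ) :
    d (mono ℓ Y Z g) = ((((g.1 : ℕ) : k) + ((g.2 : ℕ) : k) * α)) • mono ℓ Y Z g := by
  have hdY : d Y = (1 : k) • Y := by rw [hy, one_smul]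
  rw [mono, Derivation.leibniz, der_pow_eig d hdY, der_pow_eig d hz,
    smul_comm (Y ^ (g.1 : ℕ)), smul_comm (Z ^ (g.2 : ℕ)), smul_eq_mul, smul_eq_mul,
    mul_comm (Z ^ (g.2 : ℕ)) (Y ^ (g.1 : ℕ)), ← add_smul]
  congr 1
  ring

/-- the eigenvalues are pairwise distinct when `α` is not in the prime field -/
theorem lam_inj {k : Type*} [Field k] {ℓ : ℕ} [Fact ℓ.Prime] [CharP k ℓ] {α : k}
    (hα : ¬ ∃ n : ℤ, (n : k) = α) (g g' : Fin ℓ × Fin ℓ)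
    (h : ((g.1 : ℕ) : k) + ((g.2 : ℕ) : k) * α = ((g'.1 : ℕ) : k) + ((g'.2 : ℕ) : k) * α) :
    g = g' := by
  haveI : NeZero ℓ := ⟨(Fact.out : ℓ.Prime).ne_zero⟩
  obtain ⟨i, j⟩ := g
  obtain ⟨i', j'⟩ := g'
  simp only at h
  set χ : ZMod ℓ →+* k := ZMod.castHom (dvd_refl ℓ) k with hχdef
  have hχnat : ∀ n : ℕ, χ (n : ZMod ℓ) = (n : k) := fun n => map_natCast χ n
  have hcast : ∀ w : ZMod ℓ, χ w = (((w.val : ℕ) : ℤ) : k) := by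
    intro w
    rw [Int.cast_natCast, ← map_natCast χ, ZMod.natCast_val, ZMod.cast_id]
  by_cases hj : ((j : ℕ) : ZMod ℓ) = ((j' : ℕ) : ZMod ℓ)
  · have hjj : j = j' := by
      have h2 := congrArg ZMod.val hj
      rw [ZMod.val_cast_of_lt j.isLt, ZMod.val_cast_of_lt j'.isLt] at h2
      exact Fin.ext h2
    subst hjj
    have hi : ((i : ℕ) : k) = ((i' : ℕ) : k) := by
      exact add_right_cancel h
    have h3 : ((i : ℕ) : ZMod ℓ) = ((i' : ℕ) : ZMod ℓ) := by
      apply χ.injective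
      rw [hχnat, hχnat, hi]
    have hii : i = i' := by
      have h2 := congrArg ZMod.val h3
      rw [ZMod.val_cast_of_lt i.isLt, ZMod.val_cast_of_lt i'.isLt] at h2
      exact Fin.ext h2
    rw [hii]
  · exfalso
    set u : ZMod ℓ := ((j : ℕ) : ZMod ℓ) - ((j' : ℕ) : ZMod ℓ) with hudef
    set w : ZMod ℓ := ((i' : ℕ) : ZMod ℓ) - ((i : ℕ) : ZMod ℓ) with hwdef
    have hu : u ≠ 0 := sub_ne_zero.mpr hj
    have hkey : χ u * α = χ w := by
      rw [hudef, hwdef, map_sub, map_sub, hχnat, hχnat, hχnat, hχnat]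
      linear_combination h
    have hχu : χ u ≠ 0 := by
      intro h0
      exact hu (χ.injective (by rw [h0, map_zero]))
    have hfin : α = χ (u⁻¹ * w) := by
      rw [map_mul, map_inv₀]
      field_simp
      linear_combination hkey
    exact hα ⟨(((u⁻¹ * w).val : ℕ) : ℤ), by rw [hfin, hcast]⟩

/-- spanning: every element of the fraction field lies in the `L`-span of the monomials -/
theorem span_mono_top {k : Type*} [Field k] {F : Type*} [Field F] [Algebra k F]
    [Algebra (MvPolynomial (Fin 2) k) F] [IsScalarTower k (MvPolynomial (Fin 2) k) F]
    [IsFractionRing (MvPolynomial (Fin 2) k) F]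
    {ℓ : ℕ} [Fact ℓ.Prime] [CharP F ℓ]
    (L : Subfield F)
    (hYl : (algebraMap (MvPolynomial (Fin 2) k) F (MvPolynomial.X 0)) ^ ℓ ∈ L)
    (hZl : (algebraMap (MvPolynomial (Fin 2) k) F (MvPolynomial.X 1)) ^ ℓ ∈ L)
    (halg : ∀ c : k, algebraMap k F c ∈ L) (f : F) :
    f ∈ Submodule.span L (Set.range (mono ℓ
      (algebraMap (MvPolynomial (Fin 2) k) F (MvPolynomial.X 0))
      (algebraMap (MvPolynomial (Fin 2) k) F (MvPolynomial.X 1)))) := by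
  haveI : NeZero ℓ := ⟨(Fact.out : ℓ.Prime).ne_zero⟩
  set Y : F := algebraMap (MvPolynomial (Fin 2) k) F (MvPolynomial.X 0) with hYdef
  set Z : F := algebraMap (MvPolynomial (Fin 2) k) F (MvPolynomial.X 1) with hZdef
  set M := Submodule.span L (Set.range (mono ℓ Y Z)) with hMdef
  have hone : (1 : F) ∈ M := by
    rw [← mono_zero_eq_one (ℓ := ℓ) Y Z]
    exact Submodule.subset_span ⟨0, rfl⟩
  have hCF : ∀ a : k, algebraMap (MvPolynomial (Fin 2) k) F (MvPolynomial.C a)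
      = algebraMap k F a := by
    intro a
    rw [← MvPolynomial.algebraMap_eq, ← IsScalarTower.algebraMap_apply]
  have hpoly : ∀ p : MvPolynomial (Fin 2) k, algebraMap (MvPolynomial (Fin 2) k) F p ∈ M := by
    intro p
    induction p using MvPolynomial.induction_on with
    | C a =>
      have h1 : algebraMap (MvPolynomial (Fin 2) k) F (MvPolynomial.C a)
          = algebraMap k F a * 1 := by rw [hCF, mul_one]
      have heq : algebraMap (MvPolynomial (Fin 2) k) F (MvPolynomial.C a)
          = (⟨algebraMap k F a, halg a⟩ : L) • (1 : F) := by
        rw [Subfield.smul_def]; exact h1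
      rw [heq]
      exact Submodule.smul_mem _ _ hone
    | add p q hp hq => rw [map_add]; exact Submodule.add_mem _ hp hq
    | mul_X p i hpp =>
      rw [map_mul]
      fin_cases i
      · exact mono_mul_Y hYl hpp
      · exact mono_mul_Z hZl hpp
  have hfrob : ∀ q : MvPolynomial (Fin 2) k,
      (algebraMap (MvPolynomial (Fin 2) k) F q) ^ ℓ ∈ L := by
    intro q
    induction q using MvPolynomial.induction_on with
    | C a => rw [hCF, ← map_pow]; exact halg _
    | add p q hp hq => rw [map_add, add_pow_char]; exact L.add_mem hp hq
    | mul_X p i hpp =>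
      rw [map_mul, mul_pow]
      refine L.mul_mem hpp ?_
      fin_cases i
      · exact hYl
      · exact hZl
  obtain ⟨⟨p, q⟩, hpq⟩ := IsLocalization.surj (nonZeroDivisors (MvPolynomial (Fin 2) k)) f
  simp only at hpq
  have hq0 : (q : MvPolynomial (Fin 2) k) ≠ 0 := nonZeroDivisors.coe_ne_zero q
  have hφq : algebraMap (MvPolynomial (Fin 2) k) F (q : MvPolynomial (Fin 2) k) ≠ 0 := by
    rw [map_ne_zero_iff _ (IsFractionRing.injective (MvPolynomial (Fin 2) k) F)]
    exact hq0
  have hinv : ((algebraMap (MvPolynomial (Fin 2) k) F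
      (q : MvPolynomial (Fin 2) k)) ^ ℓ)⁻¹ ∈ L := L.inv_mem (hfrob q)
  have heqF : f = ((algebraMap (MvPolynomial (Fin 2) k) F (q : MvPolynomial (Fin 2) k)) ^ ℓ)⁻¹ *
      (algebraMap (MvPolynomial (Fin 2) k) F p *
        (algebraMap (MvPolynomial (Fin 2) k) F (q : MvPolynomial (Fin 2) k)) ^ (ℓ - 1)) := by
    rw [eq_comm, inv_mul_eq_iff_eq_mul₀ (pow_ne_zero ℓ hφq),
      mul_comm ((algebraMap (MvPolynomial (Fin 2) k) F (q : MvPolynomial (Fin 2) k)) ^ ℓ) f]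
    calc algebraMap (MvPolynomial (Fin 2) k) F p *
          (algebraMap (MvPolynomial (Fin 2) k) F (q : MvPolynomial (Fin 2) k)) ^ (ℓ - 1)
        = (f * algebraMap (MvPolynomial (Fin 2) k) F (q : MvPolynomial (Fin 2) k)) *
          (algebraMap (MvPolynomial (Fin 2) k) F (q : MvPolynomial (Fin 2) k)) ^ (ℓ - 1) := by
          rw [hpq]
      _ = f * (algebraMap (MvPolynomial (Fin 2) k) F (q : MvPolynomial (Fin 2) k)) ^ ℓ := by
          rw [mul_assoc, ← pow_succ']
          congr 2
          have : ℓ ≠ 0 := (Fact.out : ℓ.Prime).ne_zero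
          omega
  have heq : f = (⟨_, hinv⟩ : L) • algebraMap (MvPolynomial (Fin 2) k) F
      (p * (q : MvPolynomial (Fin 2) k) ^ (ℓ - 1)) := by
    rw [Subfield.smul_def, map_mul, map_pow]
    exact heqF
  rw [heq]
  exact Submodule.smul_mem _ _ (hpoly _)

set_option maxHeartbeats 1000000 in
/-- Let `k` be a field of characteristic `ℓ > 0` and `α ∈ k` with `α ∉ 𝔽_ℓ`
(the prime subfield, i.e. the image of `ℤ` in `k`). Then the kernel of the `k`-derivation
`D_α = y∂_y + αz∂_z` of `k(y,z)` equals `k(y^ℓ, z^ℓ)`. -/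
theorem kernel_D_alpha_charP (k : Type*) [Field k] (ℓ : ℕ) (hℓ : ℓ ≠ 0) [CharP k ℓ]
    (α : k) (hα : ¬ ∃ n : ℤ, (n : k) = α)
    (d : Derivation k (FractionRing (MvPolynomial (Fin 2) k))
      (FractionRing (MvPolynomial (Fin 2) k)))
    (hy : d (algebraMap (MvPolynomial (Fin 2) k) _ (MvPolynomial.X 0)) =
      algebraMap (MvPolynomial (Fin 2) k) _ (MvPolynomial.X 0))
    (hz : d (algebraMap (MvPolynomial (Fin 2) k) _ (MvPolynomial.X 1)) =
      α • algebraMap (MvPolynomial (Fin 2) k) _ (MvPolynomial.X 1)) :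
    ∀ f : FractionRing (MvPolynomial (Fin 2) k),
      d f = 0 ↔ f ∈ Subfield.closure
        (Set.range (algebraMap k (FractionRing (MvPolynomial (Fin 2) k))) ∪
          {(algebraMap (MvPolynomial (Fin 2) k) (FractionRing (MvPolynomial (Fin 2) k))
              (MvPolynomial.X 0)) ^ ℓ,
           (algebraMap (MvPolynomial (Fin 2) k) (FractionRing (MvPolynomial (Fin 2) k))
              (MvPolynomial.X 1)) ^ ℓ}) := by
  classical
  haveI hp : Fact ℓ.Prime := ⟨CharP.char_prime_of_ne_zero k hℓ⟩
  haveI : NeZero ℓ := ⟨hℓ⟩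
  set Y : FractionRing (MvPolynomial (Fin 2) k) :=
    algebraMap (MvPolynomial (Fin 2) k) (FractionRing (MvPolynomial (Fin 2) k))
      (MvPolynomial.X 0) with hYdef
  set Z : FractionRing (MvPolynomial (Fin 2) k) :=
    algebraMap (MvPolynomial (Fin 2) k) (FractionRing (MvPolynomial (Fin 2) k))
      (MvPolynomial.X 1) with hZdef
  set L : Subfield (FractionRing (MvPolynomial (Fin 2) k)) := Subfield.closure
        (Set.range (algebraMap k (FractionRing (MvPolynomial (Fin 2) k))) ∪
          {Y ^ ℓ, Z ^ ℓ}) with hLdef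
  haveI : CharP (FractionRing (MvPolynomial (Fin 2) k)) ℓ :=
    charP_of_injective_algebraMap
      (algebraMap k (FractionRing (MvPolynomial (Fin 2) k))).injective ℓ
  have hYl : Y ^ ℓ ∈ L := Subfield.subset_closure (Or.inr (Set.mem_insert _ _))
  have hZl : Z ^ ℓ ∈ L := Subfield.subset_closure (Or.inr (Set.mem_insert_of_mem _ rfl))
  have halg : ∀ c : k, algebraMap k (FractionRing (MvPolynomial (Fin 2) k)) c ∈ L :=
    fun c => Subfield.subset_closure (Or.inl ⟨c, rfl⟩)
  have hLK : L ≤ derKernel d := by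
    rw [hLdef]
    refine Subfield.closure_le.mpr (Set.union_subset ?_ ?_)
    · rintro x ⟨c, rfl⟩
      exact d.map_algebraMap c
    · rintro x (rfl | rfl)
      · show d (Y ^ ℓ) = 0
        rw [d.leibniz_pow, hy, ← Nat.cast_smul_eq_nsmul
          (FractionRing (MvPolynomial (Fin 2) k)) ℓ, CharP.cast_eq_zero, zero_smul]
      · show d (Z ^ ℓ) = 0
        rw [d.leibniz_pow, hz, ← Nat.cast_smul_eq_nsmul
          (FractionRing (MvPolynomial (Fin 2) k)) ℓ, CharP.cast_eq_zero, zero_smul]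
  set lam : Fin ℓ × Fin ℓ → k := fun g => ((g.1 : ℕ) : k) + ((g.2 : ℕ) : k) * α with hlamdef
  have hlam0 : lam 0 = 0 := by simp [hlamdef]
  set v : Fin ℓ × Fin ℓ → FractionRing (MvPolynomial (Fin 2) k) := mono ℓ Y Z with hvdef
  have hmon : ∀ g : Fin ℓ × Fin ℓ, d (v g) = lam g • v g := fun g => der_mono d hy hz g
  have hall : ∀ f : FractionRing (MvPolynomial (Fin 2) k),
      f ∈ Submodule.span L (Set.range v) :=
    fun f => span_mono_top L hYl hZl halg f
  intro f
  constructor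
  · intro hdf
    obtain ⟨c, hc⟩ := (Submodule.mem_span_range_iff_exists_fun L).mp (hall f)
    set w : Fin ℓ × Fin ℓ → FractionRing (MvPolynomial (Fin 2) k) :=
      fun g => (c g : FractionRing (MvPolynomial (Fin 2) k)) * v g with hwdef
    have hsum : ∑ g, w g = f := by
      rw [← hc]
      exact Finset.sum_congr rfl fun g _ => (Subfield.smul_def (c g) (v g)).symm
    have hdw : ∀ g, d (w g) = lam g • w g := by
      intro g
      have hdc : d ((c g : FractionRing (MvPolynomial (Fin 2) k))) = 0 := hLK (c g).2
      rw [hwdef]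
      simp only
      rw [Derivation.leibniz, hdc, smul_zero, add_zero, hmon g, smul_comm, smul_eq_mul]
    have hzero : ∀ g : Fin ℓ × Fin ℓ, lam g • w g = 0 := by
      have := eigen_sum_zero d Finset.univ lam (fun g => lam g • w g)
        (fun g _ => by rw [d.map_smul, hdw g])
        (fun g _ g' _ hne => fun hl => hne (lam_inj hα g g' hl))
        (by
          have : ∑ g, lam g • w g = d f := by
            rw [← hsum, map_sum]
            exact (Finset.sum_congr rfl fun g _ => (hdw g).symm)
          rw [this, hdf])
      exact fun g => this g (Finset.mem_univ g)
    have hwzero : ∀ g : Fin ℓ × Fin ℓ, g ≠ 0 → w g = 0 := by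
      intro g hg
      have hlg : lam g ≠ 0 := by
        intro h0
        apply hg
        apply lam_inj hα g 0
        simp only [hlamdef] at h0
        simpa using h0
      have h := congrArg (fun x => (lam g)⁻¹ • x) (hzero g)
      simpa [inv_smul_smul₀ hlg] using h
    have hf0 : f = w 0 := by
      rw [← hsum]
      rw [Finset.sum_eq_single_of_mem 0 (Finset.mem_univ 0)]
      intro g _ hg
      exact hwzero g hg
    have hv0 : v 0 = 1 := mono_zero_eq_one Y Z
    rw [hf0, hwdef]
    simp only [hv0, mul_one]
    exact (c 0).2
  · intro hf
    exact hLK hf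
end

section
/- Let k be a field of characteristic ℓ > 0, α ∈ k with α ∉ 𝔽_ℓ. In the associative k-algebra U generated by x, y, z with relations yz = zy, xy − yx = y, xz − zx = αz, set μ = (α^ℓ − α)^{ℓ−1}, λ = −μ − 1, and c = x^{ℓ²} + λx^ℓ + μx. Then c commutes with x, y and z, hence is central in U. -/
/-!
The map `L(t) = t^{ℓ²} + λ t^ℓ + μ t` is additive on commuting elements in characteristic `ℓ`,
and `1` and `α` are roots of `L` in `k` (for `α` one uses `(α^ℓ - α)^ℓ = α^{ℓ²} - α^ℓ`).
The relations say `x w = w (x + a)` with `(w, a) = (y, 1)` or `(z, α)`, so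
`L(x) w = w L(x + a) = w (L(x) + L(a)) = w L(x)`.
-/

section LinearizedPoly

variable {k A : Type*} [CommRing k] [Ring A] [Algebra k A]

def linearizedPoly (p : ℕ) (lam μ : k) (t : A) : A :=
  t ^ (p ^ 2) + algebraMap k A lam * t ^ p + algebraMap k A μ * t

variable (p : ℕ) (lam μ : k)

theorem linearizedPoly_add_of_commute [ExpChar A p] {a b : A} (h : Commute a b) :
    linearizedPoly p lam μ (a + b) = linearizedPoly p lam μ a + linearizedPoly p lam μ b := by
  simp only [linearizedPoly, add_pow_expChar_pow_of_commute p 2 h,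
    add_pow_expChar_of_commute p h, mul_add]
  abel

theorem linearizedPoly_algebraMap (a : k) :
    linearizedPoly p lam μ (algebraMap k A a) = algebraMap k A (linearizedPoly p lam μ a) := by
  simp only [linearizedPoly, map_add, map_mul, map_pow, Algebra.algebraMap_self, RingHom.id_apply]

theorem SemiconjBy.linearizedPoly {w x x' : A} (h : SemiconjBy w x' x) :
    SemiconjBy w (linearizedPoly p lam μ x') (linearizedPoly p lam μ x) :=
  ((h.pow_right _).add_right
    (SemiconjBy.mul_right (Algebra.commute_algebraMap_right lam w) (h.pow_right p))).add_right
    (SemiconjBy.mul_right (Algebra.commute_algebraMap_right μ w) h)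

theorem linearizedPoly_commute_of_semiconjBy [ExpChar A p] {w x : A} {a : k}
    (hw : SemiconjBy w (x + algebraMap k A a) x) (ha : linearizedPoly p lam μ a = 0) :
    Commute (linearizedPoly p lam μ x) w := by
  have h := hw.linearizedPoly p lam μ
  rw [linearizedPoly_add_of_commute p lam μ (Algebra.commute_algebraMap_right a x),
    linearizedPoly_algebraMap, ha, map_zero, add_zero] at h
  exact h.symm

theorem linearizedPoly_one_eq_zero : linearizedPoly p (-μ - 1) μ (1 : k) = 0 := by
  simp only [linearizedPoly, one_pow, Algebra.algebraMap_self, RingHom.id_apply]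
  ring

theorem linearizedPoly_self_eq_zero [ExpChar k p] (α : k) :
    linearizedPoly p (-(α ^ p - α) ^ (p - 1) - 1) ((α ^ p - α) ^ (p - 1)) α = 0 := by
  have frobenius : (α ^ p - α) ^ p = α ^ (p ^ 2) - α ^ p := by
    rw [sub_pow_expChar, ← pow_mul, sq]
  have pow_pred_mul : (α ^ p - α) ^ (p - 1) * (α ^ p - α) = (α ^ p - α) ^ p := by
    rw [← pow_succ, Nat.sub_add_cancel (expChar_pos k p)]
  simp only [linearizedPoly, Algebra.algebraMap_self, RingHom.id_apply]
  linear_combination -frobenius - pow_pred_mul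

end LinearizedPoly

theorem c_central_general (k : Type*) [Field k] (ℓ : ℕ) (hℓ : ℓ.Prime) [CharP k ℓ]
    (α : k)
    (A : Type*) [Ring A] [Algebra k A] (x y z : A)
    (hxy : x * y - y * x = y)
    (hxz : x * z - z * x = algebraMap k A α * z) :
    let μ : k := (α ^ ℓ - α) ^ (ℓ - 1)
    let lam : k := -μ - 1
    let c : A := x ^ (ℓ ^ 2) + algebraMap k A lam * x ^ ℓ + algebraMap k A μ * x
    c * x = x * c ∧ c * y = y * c ∧ c * z = z * c := by
  intro μ lam c
  rcases subsingleton_or_nontrivial A with hA | hA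
  · exact ⟨Subsingleton.elim _ _, Subsingleton.elim _ _, Subsingleton.elim _ _⟩
  have : Fact ℓ.Prime := ⟨hℓ⟩
  have : CharP A ℓ := charP_of_injective_algebraMap (algebraMap k A).injective ℓ
  have hy : SemiconjBy y (x + algebraMap k A 1) x := by
    rw [SemiconjBy, map_one, mul_add, mul_one]
    exact (sub_eq_iff_eq_add'.mp hxy).symm
  have hz : SemiconjBy z (x + algebraMap k A α) x := by
    rw [SemiconjBy, mul_add, ← Algebra.commutes α z]
    exact (sub_eq_iff_eq_add'.mp hxz).symm
  refine ⟨((Commute.refl x).linearizedPoly ℓ lam μ).symm, ?_, ?_⟩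
  · exact linearizedPoly_commute_of_semiconjBy ℓ lam μ hy (linearizedPoly_one_eq_zero ℓ μ)
  · exact linearizedPoly_commute_of_semiconjBy ℓ lam μ hz (linearizedPoly_self_eq_zero ℓ α)

/-- Let `k` be a field of characteristic `ℓ > 0` and `α ∈ k` with `α ∉ 𝔽_ℓ`
(the prime subfield, i.e. the image of `ℤ` in `k`). In any associative `k`-algebra generated by
elements `x, y, z` with relations `yz = zy`, `xy − yx = y`, `xz − zx = αz` (in particular in the
enveloping algebra `U(𝔤_α)`), setting `μ = (α^ℓ − α)^{ℓ−1}`, `λ = −μ − 1` and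
`c = x^{ℓ²} + λ x^ℓ + μ x`, the element `c` commutes with `x`, `y` and `z`, hence is central. -/
theorem c_central (k : Type*) [Field k] (ℓ : ℕ) (hℓ : ℓ.Prime) [CharP k ℓ]
    (α : k) (hα : ¬ ∃ n : ℤ, (n : k) = α)
    (A : Type*) [Ring A] [Algebra k A] (x y z : A)
    (hyz : y * z = z * y) (hxy : x * y - y * x = y)
    (hxz : x * z - z * x = algebraMap k A α * z) :
    let μ : k := (α ^ ℓ - α) ^ (ℓ - 1)
    let lam : k := -μ - 1
    let c : A := x ^ (ℓ ^ 2) + algebraMap k A lam * x ^ ℓ + algebraMap k A μ * x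
    c * x = x * c ∧ c * y = y * c ∧ c * z = z * c :=
  c_central_general k ℓ hℓ α A x y z hxy hxz
end

section
/- Let ℓ > 2 be a prime, u ∈ 𝔽_ℓ^× a non-square, and θ ∈ 𝔽_{ℓ²} with θ² = u. Then the stabilizer of θ under the homographic action of SL₂(𝔽_ℓ) on 𝔽_{ℓ²} \ 𝔽_ℓ has cardinality ℓ + 1, equal to the cardinality of the kernel of the norm map N : 𝔽_{ℓ²}^× → 𝔽_ℓ^×. -/
open Polynomial

section SL2Aux

variable (ℓ : ℕ) [Fact ℓ.Prime]

private lemma SL2aux_indep (u : ZMod ℓ) (hu : ¬ ∃ v : ZMod ℓ, v ^ 2 = u)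
    (θ : GaloisField ℓ 2) (hθ : θ ^ 2 = algebraMap (ZMod ℓ) (GaloisField ℓ 2) u) :
    ∀ p q : ZMod ℓ, algebraMap (ZMod ℓ) (GaloisField ℓ 2) p
      + algebraMap (ZMod ℓ) (GaloisField ℓ 2) q * θ = 0 → p = 0 ∧ q = 0 := by
  intro p q h
  set φ := algebraMap (ZMod ℓ) (GaloisField ℓ 2) with hφ
  have hinj : Function.Injective φ := φ.injective
  by_cases hq : q = 0
  · subst hq
    simp only [map_zero, zero_mul, add_zero] at h
    exact ⟨hinj (by simpa using h), rfl⟩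
  · exfalso
    have hq' : φ q ≠ 0 := fun h0 => hq (hinj (by simpa using h0))
    have h1 : φ p / φ q = -θ := by
      field_simp
      linear_combination h
    exact hu ⟨p / q, hinj (by rw [map_pow, map_div₀, h1, ← hθ]; ring)⟩

private lemma SL2aux_theta_ne (u : ZMod ℓ) (hu : ¬ ∃ v : ZMod ℓ, v ^ 2 = u)
    (θ : GaloisField ℓ 2) (hθ : θ ^ 2 = algebraMap (ZMod ℓ) (GaloisField ℓ 2) u) :
    θ ≠ 0 := by
  intro h0
  apply hu
  refine ⟨0, ?_⟩
  have : algebraMap (ZMod ℓ) (GaloisField ℓ 2) u = 0 := by rw [← hθ, h0]; ring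
  have hu0 : u = 0 := (algebraMap (ZMod ℓ) (GaloisField ℓ 2)).injective (by simpa using this)
  simp [hu0]

private lemma SL2aux_frob (u : ZMod ℓ) (hu : ¬ ∃ v : ZMod ℓ, v ^ 2 = u)
    (θ : GaloisField ℓ 2) (hθ : θ ^ 2 = algebraMap (ZMod ℓ) (GaloisField ℓ 2) u) :
    θ ^ ℓ = -θ := by
  classical
  set φ := algebraMap (ZMod ℓ) (GaloisField ℓ 2) with hφ
  have hp : ℓ.Prime := Fact.out
  have h2 : (θ ^ ℓ) ^ 2 = θ ^ 2 := by
    rw [← pow_mul, mul_comm, pow_mul, hθ, ← map_pow, ZMod.pow_card]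
  have h3 : (θ ^ ℓ - θ) * (θ ^ ℓ + θ) = 0 := by linear_combination h2
  rcases mul_eq_zero.1 h3 with h | h
  · exfalso
    have hfix : θ ^ ℓ = θ := sub_eq_zero.1 h
    set P : Polynomial (GaloisField ℓ 2) := X ^ ℓ - X with hP
    have hPd : P.natDegree = ℓ := by
      rw [hP, natDegree_sub_eq_left_of_natDegree_lt] <;> simp [hp.one_lt]
    have hP0 : P ≠ 0 := by
      intro h0
      rw [h0, natDegree_zero] at hPd
      have := hp.two_le
      omega
    have hroot : ∀ x : GaloisField ℓ 2, x ∈ P.roots ↔ x ^ ℓ = x := by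
      intro x
      rw [mem_roots hP0]
      simp [hP, IsRoot, sub_eq_zero]
    have hsub : (Finset.univ.image fun a : ZMod ℓ => φ a) ⊆ P.roots.toFinset := by
      intro x hx
      simp only [Finset.mem_image, Finset.mem_univ, true_and] at hx
      obtain ⟨a, rfl⟩ := hx
      rw [Multiset.mem_toFinset, hroot, ← map_pow, ZMod.pow_card]
    have hcard1 : (Finset.univ.image fun a : ZMod ℓ => φ a).card = ℓ := by
      rw [Finset.card_image_of_injective _ φ.injective, Finset.card_univ, ZMod.card]
    have hcard2 : P.roots.toFinset.card ≤ ℓ := by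
      calc P.roots.toFinset.card ≤ Multiset.card P.roots := P.roots.toFinset_card_le
        _ ≤ P.natDegree := P.card_roots'
        _ = ℓ := hPd
    have heq : (Finset.univ.image fun a : ZMod ℓ => φ a) = P.roots.toFinset :=
      Finset.eq_of_subset_of_card_le hsub (by omega)
    have hmem : θ ∈ P.roots.toFinset := by
      rw [Multiset.mem_toFinset, hroot]; exact hfix
    rw [← heq] at hmem
    simp only [Finset.mem_image, Finset.mem_univ, true_and] at hmem
    obtain ⟨v, hv⟩ := hmem
    exact hu ⟨v, φ.injective (by rw [map_pow, hv, hθ])⟩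
  · linear_combination h

private lemma SL2aux_pow (u : ZMod ℓ) (hu : ¬ ∃ v : ZMod ℓ, v ^ 2 = u)
    (θ : GaloisField ℓ 2) (hθ : θ ^ 2 = algebraMap (ZMod ℓ) (GaloisField ℓ 2) u)
    (a c : ZMod ℓ) :
    (algebraMap (ZMod ℓ) (GaloisField ℓ 2) a + algebraMap (ZMod ℓ) (GaloisField ℓ 2) c * θ)
      ^ (ℓ + 1) = algebraMap (ZMod ℓ) (GaloisField ℓ 2) (a ^ 2 - u * c ^ 2) := by
  set φ := algebraMap (ZMod ℓ) (GaloisField ℓ 2) with hφ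
  have hfr := SL2aux_frob ℓ u hu θ hθ
  have h1 : (φ a + φ c * θ) ^ ℓ = φ a - φ c * θ := by
    rw [add_pow_char _ _ ℓ, mul_pow, ← map_pow, ← map_pow, ZMod.pow_card, ZMod.pow_card, hfr]
    ring
  rw [pow_succ, h1, map_sub, map_mul, map_pow, map_pow]
  linear_combination (-(φ c ^ 2)) * hθ

private lemma SL2aux_repr (u : ZMod ℓ) (hu : ¬ ∃ v : ZMod ℓ, v ^ 2 = u)
    (θ : GaloisField ℓ 2) (hθ : θ ^ 2 = algebraMap (ZMod ℓ) (GaloisField ℓ 2) u) :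
    ∀ x : GaloisField ℓ 2, ∃ a c : ZMod ℓ,
      x = algebraMap (ZMod ℓ) (GaloisField ℓ 2) a
        + algebraMap (ZMod ℓ) (GaloisField ℓ 2) c * θ := by
  set φ := algebraMap (ZMod ℓ) (GaloisField ℓ 2) with hφ
  have hind := SL2aux_indep ℓ u hu θ hθ
  have hθ0 : θ ≠ 0 := SL2aux_theta_ne ℓ u hu θ hθ
  have hli : LinearIndependent (ZMod ℓ) ![(1 : GaloisField ℓ 2), θ] := by
    rw [LinearIndependent.pair_iff]
    intro s t hst
    have := hind s t (by rw [← hst]; simp [Algebra.smul_def])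
    exact this
  have hfr : Module.finrank (ZMod ℓ) (GaloisField ℓ 2) = 2 :=
    GaloisField.finrank ℓ (by norm_num)
  let b := basisOfLinearIndependentOfCardEqFinrank hli (by simp [hfr])
  intro x
  have hx := b.sum_repr x
  have hb : ⇑b = ![(1 : GaloisField ℓ 2), θ] := coe_basisOfLinearIndependentOfCardEqFinrank hli _
  refine ⟨b.repr x 0, b.repr x 1, ?_⟩
  conv_lhs => rw [← hx]
  simp [hb, Fin.sum_univ_two, Algebra.smul_def, hφ]

private lemma SL2aux_card (hℓ : 2 < ℓ) :
    Nat.card {x : GaloisField ℓ 2 // x ^ (ℓ + 1) = 1} = ℓ + 1 := by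
  classical
  obtain ⟨g, hg⟩ := IsCyclic.exists_ofOrder_eq_natCard (α := (GaloisField ℓ 2)ˣ)
  have hcard : Nat.card (GaloisField ℓ 2)ˣ = ℓ ^ 2 - 1 := by
    rw [Nat.card_units (α := GaloisField ℓ 2), GaloisField.card ℓ 2 (by norm_num)]
  rw [hcard] at hg
  have hfact : ℓ ^ 2 - 1 = (ℓ + 1) * (ℓ - 1) := by
    have h1 : 1 ≤ ℓ := by omega
    have h2 : 1 ≤ ℓ ^ 2 := Nat.one_le_pow _ _ (by omega)
    zify [h1, h2]; ring
  have hgcd : ((ℓ + 1) * (ℓ - 1)).gcd (ℓ - 1) = ℓ - 1 :=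
    Nat.gcd_eq_right ⟨ℓ + 1, mul_comm _ _⟩
  have hord : orderOf (g ^ (ℓ - 1)) = ℓ + 1 := by
    rw [orderOf_pow, hg, hfact, hgcd, Nat.mul_div_cancel _ (by omega : 0 < ℓ - 1)]
  have hprim : IsPrimitiveRoot ((g ^ (ℓ - 1) : (GaloisField ℓ 2)ˣ) : GaloisField ℓ 2) (ℓ + 1) := by
    rw [IsPrimitiveRoot.coe_units_iff, ← hord]
    exact IsPrimitiveRoot.orderOf _
  have hcount : Nat.card {x : GaloisField ℓ 2 // x ^ (ℓ + 1) = 1}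
      = (Polynomial.nthRootsFinset (ℓ + 1) (1 : GaloisField ℓ 2)).card := by
    rw [← Nat.card_eq_finsetCard]
    exact Nat.card_congr (Equiv.subtypeEquivRight fun x => by
      rw [Polynomial.mem_nthRootsFinset (by omega) (1 : GaloisField ℓ 2)])
  rw [hcount, hprim.card_nthRootsFinset]

end SL2Aux

/-- Let `ℓ > 2` be a prime, `u ∈ 𝔽_ℓ^×` a non-square, and `θ ∈ 𝔽_{ℓ²}` with
`θ² = u`. Then the stabilizer of `θ` under the homographic action of `SL₂(𝔽_ℓ)` on
`𝔽_{ℓ²} \ 𝔽_ℓ` has cardinality `ℓ + 1`, equal to the cardinality of the kernel of the norm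
map `N : 𝔽_{ℓ²}^× → 𝔽_ℓ^×`, `N(x) = x^{ℓ+1}`. -/
theorem SL2_stabilizer_card (ℓ : ℕ) [Fact ℓ.Prime] (hℓ : 2 < ℓ)
    (u : ZMod ℓ) (hu0 : u ≠ 0) (hu : ¬ ∃ v : ZMod ℓ, v ^ 2 = u)
    (θ : GaloisField ℓ 2) (hθ : θ ^ 2 = algebraMap (ZMod ℓ) (GaloisField ℓ 2) u) :
    Nat.card {M : Matrix.SpecialLinearGroup (Fin 2) (ZMod ℓ) //
        (algebraMap (ZMod ℓ) (GaloisField ℓ 2) (M.1 0 0) * θ +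
            algebraMap (ZMod ℓ) (GaloisField ℓ 2) (M.1 0 1)) /
          (algebraMap (ZMod ℓ) (GaloisField ℓ 2) (M.1 1 0) * θ +
            algebraMap (ZMod ℓ) (GaloisField ℓ 2) (M.1 1 1)) = θ} = ℓ + 1 ∧
    Nat.card {x : GaloisField ℓ 2 // x ^ (ℓ + 1) = 1} = ℓ + 1 := by
  set φ := algebraMap (ZMod ℓ) (GaloisField ℓ 2) with hφ
  have hind := SL2aux_indep ℓ u hu θ hθ
  have hrepr := SL2aux_repr ℓ u hu θ hθ
  have hpow := SL2aux_pow ℓ u hu θ hθ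
  have hθ0 : θ ≠ 0 := SL2aux_theta_ne ℓ u hu θ hθ
  refine ⟨?_, SL2aux_card ℓ hℓ⟩
  have key : ∀ N : Matrix.SpecialLinearGroup (Fin 2) (ZMod ℓ),
      ((φ (N 0 0) * θ + φ (N 0 1)) / (φ (N 1 0) * θ + φ (N 1 1)) = θ
        ↔ (N 1 1 = N 0 0 ∧ N 0 1 = N 1 0 * u)) := by
    intro N
    constructor
    · intro h
      have hden : φ (N 1 0) * θ + φ (N 1 1) ≠ 0 := by
        intro h0
        rw [h0, div_zero] at h
        exact hθ0 h.symm
      rw [div_eq_iff hden] at h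
      have h2 : φ (N 0 1 - N 1 0 * u) + φ (N 0 0 - N 1 1) * θ = 0 := by
        rw [map_sub, map_sub, map_mul]
        linear_combination h + φ (N 1 0) * hθ
      obtain ⟨e1, e2⟩ := hind _ _ h2
      exact ⟨(sub_eq_zero.1 e2).symm, sub_eq_zero.1 e1⟩
    · rintro ⟨h1, h2⟩
      have hdet := N.2
      rw [Matrix.det_fin_two] at hdet
      have hden : φ (N 1 0) * θ + φ (N 1 1) ≠ 0 := by
        intro h0
        have h0' : φ (N 1 1) + φ (N 1 0) * θ = 0 := by linear_combination h0
        obtain ⟨e1, e2⟩ := hind _ _ h0'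
        exact one_ne_zero (by rw [← hdet, e1, e2]; ring)
      rw [div_eq_iff hden, h1, h2, map_mul]
      linear_combination -φ (N 1 0) * hθ
  rw [← SL2aux_card ℓ hℓ]
  apply Nat.card_congr
  refine Equiv.ofBijective
    (fun M => ⟨φ (M.1 0 0) + φ (M.1 1 0) * θ, ?_⟩) ⟨?_, ?_⟩
  · obtain ⟨h1, h2⟩ := (key M.1).1 M.2
    have hdet := M.1.2
    rw [Matrix.det_fin_two] at hdet
    have hd : (M.1 0 0 : ZMod ℓ) ^ 2 - u * (M.1 1 0) ^ 2 = 1 := by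
      linear_combination hdet - M.1 0 0 * h1 + M.1 1 0 * h2
    rw [hpow, hd, map_one]
  · intro M N hMN
    simp only [Subtype.mk.injEq] at hMN
    obtain ⟨hM1, hM2⟩ := (key M.1).1 M.2
    obtain ⟨hN1, hN2⟩ := (key N.1).1 N.2
    have h2 : φ (M.1 0 0 - N.1 0 0) + φ (M.1 1 0 - N.1 1 0) * θ = 0 := by
      rw [map_sub, map_sub]
      linear_combination hMN
    obtain ⟨e1, e2⟩ := hind _ _ h2
    have ea : M.1 0 0 = N.1 0 0 := sub_eq_zero.1 e1
    have ec : M.1 1 0 = N.1 1 0 := sub_eq_zero.1 e2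
    apply Subtype.ext
    apply Subtype.ext
    have hMe : (M.1 : Matrix (Fin 2) (Fin 2) (ZMod ℓ)) = !![M.1 0 0, M.1 0 1; M.1 1 0, M.1 1 1] :=
      Matrix.eta_fin_two _
    have hNe : (N.1 : Matrix (Fin 2) (Fin 2) (ZMod ℓ)) = !![N.1 0 0, N.1 0 1; N.1 1 0, N.1 1 1] :=
      Matrix.eta_fin_two _
    rw [hMe, hNe, ea, ec, hM1, hM2, hN1, hN2, ea, ec]
  · rintro ⟨x, hx⟩
    obtain ⟨a, c, rfl⟩ := hrepr x
    have h1 : a ^ 2 - u * c ^ 2 = 1 := by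
      apply φ.injective
      rw [map_one, ← hpow a c]
      exact hx
    have hdet : Matrix.det !![a, c * u; c, a] = 1 := by
      rw [Matrix.det_fin_two_of]
      linear_combination h1
    refine ⟨⟨⟨!![a, c * u; c, a], hdet⟩, ?_⟩, ?_⟩
    · refine (key _).2 ⟨by simp, by simp⟩
    · apply Subtype.ext
      simp [hφ]
end

section
/- Let ℓ be a prime with ℓ ≡ 3 (mod 4), and let θ ∈ 𝔽_{ℓ³} \ 𝔽_ℓ. Then the stabilizer of θ under the homographic action of SL₂^±(𝔽_ℓ) = {M ∈ GL₂(𝔽_ℓ) : det M = ±1} on 𝔽_{ℓ³} \ 𝔽_ℓ is {±I}, and consequently the action of SL₂^±(𝔽_ℓ) on 𝔽_{ℓ³} \ 𝔽_ℓ is transitive. -/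
open Matrix Polynomial Finset

namespace SLpm2Aux

section Counting
variable {𝔽 : Type*} [Field 𝔽] [Fintype 𝔽] [DecidableEq 𝔽]

noncomputable def glEquiv : GL (Fin 2) 𝔽 ≃ {M : Matrix (Fin 2) (Fin 2) 𝔽 // M.det ≠ 0} where
  toFun u := ⟨u.val, by
    have : IsUnit (u.val.det) := u.isUnit.map (Matrix.detMonoidHom)
    exact this.ne_zero⟩
  invFun M := Matrix.GeneralLinearGroup.mk'' M.1 (isUnit_iff_ne_zero.2 M.2)
  left_inv u := by
    apply Units.ext
    rfl
  right_inv M := rfl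

lemma card_det_ne_zero :
    (univ.filter (fun M : Matrix (Fin 2) (Fin 2) 𝔽 => M.det ≠ 0)).card
      = (Fintype.card 𝔽 ^ 2 - 1) * (Fintype.card 𝔽 ^ 2 - Fintype.card 𝔽) := by
  have h1 := Matrix.card_GL_field (𝔽 := 𝔽) 2
  rw [Nat.card_congr (glEquiv (𝔽 := 𝔽)), Nat.card_eq_fintype_card,
    Fintype.card_subtype, Fin.prod_univ_two] at h1
  simpa using h1

lemma card_det_eq_fixed (c : 𝔽) (hc : c ≠ 0) :
    (univ.filter (fun M : Matrix (Fin 2) (Fin 2) 𝔽 => M.det = c)).card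
      = (univ.filter (fun M : Matrix (Fin 2) (Fin 2) 𝔽 => M.det = 1)).card := by
  apply Finset.card_nbij' (i := fun M => M * Matrix.diagonal ![c⁻¹, 1])
    (j := fun M => M * Matrix.diagonal ![c, 1])
  · intro M hM
    simp only [mem_coe, mem_filter, mem_univ, true_and] at hM ⊢
    rw [Matrix.det_mul, Matrix.det_diagonal, hM]
    simp [Fin.prod_univ_two, mul_inv_cancel₀ hc]
  · intro M hM
    simp only [mem_coe, mem_filter, mem_univ, true_and] at hM ⊢
    rw [Matrix.det_mul, Matrix.det_diagonal, hM]
    simp [Fin.prod_univ_two]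
  · intro M _
    dsimp only
    rw [Matrix.mul_assoc, Matrix.diagonal_mul_diagonal]
    have hfun : (fun i : Fin 2 => ![c⁻¹, 1] i * ![c, 1] i) = fun _ => (1 : 𝔽) := by
      funext i; fin_cases i <;> simp [inv_mul_cancel₀ hc]
    rw [hfun, Matrix.diagonal_one, Matrix.mul_one]
  · intro M _
    dsimp only
    rw [Matrix.mul_assoc, Matrix.diagonal_mul_diagonal]
    have hfun : (fun i : Fin 2 => ![c, 1] i * ![c⁻¹, 1] i) = fun _ => (1 : 𝔽) := by
      funext i; fin_cases i <;> simp [mul_inv_cancel₀ hc]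
    rw [hfun, Matrix.diagonal_one, Matrix.mul_one]

lemma card_det_one :
    (univ.filter (fun M : Matrix (Fin 2) (Fin 2) 𝔽 => M.det = 1)).card
      = Fintype.card 𝔽 * (Fintype.card 𝔽 ^ 2 - 1) := by
  set q := Fintype.card 𝔽 with hq
  have hq2 : 2 ≤ q := Fintype.one_lt_card
  set X := (univ.filter (fun M : Matrix (Fin 2) (Fin 2) 𝔽 => M.det = 1)).card with hX
  have hpart : (univ.filter (fun M : Matrix (Fin 2) (Fin 2) 𝔽 => M.det ≠ 0)).card
      = ∑ c ∈ (univ.filter (fun c : 𝔽 => c ≠ 0)),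
        ((univ.filter (fun M : Matrix (Fin 2) (Fin 2) 𝔽 => M.det ≠ 0)).filter
          (fun M => M.det = c)).card := by
    apply card_eq_sum_card_fiberwise
    intro M hM
    simp only [mem_coe, mem_filter, mem_univ, true_and] at hM ⊢
    exact hM
  have hfib : ∀ c ∈ (univ.filter (fun c : 𝔽 => c ≠ 0)),
      ((univ.filter (fun M : Matrix (Fin 2) (Fin 2) 𝔽 => M.det ≠ 0)).filter
        (fun M => M.det = c)).card = X := by
    intro c hc
    simp only [mem_filter, mem_univ, true_and] at hc
    rw [filter_filter]
    rw [hX, ← card_det_eq_fixed c hc]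
    congr 1
    apply Finset.filter_congr
    intro M _
    constructor
    · exact fun h => h.2
    · exact fun h => ⟨h ▸ hc, h⟩
  rw [Finset.sum_congr rfl hfib, Finset.sum_const, smul_eq_mul, card_det_ne_zero] at hpart
  have hcnz : (univ.filter (fun c : 𝔽 => c ≠ 0)).card = q - 1 := by
    rw [filter_ne']
    rw [card_erase_of_mem (mem_univ 0), card_univ]
  rw [hcnz] at hpart
  have h1 : (1 : ℕ) ≤ q ^ 2 := by nlinarith
  have h2 : q ≤ q ^ 2 := by nlinarith
  have h3 : (1:ℕ) ≤ q := by omega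
  have key : (q - 1) * X = (q - 1) * (q * (q ^ 2 - 1)) := by
    rw [← hpart, ← hq]
    zify [h1, h2, h3]
    ring
  exact Nat.eq_of_mul_eq_mul_left (by omega) key

end Counting

section Field
variable {ℓ : ℕ} [Fact ℓ.Prime]

local notation "φ" => algebraMap (ZMod ℓ) (GaloisField ℓ 3)

lemma finrank3 : Module.finrank (ZMod ℓ) (GaloisField ℓ 3) = 3 := by
  have : Fintype (GaloisField ℓ 3) := Fintype.ofFinite _
  have h1 : Nat.card (GaloisField ℓ 3) = ℓ ^ 3 := GaloisField.card ℓ 3 (by norm_num)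
  have h2 := Module.card_eq_pow_finrank (K := ZMod ℓ) (V := GaloisField ℓ 3)
  rw [Nat.card_eq_fintype_card] at h1
  rw [h1, ZMod.card] at h2
  exact (Nat.pow_right_injective (Fact.out (p := ℓ.Prime)).two_le h2.symm)

lemma minpoly_deg3 (θ : GaloisField ℓ 3)
    (hθ : θ ∉ Set.range (algebraMap (ZMod ℓ) (GaloisField ℓ 3))) :
    (minpoly (ZMod ℓ) θ).natDegree = 3 := by
  have hint : IsIntegral (ZMod ℓ) θ := Algebra.IsIntegral.isIntegral θ
  have hdvd : (minpoly (ZMod ℓ) θ).natDegree ∣ 3 := by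
    have := minpoly.degree_dvd hint
    rwa [finrank3] at this
  have hne1 : (minpoly (ZMod ℓ) θ).natDegree ≠ 1 := by
    intro h
    rw [minpoly.natDegree_eq_one_iff] at h
    exact hθ (by simpa [RingHom.mem_range, Set.mem_range] using h)
  have hpos := (minpoly.natDegree_pos hint)
  rcases (Nat.Prime.eq_one_or_self_of_dvd (by norm_num) _ hdvd) with h | h
  · exact absurd h hne1
  · exact h

lemma linind (θ : GaloisField ℓ 3)
    (hdeg : (minpoly (ZMod ℓ) θ).natDegree = 3)
    (a b c : ZMod ℓ)
    (h : algebraMap (ZMod ℓ) (GaloisField ℓ 3) a * θ ^ 2 +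
      algebraMap (ZMod ℓ) (GaloisField ℓ 3) b * θ +
      algebraMap (ZMod ℓ) (GaloisField ℓ 3) c = 0) :
    a = 0 ∧ b = 0 ∧ c = 0 := by
  by_contra hcon
  set p : Polynomial (ZMod ℓ) := C a * X ^ 2 + C b * X + C c with hp
  have hpne : p ≠ 0 := by
    intro h0
    apply hcon
    have h2 : a = (0 : Polynomial (ZMod ℓ)).coeff 2 := by rw [← h0]; simp [hp]
    have h1 : b = (0 : Polynomial (ZMod ℓ)).coeff 1 := by rw [← h0]; simp [hp]
    have h0' : c = (0 : Polynomial (ZMod ℓ)).coeff 0 := by rw [← h0]; simp [hp]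
    refine ⟨by simpa using h2, by simpa using h1, by simpa using h0'⟩
  have haev : aeval θ p = 0 := by
    simp [hp, aeval_add, aeval_mul, map_pow, Algebra.algebraMap_eq_smul_one]
    simpa [Algebra.smul_def] using h
  have hle := minpoly.degree_le_of_ne_zero (ZMod ℓ) θ hpne haev
  have hple : p.degree ≤ 2 := degree_quadratic_le
  have : (minpoly (ZMod ℓ) θ).degree = 3 := by
    rw [degree_eq_natDegree (minpoly.ne_zero_of_finite (ZMod ℓ) θ), hdeg]; rfl
  rw [this] at hle
  exact absurd (hle.trans hple) (by norm_num)

lemma denom_ne (θ : GaloisField ℓ 3) (hθ : θ ∉ Set.range φ)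
    (M : Matrix (Fin 2) (Fin 2) (ZMod ℓ)) (hdet : M.det ≠ 0) :
    φ (M 1 0) * θ + φ (M 1 1) ≠ 0 := by
  intro h
  by_cases h10 : M 1 0 = 0
  · rw [h10, map_zero, zero_mul, zero_add] at h
    have h11 : M 1 1 = 0 := by
      have := (algebraMap (ZMod ℓ) (GaloisField ℓ 3)).injective
      exact this (by simpa using h)
    apply hdet
    rw [Matrix.det_fin_two, h10, h11]
    ring
  · apply hθ
    refine ⟨-(M 1 1) / (M 1 0), ?_⟩
    rw [map_div₀, map_neg]
    field_simp [h10]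
    linear_combination -h

lemma image_ne (θ : GaloisField ℓ 3) (hθ : θ ∉ Set.range φ)
    (M : Matrix (Fin 2) (Fin 2) (ZMod ℓ)) (hdet : M.det ≠ 0) :
    (φ (M 0 0) * θ + φ (M 0 1)) / (φ (M 1 0) * θ + φ (M 1 1)) ∉ Set.range φ := by
  rintro ⟨r, hr⟩
  have hden := denom_ne θ hθ M hdet
  rw [eq_div_iff hden] at hr
  have key : φ (M 0 0 - r * M 1 0) * θ = φ (r * M 1 1 - M 0 1) := by
    rw [map_sub, map_sub, _root_.map_mul, _root_.map_mul]
    linear_combination -hr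
  by_cases hz : M 0 0 - r * M 1 0 = 0
  · rw [hz, map_zero, zero_mul] at key
    have h2 : r * M 1 1 - M 0 1 = 0 :=
      (algebraMap (ZMod ℓ) (GaloisField ℓ 3)).injective (by simpa using key.symm)
    apply hdet
    rw [Matrix.det_fin_two]
    linear_combination M 1 1 * hz + M 1 0 * h2
  · apply hθ
    have hφz : φ (M 0 0 - r * M 1 0) ≠ 0 := fun h =>
      hz ((algebraMap (ZMod ℓ) (GaloisField ℓ 3)).injective (by rw [h, map_zero]))
    refine ⟨(r * M 1 1 - M 0 1) / (M 0 0 - r * M 1 0), ?_⟩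
    rw [map_div₀, div_eq_iff hφz]
    linear_combination -key

lemma mob_inj (hmod : ℓ % 4 = 3) (θ : GaloisField ℓ 3) (hθ : θ ∉ Set.range φ)
    (hdeg : (minpoly (ZMod ℓ) θ).natDegree = 3)
    (M N : Matrix (Fin 2) (Fin 2) (ZMod ℓ))
    (hM : M.det = 1 ∨ M.det = -1) (hN : N.det = 1 ∨ N.det = -1)
    (h : (φ (M 0 0) * θ + φ (M 0 1)) / (φ (M 1 0) * θ + φ (M 1 1)) =
      (φ (N 0 0) * θ + φ (N 0 1)) / (φ (N 1 0) * θ + φ (N 1 1))) :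
    M = N ∨ M = -N := by
  have hMd : M.det ≠ 0 := by rcases hM with h' | h' <;> simp [h']
  have hNd : N.det ≠ 0 := by rcases hN with h' | h' <;> simp [h']
  rw [div_eq_div_iff (denom_ne θ hθ M hMd) (denom_ne θ hθ N hNd)] at h
  have hcf : φ (M 0 0 * N 1 0 - N 0 0 * M 1 0) * θ ^ 2 +
      φ (M 0 0 * N 1 1 + M 0 1 * N 1 0 - N 0 0 * M 1 1 - N 0 1 * M 1 0) * θ +
      φ (M 0 1 * N 1 1 - N 0 1 * M 1 1) = 0 := by
    simp only [map_sub, map_add, _root_.map_mul]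
    linear_combination h
  obtain ⟨ha, hb, hc⟩ := linind θ hdeg _ _ _ hcf
  set lam : ZMod ℓ := N 1 1 * M 0 0 - N 0 1 * M 1 0 with hlam
  rw [det_fin_two] at hMd hNd hM hN
  have e1 : (N 0 0 * N 1 1 - N 0 1 * N 1 0) * M 0 0 = lam * N 0 0 := by
    rw [hlam]; linear_combination (-(N 0 1)) * ha
  have e2 : (N 0 0 * N 1 1 - N 0 1 * N 1 0) * M 0 1 = lam * N 0 1 := by
    rw [hlam]; linear_combination N 0 0 * hc - N 0 1 * hb
  have e3 : (N 0 0 * N 1 1 - N 0 1 * N 1 0) * M 1 0 = lam * N 1 0 := by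
    rw [hlam]; linear_combination (-(N 1 1)) * ha
  have e4 : (N 0 0 * N 1 1 - N 0 1 * N 1 0) * M 1 1 = lam * N 1 1 := by
    rw [hlam]; linear_combination N 1 0 * hc - N 1 1 * hb
  have hN2 : (N 0 0 * N 1 1 - N 0 1 * N 1 0) ^ 2 = 1 := by
    rcases hN with h' | h' <;> rw [h'] <;> ring
  have hdd : (N 0 0 * N 1 1 - N 0 1 * N 1 0) ^ 2 * (M 0 0 * M 1 1 - M 0 1 * M 1 0)
      = lam ^ 2 * (N 0 0 * N 1 1 - N 0 1 * N 1 0) := by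
    calc (N 0 0 * N 1 1 - N 0 1 * N 1 0) ^ 2 * (M 0 0 * M 1 1 - M 0 1 * M 1 0)
        = ((N 0 0 * N 1 1 - N 0 1 * N 1 0) * M 0 0) * ((N 0 0 * N 1 1 - N 0 1 * N 1 0) * M 1 1)
          - ((N 0 0 * N 1 1 - N 0 1 * N 1 0) * M 0 1) * ((N 0 0 * N 1 1 - N 0 1 * N 1 0) * M 1 0) := by
          ring
      _ = (lam * N 0 0) * (lam * N 1 1) - (lam * N 0 1) * (lam * N 1 0) := by rw [e1, e2, e3, e4]
      _ = lam ^ 2 * (N 0 0 * N 1 1 - N 0 1 * N 1 0) := by ring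
  rw [hN2, one_mul] at hdd
  have neg_one_not_sq : ∀ x : ZMod ℓ, x ^ 2 ≠ -1 := by
    intro x h'
    have : IsSquare (-1 : ZMod ℓ) := ⟨x, by rw [← h']; ring⟩
    rw [ZMod.exists_sq_eq_neg_one_iff] at this
    exact this hmod
  have hlam2 : lam ^ 2 = 1 := by
    rcases hM with h' | h' <;> rcases hN with h'' | h'' <;> rw [h', h''] at hdd
    · linear_combination -hdd
    · exact absurd (by linear_combination hdd : lam ^ 2 = -1) (neg_one_not_sq lam)
    · exact absurd (by linear_combination -hdd : lam ^ 2 = -1) (neg_one_not_sq lam)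
    · linear_combination hdd
  set d : ZMod ℓ := N 0 0 * N 1 1 - N 0 1 * N 1 0 with hd
  have hμ2 : (d * lam) * (d * lam) = 1 := by
    rw [mul_mul_mul_comm, ← sq, ← sq, hN2, hlam2, one_mul]
  have h00 : M 0 0 = (d * lam) * N 0 0 := by linear_combination d * e1 - M 0 0 * hN2
  have h01 : M 0 1 = (d * lam) * N 0 1 := by linear_combination d * e2 - M 0 1 * hN2
  have h10 : M 1 0 = (d * lam) * N 1 0 := by linear_combination d * e3 - M 1 0 * hN2
  have h11 : M 1 1 = (d * lam) * N 1 1 := by linear_combination d * e4 - M 1 1 * hN2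
  rcases mul_self_eq_one_iff.mp hμ2 with hμ | hμ
  · left
    rw [Matrix.eta_fin_two M, Matrix.eta_fin_two N, h00, h01, h10, h11, hμ]
    norm_num
  · right
    rw [Matrix.eta_fin_two M, Matrix.eta_fin_two N, h00, h01, h10, h11, hμ]
    simp [Matrix.eta_fin_two (-(Matrix.of ![![N 0 0, N 0 1], ![N 1 0, N 1 1]]))]

end Field
end SLpm2Aux

open Matrix Finset SLpm2Aux


/-- Let `ℓ` be a prime with `ℓ ≡ 3 (mod 4)` and `θ ∈ 𝔽_{ℓ³} \ 𝔽_ℓ`. Then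
the stabilizer of `θ` under the homographic action of `SL₂^±(𝔽_ℓ) = {M : det M = ±1}` on
`𝔽_{ℓ³} \ 𝔽_ℓ` is `{±I}`, and consequently this action is transitive. -/
theorem SLpm2_cubic (ℓ : ℕ) [Fact ℓ.Prime] (hmod : ℓ % 4 = 3)
    (θ : GaloisField ℓ 3) (hθ : θ ∉ Set.range (algebraMap (ZMod ℓ) (GaloisField ℓ 3))) :
    {M : Matrix (Fin 2) (Fin 2) (ZMod ℓ) | (M.det = 1 ∨ M.det = -1) ∧
        (algebraMap (ZMod ℓ) (GaloisField ℓ 3) (M 0 0) * θ +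
            algebraMap (ZMod ℓ) (GaloisField ℓ 3) (M 0 1)) /
          (algebraMap (ZMod ℓ) (GaloisField ℓ 3) (M 1 0) * θ +
            algebraMap (ZMod ℓ) (GaloisField ℓ 3) (M 1 1)) = θ}
      = {(1 : Matrix (Fin 2) (Fin 2) (ZMod ℓ)), (-1 : Matrix (Fin 2) (Fin 2) (ZMod ℓ))} ∧
    ∀ θ' : GaloisField ℓ 3, θ' ∉ Set.range (algebraMap (ZMod ℓ) (GaloisField ℓ 3)) →
      ∃ M : Matrix (Fin 2) (Fin 2) (ZMod ℓ), (M.det = 1 ∨ M.det = -1) ∧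
        (algebraMap (ZMod ℓ) (GaloisField ℓ 3) (M 0 0) * θ +
            algebraMap (ZMod ℓ) (GaloisField ℓ 3) (M 0 1)) /
          (algebraMap (ZMod ℓ) (GaloisField ℓ 3) (M 1 0) * θ +
            algebraMap (ZMod ℓ) (GaloisField ℓ 3) (M 1 1)) = θ' := by
  classical
  haveI : Fintype (GaloisField ℓ 3) := Fintype.ofFinite _
  have hℓ2 : 2 ≤ ℓ := (Fact.out (p := ℓ.Prime)).two_le
  have hℓodd : ℓ % 2 = 1 := by omega
  have hdeg := minpoly_deg3 θ hθ
  set φ' := algebraMap (ZMod ℓ) (GaloisField ℓ 3) with hφ'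
  -- Möbius map
  set f : Matrix (Fin 2) (Fin 2) (ZMod ℓ) → GaloisField ℓ 3 :=
    fun M => (φ' (M 0 0) * θ + φ' (M 0 1)) / (φ' (M 1 0) * θ + φ' (M 1 1)) with hf
  have mob_one : f 1 = θ := by
    simp [hf, Matrix.one_apply]
  have mob_neg_one : f (-1) = θ := by
    have e00 : ((-1 : Matrix (Fin 2) (Fin 2) (ZMod ℓ)) 0 0) = -1 := by
      simp [Matrix.neg_apply, Matrix.one_apply]
    have e01 : ((-1 : Matrix (Fin 2) (Fin 2) (ZMod ℓ)) 0 1) = 0 := by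
      simp [Matrix.neg_apply, Matrix.one_apply]
    have e10 : ((-1 : Matrix (Fin 2) (Fin 2) (ZMod ℓ)) 1 0) = 0 := by
      simp [Matrix.neg_apply, Matrix.one_apply]
    have e11 : ((-1 : Matrix (Fin 2) (Fin 2) (ZMod ℓ)) 1 1) = -1 := by
      simp [Matrix.neg_apply, Matrix.one_apply]
    rw [hf]
    simp only [e00, e01, e10, e11, map_neg, _root_.map_one, map_zero, zero_mul, zero_add,
      add_zero]
    rw [neg_one_mul, neg_div_neg_eq, div_one]
  have det_neg_one : (-1 : Matrix (Fin 2) (Fin 2) (ZMod ℓ)).det = 1 := by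
    rw [show (-1 : Matrix (Fin 2) (Fin 2) (ZMod ℓ)) = -(1 : Matrix (Fin 2) (Fin 2) (ZMod ℓ)) from rfl,
      Matrix.det_neg, Matrix.det_one]
    simp
  constructor
  · ext M
    simp only [Set.mem_setOf_eq, Set.mem_insert_iff, Set.mem_singleton_iff]
    constructor
    · rintro ⟨hdet, heq⟩
      have h1 : f M = f 1 := by rw [mob_one]; exact heq
      have := mob_inj hmod θ hθ hdeg M 1 hdet (Or.inl Matrix.det_one) h1
      simpa using this
    · rintro (rfl | rfl)
      · exact ⟨Or.inl Matrix.det_one, mob_one⟩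
      · exact ⟨Or.inl det_neg_one, mob_neg_one⟩
  · -- transitivity
    intro θ' hθ'
    set T : Finset (Matrix (Fin 2) (Fin 2) (ZMod ℓ)) :=
      univ.filter (fun M => M.det = 1 ∨ M.det = -1) with hT
    set Sfin : Finset (GaloisField ℓ 3) := univ.filter (fun x => x ∉ Set.range φ') with hS
    have hdetne : ∀ M ∈ T, M.det ≠ 0 := by
      intro M hM
      rw [hT, mem_filter] at hM
      rcases hM.2 with h' | h' <;> simp [h']
    have hmaps : ∀ M ∈ T, f M ∈ Sfin := by
      intro M hM
      rw [hS, mem_filter]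
      exact ⟨mem_univ _, image_ne θ hθ M (hdetne M hM)⟩
    have himsub : T.image f ⊆ Sfin := by
      intro x hx
      obtain ⟨M, hM, rfl⟩ := mem_image.mp hx
      exact hmaps M hM
    -- fibers have at most 2 elements
    have hfib : ∀ x ∈ T.image f, (T.filter (fun M => f M = x)).card ≤ 2 := by
      intro x hx
      obtain ⟨M, hM, rfl⟩ := mem_image.mp hx
      have hMT := mem_filter.mp hM
      have hsub : (T.filter (fun N => f N = f M)) ⊆ {M, -M} := by
        intro N hN
        rw [mem_filter] at hN
        have hNT := mem_filter.mp hN.1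
        have := mob_inj hmod θ hθ hdeg N M hNT.2 hMT.2 hN.2
        simpa [Finset.mem_insert, Finset.mem_singleton] using this
      calc (T.filter (fun N => f N = f M)).card ≤ ({M, -M} : Finset _).card :=
            Finset.card_le_card hsub
        _ ≤ 2 := Finset.card_insert_le _ _ |>.trans (by simp)
    have hcard1 : T.card ≤ 2 * (T.image f).card :=
      Finset.card_le_mul_card_image T 2 hfib
    -- card of T
    have hTcard : T.card = 2 * (ℓ * (ℓ ^ 2 - 1)) := by
      have hone_ne : (1 : ZMod ℓ) ≠ -1 := by
        intro h
        have h2z : ((2 : ℕ) : ZMod ℓ) = 0 := by push_cast; linear_combination h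
        rw [ZMod.natCast_eq_zero_iff] at h2z
        have := Nat.le_of_dvd (by norm_num) h2z
        omega
      have hdisj : Disjoint (univ.filter (fun M : Matrix (Fin 2) (Fin 2) (ZMod ℓ) => M.det = 1))
          (univ.filter (fun M : Matrix (Fin 2) (Fin 2) (ZMod ℓ) => M.det = -1)) := by
        rw [Finset.disjoint_filter]
        intro M _ h1 h2
        exact hone_ne (h1.symm.trans h2)
      have hunion : T = (univ.filter (fun M : Matrix (Fin 2) (Fin 2) (ZMod ℓ) => M.det = 1))
          ∪ (univ.filter (fun M : Matrix (Fin 2) (Fin 2) (ZMod ℓ) => M.det = -1)) := by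
        rw [hT, ← Finset.filter_or]
      have hneg1ne : (-1 : ZMod ℓ) ≠ 0 := by
        simp
      rw [hunion, Finset.card_union_of_disjoint hdisj, card_det_one,
        card_det_eq_fixed (-1 : ZMod ℓ) hneg1ne, card_det_one, ZMod.card]
      ring
    -- card of Sfin
    have hScard : Sfin.card = ℓ ^ 3 - ℓ := by
      have hrange : (univ.filter (fun x : GaloisField ℓ 3 => x ∈ Set.range φ')).card = ℓ := by
        have : (univ.filter (fun x : GaloisField ℓ 3 => x ∈ Set.range φ'))
            = univ.image φ' := by
          ext x
          simp [Set.mem_range, eq_comm]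
        rw [this, Finset.card_image_of_injective _ (algebraMap (ZMod ℓ) (GaloisField ℓ 3)).injective,
          card_univ, ZMod.card]
      have hcompl := Finset.card_filter_add_card_filter_not
        (s := (univ : Finset (GaloisField ℓ 3))) (p := fun x => x ∈ Set.range φ')
      have hKcard : (univ : Finset (GaloisField ℓ 3)).card = ℓ ^ 3 := by
        rw [card_univ, ← Nat.card_eq_fintype_card]
        exact GaloisField.card ℓ 3 (by norm_num)
      rw [hrange, hKcard] at hcompl
      rw [hS]
      omega
    have hid : ℓ ^ 3 - ℓ = ℓ * (ℓ ^ 2 - 1) := by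
      have h1 : 1 ≤ ℓ ^ 2 := by nlinarith
      have h2 : ℓ ≤ ℓ ^ 3 := by nlinarith
      zify [h1, h2]
      ring
    have himcard : Sfin.card ≤ (T.image f).card := by
      rw [hScard, hid]
      have h2x : 2 * (ℓ * (ℓ ^ 2 - 1)) ≤ 2 * (T.image f).card := by
        rw [← hTcard]; exact hcard1
      exact Nat.le_of_mul_le_mul_left h2x (by norm_num)
    have heq : T.image f = Sfin := Finset.eq_of_subset_of_card_le himsub himcard
    have hθ'mem : θ' ∈ Sfin := by
      rw [hS, mem_filter]
      exact ⟨mem_univ _, hθ'⟩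
    rw [← heq] at hθ'mem
    obtain ⟨M, hM, hfM⟩ := mem_image.mp hθ'mem
    exact ⟨M, (mem_filter.mp hM).2, hfM⟩
end

section
/- Let k be a field of characteristic zero. The kernel of the k-derivation Δ = y∂_y + (y+z)∂_z of the rational function field k(y,z) is equal to k. -/
open MvPolynomial

namespace KernelDelta

variable {k : Type*} [Field k]

/-- The derivation `Δ = y ∂_y + (y+z) ∂_z` on `k[y,z]`. -/
noncomputable def Δ (k : Type*) [Field k] :
    Derivation k (MvPolynomial (Fin 2) k) (MvPolynomial (Fin 2) k) :=
  (X 0 : MvPolynomial (Fin 2) k) • (pderiv 0) +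
    ((X 0 : MvPolynomial (Fin 2) k) + X 1) • (pderiv 1)

lemma Δ_apply (p : MvPolynomial (Fin 2) k) :
    Δ k p = X 0 * pderiv 0 p + (X 0 + X 1) * pderiv 1 p := rfl

@[simp] lemma Δ_X0 : Δ k (X 0) = X 0 := by
  simp [Δ_apply]

@[simp] lemma Δ_X1 : Δ k (X 1) = X 0 + X 1 := by
  have h0 : ((1 : Fin 2) ≠ 0) := by decide
  simp [Δ_apply, pderiv_X_of_ne h0]

lemma coeff_pderiv (i : Fin 2) (p : MvPolynomial (Fin 2) k) (σ : Fin 2 →₀ ℕ) :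
    coeff σ (pderiv i p) = (σ i + 1 : ℕ) * coeff (σ + Finsupp.single i 1) p := by
  induction p using MvPolynomial.induction_on' with
  | add p q hp hq => simp [hp, hq, mul_add]
  | monomial s a =>
    rw [pderiv_monomial, coeff_monomial, coeff_monomial]
    by_cases h : s = σ + Finsupp.single i 1
    · subst h
      rw [if_pos, if_pos rfl]
      · push_cast
        simp [mul_comm]
      · rw [add_tsub_cancel_right]
    · rw [if_neg h, mul_zero]
      rcases Nat.eq_zero_or_pos (s i) with h0 | h0
      · split_ifs <;> simp [h0]
      · rw [if_neg]
        intro heq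
        apply h
        rw [← heq, tsub_add_cancel_of_le]
        exact Finsupp.single_le_iff.mpr h0


lemma coeff_X_mul_eq (i : Fin 2) (r : MvPolynomial (Fin 2) k) (σ : Fin 2 →₀ ℕ) :
    coeff σ (X i * r) =
      if σ i ≠ 0 then coeff (σ - Finsupp.single i 1) r else 0 := by
  rw [coeff_X_mul']
  simp [Finsupp.mem_support_iff]

lemma sub_add_single (i : Fin 2) (σ : Fin 2 →₀ ℕ) (h : σ i ≠ 0) :
    σ - Finsupp.single i 1 + Finsupp.single i 1 = σ :=
  tsub_add_cancel_of_le (Finsupp.single_le_iff.mpr (Nat.one_le_iff_ne_zero.mpr h))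

lemma coeff_Δ (p : MvPolynomial (Fin 2) k) (σ : Fin 2 →₀ ℕ) :
    coeff σ (Δ k p) = (σ 0 + σ 1 : ℕ) * coeff σ p +
      (if σ 0 ≠ 0 then ((σ 1 + 1 : ℕ) : k) *
        coeff (σ - Finsupp.single 0 1 + Finsupp.single 1 1) p else 0) := by
  have e01 : ((0 : Fin 2) ≠ 1) := by decide
  rw [Δ_apply, add_mul]
  rw [coeff_add, coeff_add, coeff_X_mul_eq, coeff_X_mul_eq, coeff_X_mul_eq]
  have T1 : (if σ 0 ≠ 0 then coeff (σ - Finsupp.single 0 1) (pderiv 0 p) else 0)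
      = (σ 0 : k) * coeff σ p := by
    by_cases h : σ 0 = 0
    · simp [h]
    · rw [if_pos h, coeff_pderiv, sub_add_single 0 σ h]
      congr 1
      have : (σ - Finsupp.single (0:Fin 2) (1:ℕ)) (0:Fin 2) = σ 0 - 1 := by
        simp [Finsupp.tsub_apply]
      rw [this]
      have h1 : 1 ≤ σ 0 := Nat.one_le_iff_ne_zero.mpr h
      push_cast [Nat.sub_add_cancel h1]
      rfl
  have T2 : (if σ 1 ≠ 0 then coeff (σ - Finsupp.single 1 1) (pderiv 1 p) else 0)
      = (σ 1 : k) * coeff σ p := by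
    by_cases h : σ 1 = 0
    · simp [h]
    · rw [if_pos h, coeff_pderiv, sub_add_single 1 σ h]
      congr 1
      have : (σ - Finsupp.single (1:Fin 2) (1:ℕ)) (1:Fin 2) = σ 1 - 1 := by
        simp [Finsupp.tsub_apply]
      rw [this]
      have h1 : 1 ≤ σ 1 := Nat.one_le_iff_ne_zero.mpr h
      push_cast [Nat.sub_add_cancel h1]
      rfl
  have T3 : (if σ 0 ≠ 0 then coeff (σ - Finsupp.single 0 1) (pderiv 1 p) else 0)
      = (if σ 0 ≠ 0 then ((σ 1 + 1 : ℕ) : k) *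
          coeff (σ - Finsupp.single 0 1 + Finsupp.single 1 1) p else 0) := by
    by_cases h : σ 0 = 0
    · simp [h]
    · rw [if_pos h, if_pos h, coeff_pderiv]
      congr 2
      have : (σ - Finsupp.single (0:Fin 2) (1:ℕ)) (1:Fin 2) = σ 1 := by
        simp [Finsupp.tsub_apply, Finsupp.single_apply, e01.symm]
      rw [this]
  rw [T1, T2, T3]
  push_cast
  ring


lemma sum_fin2 (σ : Fin 2 →₀ ℕ) : (σ.sum fun _ e => e) = σ 0 + σ 1 := by
  rw [Finsupp.sum, Finset.sum_subset (Finset.subset_univ _)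
    (fun i _ hi => Finsupp.notMem_support_iff.mp hi), Fin.sum_univ_two]

lemma coeff_zero_of_deg_lt {p : MvPolynomial (Fin 2) k} {σ : Fin 2 →₀ ℕ}
    (h : p.totalDegree < σ 0 + σ 1) : coeff σ p = 0 := by
  apply coeff_eq_zero_of_totalDegree_lt
  rwa [show (∑ i ∈ σ.support, σ i) = σ 0 + σ 1 from sum_fin2 σ]

lemma totalDegree_Δ_le (p : MvPolynomial (Fin 2) k) :
    (Δ k p).totalDegree ≤ p.totalDegree := by
  rw [totalDegree]
  apply Finset.sup_le
  intro σ hσ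
  rw [mem_support_iff] at hσ
  rw [sum_fin2]
  by_contra hlt
  push_neg at hlt
  apply hσ
  rw [coeff_Δ, coeff_zero_of_deg_lt hlt, mul_zero, zero_add]
  by_cases h0 : σ 0 = 0
  · rw [if_neg (by simp [h0])]
  · rw [if_pos h0, coeff_zero_of_deg_lt, mul_zero]
    have e0 : (σ - Finsupp.single 0 1 + Finsupp.single 1 1 : Fin 2 →₀ ℕ) 0 = σ 0 - 1 := by
      simp [Finsupp.tsub_apply, Finsupp.single_apply]
    have e1 : (σ - Finsupp.single 0 1 + Finsupp.single 1 1 : Fin 2 →₀ ℕ) 1 = σ 1 + 1 := by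
      simp [Finsupp.tsub_apply, Finsupp.single_apply]
    rw [e0, e1]
    omega

lemma hc_ne_zero {p : MvPolynomial (Fin 2) k} (hp : p ≠ 0) :
    homogeneousComponent p.totalDegree p ≠ 0 := by
  obtain ⟨σ, hσmem, hσ⟩ := Finset.exists_mem_eq_sup p.support
    (support_nonempty.mpr hp) (fun s : Fin 2 →₀ ℕ => s.sum fun _ e => e)
  rw [mem_support_iff] at hσmem
  intro h0
  have := coeff_homogeneousComponent (n := p.totalDegree) (φ := p) σ
  rw [h0, coeff_zero, if_pos] at this
  · exact hσmem this.symm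
  · show Finsupp.degree σ = p.totalDegree
    rw [totalDegree, hσ]
    rfl

lemma hc_top_mul (p q : MvPolynomial (Fin 2) k) :
    homogeneousComponent (p.totalDegree + q.totalDegree) (p * q) =
      homogeneousComponent p.totalDegree p * homogeneousComponent q.totalDegree q := by
  set m := p.totalDegree
  set n := q.totalDegree
  conv_lhs => rw [← sum_homogeneousComponent p, ← sum_homogeneousComponent q,
    Finset.sum_mul_sum, map_sum]
  rw [Finset.sum_eq_single_of_mem m (Finset.self_mem_range_succ m)]
  · rw [map_sum, Finset.sum_eq_single_of_mem n (Finset.self_mem_range_succ n)]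
    · have e := homogeneousComponent_of_mem (m := m + n)
        ((mem_homogeneousSubmodule _ _).mpr
          ((homogeneousComponent_isHomogeneous m p).mul
            (homogeneousComponent_isHomogeneous n q)))
      rw [e, if_pos rfl]
    · intro j hj hjn
      have e := homogeneousComponent_of_mem (m := m + n)
        ((mem_homogeneousSubmodule _ _).mpr
          ((homogeneousComponent_isHomogeneous m p).mul
            (homogeneousComponent_isHomogeneous j q)))
      rw [e, if_neg (by omega)]
  · intro i hi him
    rw [map_sum]
    apply Finset.sum_eq_zero
    intro j hj
    rw [Finset.mem_range] at hi hj
    have e := homogeneousComponent_of_mem (m := m + n)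
      ((mem_homogeneousSubmodule _ _).mpr
        ((homogeneousComponent_isHomogeneous i p).mul
          (homogeneousComponent_isHomogeneous j q)))
    rw [e, if_neg (by omega)]

lemma le_totalDegree_mul {p q : MvPolynomial (Fin 2) k} (hp : p ≠ 0) (hq : q ≠ 0) :
    p.totalDegree + q.totalDegree ≤ (p * q).totalDegree := by
  by_contra h
  push_neg at h
  have h0 : homogeneousComponent (p.totalDegree + q.totalDegree) (p * q) = 0 :=
    homogeneousComponent_eq_zero _ _ h
  rw [hc_top_mul] at h0
  exact mul_ne_zero (hc_ne_zero hp) (hc_ne_zero hq) h0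

lemma eq_C_of_totalDegree_zero {p : MvPolynomial (Fin 2) k} (h : p.totalDegree = 0) :
    p = C (coeff 0 p) := by
  ext σ
  rw [coeff_C]
  by_cases hσ : (0 : Fin 2 →₀ ℕ) = σ
  · rw [if_pos hσ, hσ]
  · rw [if_neg hσ]
    apply coeff_zero_of_deg_lt
    rw [h]
    by_contra hlt
    apply hσ
    ext i
    fin_cases i <;> simp <;> omega


variable [CharZero k]


lemma eigen (c : k) (p : MvPolynomial (Fin 2) k) (hp : Δ k p = C c * p) :
    ∃ (a : k) (n : ℕ), p = C a * X 0 ^ n ∧ (p ≠ 0 → c = n) := by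
  have hrec : ∀ σ : Fin 2 →₀ ℕ, c * coeff σ p = (σ 0 + σ 1 : ℕ) * coeff σ p +
      (if σ 0 ≠ 0 then ((σ 1 + 1 : ℕ) : k) *
        coeff (σ - Finsupp.single 0 1 + Finsupp.single 1 1) p else 0) := by
    intro σ
    rw [← coeff_Δ, hp, coeff_C_mul]
  -- values of the shifted index
  have shift0 : ∀ σ : Fin 2 →₀ ℕ, σ 0 ≠ 0 →
      (σ - Finsupp.single 0 1 + Finsupp.single 1 1 : Fin 2 →₀ ℕ) 0 = σ 0 - 1 := by
    intro σ h
    simp [Finsupp.tsub_apply, Finsupp.single_apply]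
  have shift1 : ∀ σ : Fin 2 →₀ ℕ, σ 0 ≠ 0 →
      (σ - Finsupp.single 0 1 + Finsupp.single 1 1 : Fin 2 →₀ ℕ) 1 = σ 1 + 1 := by
    intro σ h
    simp [Finsupp.tsub_apply, Finsupp.single_apply]
  have A : ∀ (n : ℕ) (σ : Fin 2 →₀ ℕ), σ 0 = n → c ≠ (σ 0 + σ 1 : ℕ) → coeff σ p = 0 := by
    intro n
    induction n with
    | zero =>
      intro σ h0 hne
      have h := hrec σ
      rw [if_neg (by simp [h0])] at h
      have h2 : (c - (σ 0 + σ 1 : ℕ)) * coeff σ p = 0 := by linear_combination h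
      rcases mul_eq_zero.mp h2 with h3 | h3
      · exact absurd (sub_eq_zero.mp h3) hne
      · exact h3
    | succ n ih =>
      intro σ h0 hne
      have h0' : σ 0 ≠ 0 := by omega
      set σ' := σ - Finsupp.single 0 1 + Finsupp.single 1 1 with hσ'
      have hs0 : σ' 0 = n := by rw [hσ', shift0 σ h0']; omega
      have hsum : σ' 0 + σ' 1 = σ 0 + σ 1 := by
        rw [hσ', shift0 σ h0', shift1 σ h0']; omega
      have hz : coeff σ' p = 0 := ih σ' hs0 (by rw [hsum]; exact hne)
      have h := hrec σ
      rw [if_pos h0', hz, mul_zero, add_zero] at h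
      have h2 : (c - (σ 0 + σ 1 : ℕ)) * coeff σ p = 0 := by linear_combination h
      rcases mul_eq_zero.mp h2 with h3 | h3
      · exact absurd (sub_eq_zero.mp h3) hne
      · exact h3
  by_cases hp0 : p = 0
  · exact ⟨0, 0, by simp [hp0], fun h => absurd hp0 h⟩
  obtain ⟨σ₀, hσ₀⟩ := MvPolynomial.ne_zero_iff.mp hp0
  have hc : c = (σ₀ 0 + σ₀ 1 : ℕ) := by
    by_contra h
    exact hσ₀ (A (σ₀ 0) σ₀ rfl h)
  set n := σ₀ 0 + σ₀ 1 with hn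
  have B : ∀ σ : Fin 2 →₀ ℕ, σ 0 + σ 1 = n → σ 1 ≠ 0 → coeff σ p = 0 := by
    intro σ hsum h1
    set τ := σ + Finsupp.single 0 1 - Finsupp.single 1 1 with hτ
    have hτ0 : τ 0 = σ 0 + 1 := by
      rw [hτ]; simp [Finsupp.tsub_apply, Finsupp.single_apply]
    have hτ1 : τ 1 = σ 1 - 1 := by
      rw [hτ]; simp [Finsupp.tsub_apply, Finsupp.single_apply]
    have hτσ : τ - Finsupp.single 0 1 + Finsupp.single 1 1 = σ := by
      ext i
      fin_cases i
      · simp [hτ, Finsupp.tsub_apply, Finsupp.single_apply]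
      · simp [hτ, Finsupp.tsub_apply, Finsupp.single_apply]; omega
    have h := hrec τ
    rw [if_pos (by omega : τ 0 ≠ 0), hτσ] at h
    have hce : c = (τ 0 + τ 1 : ℕ) := by
      rw [hc]; congr 1; omega
    rw [← hce] at h
    have h2 : ((τ 1 + 1 : ℕ) : k) * coeff σ p = 0 := by linear_combination -h
    rcases mul_eq_zero.mp h2 with h3 | h3
    · exfalso
      have : τ 1 + 1 = σ 1 := by omega
      rw [this] at h3
      exact h1 (Nat.cast_eq_zero.mp h3)
    · exact h3
  refine ⟨coeff (Finsupp.single 0 n) p, n, ?_, fun _ => hc⟩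
  rw [C_mul_X_pow_eq_monomial]
  ext σ
  rw [coeff_monomial]
  by_cases hσ : Finsupp.single 0 n = σ
  · rw [if_pos hσ, hσ]
  · rw [if_neg hσ]
    by_cases hsum : σ 0 + σ 1 = n
    · by_cases h1 : σ 1 = 0
      · exfalso
        apply hσ
        ext i
        fin_cases i
        · simp [Finsupp.single_apply]; omega
        · simp [Finsupp.single_apply]; omega
      · exact B σ hsum h1
    · refine A (σ 0) σ rfl ?_
      rw [hc]
      exact fun h => hsum (Nat.cast_injective h).symm

omit [CharZero k] in
lemma not_isUnit_X0 : ¬ IsUnit (X 0 : MvPolynomial (Fin 2) k) := by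
  intro hu
  have := hu.map (eval (fun _ => (0 : k)))
  simp only [eval_X] at this
  exact not_isUnit_zero this

end KernelDelta

open KernelDelta

set_option maxHeartbeats 2000000 in
/-- Let `k` be a field of characteristic zero. The kernel of the
`k`-derivation `Δ = y∂_y + (y+z)∂_z` of the rational function field `k(y,z)` (i.e. the
derivation with `Δ(y) = y` and `Δ(z) = y + z`) is equal to `k`. -/
theorem kernel_Delta_charZero (k : Type*) [Field k] [CharZero k]
    (d : Derivation k (FractionRing (MvPolynomial (Fin 2) k))
      (FractionRing (MvPolynomial (Fin 2) k)))
    (hy : d (algebraMap (MvPolynomial (Fin 2) k) _ (MvPolynomial.X 0)) =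
      algebraMap (MvPolynomial (Fin 2) k) _ (MvPolynomial.X 0))
    (hz : d (algebraMap (MvPolynomial (Fin 2) k) _ (MvPolynomial.X 1)) =
      algebraMap (MvPolynomial (Fin 2) k) _ (MvPolynomial.X 0) +
        algebraMap (MvPolynomial (Fin 2) k) _ (MvPolynomial.X 1)) :
    ∀ f : FractionRing (MvPolynomial (Fin 2) k),
      d f = 0 ↔ f ∈ Set.range (algebraMap k (FractionRing (MvPolynomial (Fin 2) k))) := by
  set A := MvPolynomial (Fin 2) k
  set F := FractionRing A
  set ι := algebraMap A F with hι
  -- the key identity : d ∘ algebraMap = algebraMap ∘ Δ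
  have hkey : ∀ r : A, d (ι r) = ι (Δ k r) := by
    have hext : d.compAlgebraMap (R := k) A = (Algebra.linearMap A F).compDer (Δ k) := by
      apply MvPolynomial.derivation_ext
      intro i
      fin_cases i
      · show d (ι (X 0)) = ι (Δ k (X 0))
        rw [Δ_X0]; exact hy
      · show d (ι (X 1)) = ι (Δ k (X 1))
        rw [Δ_X1, RingHom.map_add]; exact hz
    intro r
    exact DFunLike.congr_fun hext r
  intro f
  constructor
  · intro hdf
    set p := IsFractionRing.num A f with hp
    set q := IsFractionRing.den A f with hq
    have hq0 : (q : A) ≠ 0 := nonZeroDivisors.coe_ne_zero q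
    have hrel : IsRelPrime p (q : A) := IsFractionRing.num_den_reduced A f
    have hf : f * ι q = ι p := IsFractionRing.num_mul_den_eq_num_iff_eq.mpr rfl
    -- apply d
    have hd1 : ι (Δ k p) = f * ι (Δ k (q : A)) := by
      have h3 := congrArg d hf
      rw [Derivation.leibniz, hdf, smul_zero, add_zero, hkey, hkey, smul_eq_mul] at h3
      exact h3.symm
    have heq : Δ k p * q = p * Δ k (q : A) := by
      apply IsFractionRing.injective A F
      rw [RingHom.map_mul, RingHom.map_mul]
      rw [hd1, ← hf]
      ring
    by_cases hp0 : p = 0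
    · refine ⟨0, ?_⟩
      rw [map_zero]
      have : f = 0 := by
        have := hf
        rw [hp0, map_zero] at this
        have hιq : ι (q : A) ≠ 0 :=
          IsFractionRing.to_map_ne_zero_of_mem_nonZeroDivisors q.2
        exact (mul_eq_zero.mp this).resolve_right hιq
      exact this.symm
    -- p ∣ Δ p and q ∣ Δ q
    obtain ⟨lam, hlam⟩ : p ∣ Δ k p :=
      hrel.dvd_of_dvd_mul_right ⟨Δ k (q : A), heq⟩
    obtain ⟨mu, hmu⟩ : (q : A) ∣ Δ k (q : A) :=
      hrel.symm.dvd_of_dvd_mul_right ⟨Δ k p, by linear_combination -heq⟩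
    have hlammu : lam = mu := by
      have h2 : (p * (q:A)) * lam = (p * (q:A)) * mu := by
        rw [hlam, hmu] at heq
        linear_combination heq
      exact mul_left_cancel₀ (mul_ne_zero hp0 hq0) h2
    -- lam is a constant
    set c := coeff 0 lam with hc
    have hlamC : lam = C c := by
      by_cases hl0 : lam = 0
      · rw [hl0, hc, hl0, coeff_zero, map_zero]
      · apply eq_C_of_totalDegree_zero
        have h1 : (p * lam).totalDegree ≤ p.totalDegree := by
          rw [← hlam]; exact totalDegree_Δ_le p
        have h2 : p.totalDegree + lam.totalDegree ≤ (p * lam).totalDegree :=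
          le_totalDegree_mul hp0 hl0
        omega
    obtain ⟨a, n, hpn, hcn⟩ := eigen c p (by rw [hlam, hlamC]; ring)
    obtain ⟨b, m, hqm, hcm⟩ := eigen c (q : A) (by rw [hmu, ← hlammu, hlamC]; ring)
    have hnm : n = m := by
      have h1 := hcn hp0
      have h2 := hcm hq0
      exact_mod_cast h1 ▸ h2
    have hn0 : n = 0 := by
      by_contra hn
      apply not_isUnit_X0 (k := k)
      refine hrel ?_ ?_
      · rw [hpn]
        exact Dvd.dvd.mul_left (dvd_pow_self _ hn) _
      · rw [hqm, ← hnm]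
        exact Dvd.dvd.mul_left (dvd_pow_self _ hn) _
    rw [hn0] at hpn
    rw [← hnm, hn0] at hqm
    have hb0 : b ≠ 0 := by
      intro h
      apply hq0
      rw [hqm, h]
      simp
    refine ⟨a / b, ?_⟩
    have hCa : ι p = algebraMap k F a := by
      rw [hpn]
      simp only [pow_zero, mul_one]
      rw [IsScalarTower.algebraMap_apply k A F, MvPolynomial.algebraMap_eq]
    have hCb : ι (q : A) = algebraMap k F b := by
      rw [hqm]
      simp only [pow_zero, mul_one]
      rw [IsScalarTower.algebraMap_apply k A F, MvPolynomial.algebraMap_eq]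
    rw [map_div₀, ← hCa, ← hCb]
    rw [hι, IsFractionRing.mk'_num_den']
  · rintro ⟨a, rfl⟩
    exact d.map_algebraMap a
end

section
/- Let k be a field of characteristic ℓ > 0. The kernel of the k-derivation Δ = y∂_y + (y+z)∂_z of k(y,z) is equal to k(y^ℓ, z^ℓ). -/
set_option maxHeartbeats 1000000
set_option synthInstance.maxHeartbeats 400000

open MvPolynomial

theorem my_coeff_pderiv {σ R : Type*} [CommSemiring R]
    (i : σ) (m : σ →₀ ℕ) (f : MvPolynomial σ R) :
    coeff m (pderiv i f) = ((m i + 1 : ℕ) : R) * coeff (m + Finsupp.single i 1) f := by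
  classical
  induction f using MvPolynomial.induction_on' with
  | monomial s a =>
    rw [pderiv_monomial, coeff_monomial, coeff_monomial]
    by_cases h : s = m + Finsupp.single i 1
    · subst h
      rw [if_pos (add_tsub_cancel_right _ _), if_pos rfl]
      simp [mul_comm]
    · rw [if_neg h, mul_zero]
      by_cases hs : Finsupp.single i 1 ≤ s
      · rw [if_neg]
        intro hm
        exact h (by rw [← hm, tsub_add_cancel_of_le hs])
      · have h0 : s i = 0 := by
          by_contra h0
          exact hs (Finsupp.single_le_iff.mpr (Nat.one_le_iff_ne_zero.mpr h0))
        split_ifs <;> simp [h0]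
  | add p q hp hq => simp [hp, hq, mul_add]

theorem fin2_eq_single_add (m : Fin 2 →₀ ℕ) :
    m = Finsupp.single 0 (m 0) + Finsupp.single 1 (m 1) := by
  ext x
  fin_cases x <;> simp [Finsupp.single_apply]

theorem exponents_dvd {k : Type*} [Field k] {ℓ : ℕ} (hp : ℓ.Prime) [CharP k ℓ]
    {G : MvPolynomial (Fin 2) k}
    (hG : X 0 * pderiv 0 G + (X 0 + X 1) * pderiv 1 G = 0) :
    ∀ m ∈ G.support, ℓ ∣ m 0 ∧ ℓ ∣ m 1 := by
  classical
  set M : ℕ → ℕ → (Fin 2 →₀ ℕ) := fun a b => Finsupp.single 0 a + Finsupp.single 1 b with hM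
  set c : ℕ → ℕ → k := fun a b => coeff (M a b) G with hc
  have hM0 : ∀ a b, M a b 0 = a := by intro a b; simp [hM, Finsupp.single_apply]
  have hM1 : ∀ a b, M a b 1 = b := by intro a b; simp [hM, Finsupp.single_apply]
  have hMadd0 : ∀ a b, M (a+1) b = Finsupp.single 0 1 + M a b := by
    intro a b; simp only [hM, Finsupp.single_add]; abel
  have hMadd1 : ∀ a b, M a (b+1) = Finsupp.single 1 1 + M a b := by
    intro a b; simp only [hM, Finsupp.single_add]; abel
  have cP0 : ∀ a b, coeff (M a b) (pderiv 0 G) = ((a+1 : ℕ) : k) * c (a+1) b := by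
    intro a b
    have h : M a b + Finsupp.single 0 1 = M (a+1) b := by rw [hMadd0]; abel
    rw [my_coeff_pderiv, hM0, h]
  have cP1 : ∀ a b, coeff (M a b) (pderiv 1 G) = ((b+1 : ℕ) : k) * c a (b+1) := by
    intro a b
    have h : M a b + Finsupp.single 1 1 = M a (b+1) := by rw [hMadd1]; abel
    rw [my_coeff_pderiv, hM1, h]
  have eqat : ∀ m : Fin 2 →₀ ℕ,
      coeff m (X 0 * pderiv 0 G) + (coeff m (X 0 * pderiv 1 G)
        + coeff m (X 1 * pderiv 1 G)) = 0 := by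
    intro m
    have := congrArg (coeff m) hG
    simpa [add_mul, coeff_add, add_assoc] using this
  have cX0zero : ∀ (q : MvPolynomial (Fin 2) k) b, coeff (M 0 b) (X 0 * q) = 0 := by
    intro q b
    rw [coeff_X_mul', if_neg]
    simp [Finsupp.mem_support_iff, hM0]
  have cX1zero : ∀ (q : MvPolynomial (Fin 2) k) a, coeff (M a 0) (X 1 * q) = 0 := by
    intro q a
    rw [coeff_X_mul', if_neg]
    simp [Finsupp.mem_support_iff, hM1]
  have e0 : ∀ b : ℕ, ((b+1 : ℕ) : k) * c 0 (b+1) = 0 := by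
    intro b
    have h := eqat (M 0 (b+1))
    rw [cX0zero, cX0zero, hMadd1, coeff_X_mul, cP1] at h
    simpa using h
  have e1 : ∀ a b : ℕ, ((a+1+b : ℕ) : k) * c (a+1) b + ((b+1 : ℕ) : k) * c a (b+1) = 0 := by
    intro a b
    have h := eqat (M (a+1) b)
    rw [hMadd0 a b, coeff_X_mul, coeff_X_mul, ← hMadd0 a b, cP0, cP1] at h
    rcases b with _ | b'
    · rw [cX1zero] at h
      push_cast at h ⊢
      linear_combination h
    · rw [hMadd1 (a+1) b', coeff_X_mul, cP1] at h
      push_cast at h ⊢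
      linear_combination h
  have vanish : ∀ a b : ℕ, ¬ (ℓ ∣ a + b) → c a b = 0 := by
    intro a
    induction a with
    | zero =>
      intro b hb
      obtain ⟨b', rfl⟩ : ∃ b', b = b' + 1 := by
        rcases b with _ | b'
        · exact absurd (dvd_zero ℓ) hb
        · exact ⟨b', rfl⟩
      rcases mul_eq_zero.mp (e0 b') with h | h
      · exact absurd ((CharP.cast_eq_zero_iff k ℓ _).mp h) (by simpa using hb)
      · exact h
    | succ a ih =>
      intro b hb
      have h2 : c a (b+1) = 0 := ih (b+1) (by
        rw [show a + (b+1) = a + 1 + b from by omega]; exact hb)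
      have h1 := e1 a b
      rw [h2, mul_zero, add_zero] at h1
      rcases mul_eq_zero.mp h1 with h | h
      · exact absurd ((CharP.cast_eq_zero_iff k ℓ _).mp h) hb
      · exact h
  have main : ∀ a b, c a b ≠ 0 → ℓ ∣ a ∧ ℓ ∣ b := by
    intro a b hcne
    have hdvd : ℓ ∣ a + b := by
      by_contra hcon; exact hcne (vanish a b hcon)
    have hb : ℓ ∣ b := by
      rcases b with _ | b'
      · exact dvd_zero ℓ
      · have h1 := e1 a b'
        have hz0 : ((a + 1 + b' : ℕ) : k) = 0 := by
          rw [CharP.cast_eq_zero_iff k ℓ, show a + 1 + b' = a + (b'+1) from by omega]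
          exact hdvd
        rw [hz0, zero_mul, zero_add] at h1
        rcases mul_eq_zero.mp h1 with h | h
        · exact (CharP.cast_eq_zero_iff k ℓ _).mp h
        · exact absurd h hcne
    exact ⟨by simpa using Nat.dvd_sub hdvd hb, hb⟩
  intro m hm
  exact main (m 0) (m 1) (by
    simp only [hc, hM]
    rw [← fin2_eq_single_add m]
    exact mem_support_iff.mp hm)

theorem monomial_eq_fin2 {R : Type*} [CommSemiring R] (m : Fin 2 →₀ ℕ) (r : R) :
    monomial m r = C r * (X 0 ^ (m 0) * X 1 ^ (m 1)) := by
  conv_lhs => rw [fin2_eq_single_add m]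
  rw [monomial_single_add, show (Finsupp.single 1 (m 1) : Fin 2 →₀ ℕ)
      = Finsupp.single 1 (m 1) + 0 from (add_zero _).symm,
    monomial_single_add, monomial_zero']
  ring

/-- Let `k` be a field of characteristic `ℓ > 0`. The kernel of the
`k`-derivation `Δ = y∂_y + (y+z)∂_z` of `k(y,z)` (the derivation with `Δ(y) = y`,
`Δ(z) = y + z`) is equal to `k(y^ℓ, z^ℓ)`. -/
theorem kernel_Delta_charP (k : Type*) [Field k] (ℓ : ℕ) (hℓ : ℓ ≠ 0) [CharP k ℓ]
    (d : Derivation k (FractionRing (MvPolynomial (Fin 2) k))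
      (FractionRing (MvPolynomial (Fin 2) k)))
    (hy : d (algebraMap (MvPolynomial (Fin 2) k) _ (MvPolynomial.X 0)) =
      algebraMap (MvPolynomial (Fin 2) k) _ (MvPolynomial.X 0))
    (hz : d (algebraMap (MvPolynomial (Fin 2) k) _ (MvPolynomial.X 1)) =
      algebraMap (MvPolynomial (Fin 2) k) _ (MvPolynomial.X 0) +
        algebraMap (MvPolynomial (Fin 2) k) _ (MvPolynomial.X 1)) :
    ∀ f : FractionRing (MvPolynomial (Fin 2) k),
      d f = 0 ↔ f ∈ Subfield.closure
        (Set.range (algebraMap k (FractionRing (MvPolynomial (Fin 2) k))) ∪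
          {(algebraMap (MvPolynomial (Fin 2) k) (FractionRing (MvPolynomial (Fin 2) k))
              (MvPolynomial.X 0)) ^ ℓ,
           (algebraMap (MvPolynomial (Fin 2) k) (FractionRing (MvPolynomial (Fin 2) k))
              (MvPolynomial.X 1)) ^ ℓ}) := by
  intro f
  have hprime : ℓ.Prime := (CharP.char_is_prime_or_zero k ℓ).resolve_right hℓ
  haveI : Fact ℓ.Prime := ⟨hprime⟩
  haveI hcharL : CharP (FractionRing (MvPolynomial (Fin 2) k)) ℓ :=
    charP_of_injective_algebraMap (algebraMap k _).injective ℓ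
  set φ := algebraMap (MvPolynomial (Fin 2) k) (FractionRing (MvPolynomial (Fin 2) k)) with hφ
  set S : Set (FractionRing (MvPolynomial (Fin 2) k)) :=
    Set.range (algebraMap k (FractionRing (MvPolynomial (Fin 2) k))) ∪
      {φ (X 0) ^ ℓ, φ (X 1) ^ ℓ} with hSdef
  -- the algebra map sends `C a` to the image of `a`
  have hCmap : ∀ a : k, φ (C a) = algebraMap k (FractionRing (MvPolynomial (Fin 2) k)) a := by
    intro a
    rw [hφ, show (C a : MvPolynomial (Fin 2) k) = algebraMap k _ a from rfl,
      ← IsScalarTower.algebraMap_apply]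
  have hkmem : ∀ a : k, algebraMap k (FractionRing (MvPolynomial (Fin 2) k)) a
      ∈ Subfield.closure S := fun a =>
    Subfield.subset_closure (Set.mem_union_left _ ⟨a, rfl⟩)
  have hymem : φ (X 0) ^ ℓ ∈ Subfield.closure S :=
    Subfield.subset_closure (Set.mem_union_right _ (Set.mem_insert _ _))
  have hzmem : φ (X 1) ^ ℓ ∈ Subfield.closure S :=
    Subfield.subset_closure (Set.mem_union_right _ (Set.mem_insert_of_mem _ rfl))
  -- Key 1 : the derivation computed on polynomials
  have key1 : ∀ G : MvPolynomial (Fin 2) k,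
      d (φ G) = φ (X 0 * pderiv 0 G + (X 0 + X 1) * pderiv 1 G) := by
    intro G
    induction G using MvPolynomial.induction_on with
    | C a =>
      rw [hCmap, Derivation.map_algebraMap]
      simp [pderiv_C]
    | add p q hp hq =>
      rw [map_add, map_add, hp, hq, ← map_add]
      congr 1
      simp only [map_add]
      ring
    | mul_X p i hp =>
      rw [map_mul, Derivation.leibniz, hp, smul_eq_mul, smul_eq_mul]
      rcases (show i = 0 ∨ i = 1 by revert i; decide) with rfl | rfl
      · rw [hy, ← map_mul, ← map_mul, ← map_add]
        congr 1
        simp only [pderiv_mul, pderiv_X_self, pderiv_X_of_ne (show (1 : Fin 2) ≠ 0 by decide),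
          pderiv_X_of_ne (show (0 : Fin 2) ≠ 1 by decide)]
        ring
      · rw [hz, ← map_add, ← map_mul, ← map_mul, ← map_add]
        congr 1
        simp only [pderiv_mul, pderiv_X_self, pderiv_X_of_ne (show (1 : Fin 2) ≠ 0 by decide),
          pderiv_X_of_ne (show (0 : Fin 2) ≠ 1 by decide)]
        ring
  -- Key 3 : polynomials with all exponents divisible by ℓ land in the closure
  have key3 : ∀ G : MvPolynomial (Fin 2) k, (∀ m ∈ G.support, ℓ ∣ m 0 ∧ ℓ ∣ m 1) →
      φ G ∈ Subfield.closure S := by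
    intro G hGexp
    rw [G.as_sum, map_sum]
    refine sum_mem fun m hm => ?_
    obtain ⟨⟨u, hu⟩, ⟨v, hv⟩⟩ := hGexp m hm
    rw [monomial_eq_fin2, map_mul, map_mul, map_pow, map_pow, hu, hv, pow_mul, pow_mul, hCmap]
    exact mul_mem (hkmem _) (mul_mem (pow_mem hymem u) (pow_mem hzmem v))
  -- Key 4 : ℓ-th powers of polynomials land in the closure
  have key4 : ∀ h : MvPolynomial (Fin 2) k, (φ h) ^ ℓ ∈ Subfield.closure S := by
    intro h
    induction h using MvPolynomial.induction_on with
    | C a =>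
      rw [hCmap]
      exact pow_mem (hkmem a) ℓ
    | add p q hp hq =>
      rw [map_add, add_pow_char]
      exact add_mem hp hq
    | mul_X p i hp =>
      rw [map_mul, mul_pow]
      refine mul_mem hp ?_
      rcases (show i = 0 ∨ i = 1 by revert i; decide) with rfl | rfl
      · exact hymem
      · exact hzmem
  -- Easy direction : everything in the closure is killed by d
  have hker : ∀ x ∈ Subfield.closure S, d x = 0 := by
    intro x hx
    induction hx using Subfield.closure_induction with
    | mem x hx =>
      rcases hx with ⟨a, rfl⟩ | hx
      · exact d.map_algebraMap a
      · rcases hx with rfl | rfl <;>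
          · rw [Derivation.leibniz_pow]
            simp [nsmul_eq_mul, CharP.cast_eq_zero]
    | one => simp
    | add x y _ _ hx hy => rw [map_add, hx, hy, add_zero]
    | neg x _ hx => rw [map_neg, hx, neg_zero]
    | inv x _ hx => rw [Derivation.leibniz_inv, hx, smul_zero]
    | mul x y _ _ hx hy => rw [Derivation.leibniz, hx, hy, smul_zero, smul_zero, add_zero]
  constructor
  · intro hf
    obtain ⟨g, h, hh, hfe⟩ := IsFractionRing.div_surjective (A := MvPolynomial (Fin 2) k) f
    have hhne : φ h ≠ 0 := IsFractionRing.to_map_ne_zero_of_mem_nonZeroDivisors hh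
    have hfG : φ (g * h ^ (ℓ - 1)) = f * (φ h) ^ ℓ := by
      rw [map_mul, map_pow, ← hfe, div_mul_eq_mul_div, eq_div_iff hhne, mul_assoc, ← pow_succ,
        Nat.sub_add_cancel hprime.one_le]
    have hdG : d (φ (g * h ^ (ℓ - 1))) = 0 := by
      rw [hfG, Derivation.leibniz, hf, Derivation.leibniz_pow]
      simp [nsmul_eq_mul, CharP.cast_eq_zero]
    have hpoly : X 0 * pderiv 0 (g * h ^ (ℓ - 1)) + (X 0 + X 1) * pderiv 1 (g * h ^ (ℓ - 1))
        = 0 := by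
      apply IsFractionRing.injective (MvPolynomial (Fin 2) k)
        (FractionRing (MvPolynomial (Fin 2) k))
      rw [map_zero, ← key1]
      exact hdG
    have h1 : φ (g * h ^ (ℓ - 1)) ∈ Subfield.closure S := key3 _ (exponents_dvd hprime hpoly)
    have h2 : (φ h) ^ ℓ ∈ Subfield.closure S := key4 h
    have hfeq : f = φ (g * h ^ (ℓ - 1)) / (φ h) ^ ℓ := by
      rw [hfG, mul_div_assoc, div_self (pow_ne_zero _ hhne), mul_one]
    rw [hfeq]
    exact div_mem h1 h2
  · intro hf
    exact hker f hf
end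

section
/- Let k be a field of characteristic ℓ > 0 and U(𝔮) the k-algebra generated by x, y, t with relations yt = ty, xy − yx = y, xt − tx = 1. Then (x^ℓ − x)y = y(x^ℓ − x) and (x^ℓ − x)t = t(x^ℓ − x) − 1; consequently (x^ℓ − x)^ℓ commutes with x, y and t. -/
section aux

variable {A : Type*} [Ring A]

lemma pow_mul_of_comm_aux (a b c : A) (hab : a * b = b * a + c) (hc : c * a = a * c) :
    ∀ n : ℕ, a ^ (n + 1) * b = b * a ^ (n + 1) + (n + 1 : ℕ) • (c * a ^ n) := by
  intro n
  induction n with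
  | zero => simpa using hab
  | succ n ih =>
    have h1 : a * (c * a ^ n) = c * a ^ (n + 1) := by
      rw [← mul_assoc, ← hc, mul_assoc, ← pow_succ']
    rw [pow_succ' a (n + 1), mul_assoc, ih, mul_add, ← mul_assoc a b, hab,
      nsmul_eq_mul, nsmul_eq_mul, ← mul_assoc a, ← (Nat.cast_commute (n + 1) a).eq,
      mul_assoc, h1, add_mul, mul_assoc b a, ← pow_succ']
    push_cast
    rw [add_mul ((n : A) + 1) 1, one_mul]
    abel

end aux

/-- Let `k` be a field of characteristic `ℓ > 0` and `U(𝔮)` the `k`-algebra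
generated by `x, y, t` with relations `yt = ty`, `xy − yx = y`, `xt − tx = 1`. Then
`(x^ℓ − x)y = y(x^ℓ − x)` and `(x^ℓ − x)t = t(x^ℓ − x) − 1`; consequently `(x^ℓ − x)^ℓ`
commutes with `x`, `y` and `t`. -/
theorem xl_q_commutes (k : Type*) [Field k] (ℓ : ℕ) (hℓ : ℓ.Prime) [CharP k ℓ]
    (A : Type*) [Ring A] [Algebra k A] (x y t : A)
    (hyt : y * t = t * y) (hxy : x * y - y * x = y) (hxt : x * t - t * x = 1) :
    (x ^ ℓ - x) * y = y * (x ^ ℓ - x) ∧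
    (x ^ ℓ - x) * t = t * (x ^ ℓ - x) - 1 ∧
    (x ^ ℓ - x) ^ ℓ * x = x * (x ^ ℓ - x) ^ ℓ ∧
    (x ^ ℓ - x) ^ ℓ * y = y * (x ^ ℓ - x) ^ ℓ ∧
    (x ^ ℓ - x) ^ ℓ * t = t * (x ^ ℓ - x) ^ ℓ := by
  have hℓA : (ℓ : A) = 0 := by
    have h : ((ℓ : ℕ) : A) = algebraMap k A ((ℓ : ℕ) : k) := (map_natCast _ ℓ).symm
    rw [h, CharP.cast_eq_zero k ℓ, map_zero]
  obtain ⟨m, hm⟩ : ∃ m, ℓ = m + 1 := ⟨ℓ - 1, (Nat.succ_pred_eq_of_pos hℓ.pos).symm⟩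
  have hxt' : x * t = t * x + 1 := (sub_eq_iff_eq_add.mp hxt).trans (add_comm _ _)
  have hxy' : x * y = y * x + y := (sub_eq_iff_eq_add.mp hxy).trans (add_comm _ _)
  -- x^ℓ commutes with t
  have hxlt : x ^ ℓ * t = t * x ^ ℓ := by
    have := pow_mul_of_comm_aux x t 1 hxt' (by simp) m
    rw [← hm] at this
    rw [this, nsmul_eq_mul, hℓA, zero_mul, add_zero]
  -- x^n * y = y * (x+1)^n
  have hy : ∀ n : ℕ, x ^ n * y = y * (x + 1) ^ n := by
    intro n
    induction n with
    | zero => simp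
    | succ n ih =>
      rw [pow_succ' x n, mul_assoc, ih, ← mul_assoc, hxy']
      have : y * x + y = y * (x + 1) := by rw [mul_add, mul_one]
      rw [this, mul_assoc, ← pow_succ']
  have hfrob : (x + 1 : A) ^ ℓ = x ^ ℓ + 1 := by
    obtain ⟨r, hr⟩ := (Commute.one_right x).exists_add_pow_prime_eq hℓ
    rw [hr, one_pow, hℓA, zero_mul, zero_mul, zero_mul, add_zero]
  have hxly : x ^ ℓ * y = y * x ^ ℓ + y := by
    rw [hy ℓ, hfrob, mul_add, mul_one]
  have p1 : (x ^ ℓ - x) * y = y * (x ^ ℓ - x) := by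
    rw [sub_mul, mul_sub, hxly, hxy']; abel
  have p2 : (x ^ ℓ - x) * t = t * (x ^ ℓ - x) - 1 := by
    rw [sub_mul, mul_sub, hxlt, hxt']; abel
  set z := x ^ ℓ - x with hz
  have hzx : Commute x z := ((Commute.refl x).pow_right ℓ).sub_right (Commute.refl x)
  have p3 : z ^ ℓ * x = x * z ^ ℓ := (hzx.pow_right ℓ).eq.symm
  have hzy : Commute z y := p1
  have p4 : z ^ ℓ * y = y * z ^ ℓ := (hzy.pow_left ℓ).eq
  have hzt : z * t = t * z + (-1) := by rw [p2, sub_eq_add_neg]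
  have p5 : z ^ ℓ * t = t * z ^ ℓ := by
    have := pow_mul_of_comm_aux z t (-1) hzt (by simp) m
    rw [← hm] at this
    rw [this, nsmul_eq_mul, hℓA, zero_mul, add_zero]
  exact ⟨p1, p2, p3, p4, p5⟩
end

section
/- Let k be a field, α ∈ k \ k₀ where k₀ is the prime subfield, and M = (n q; m r) an integer matrix whose determinant is nonzero in k. Set β = (nα + q)/(mα + r). Then y^r z^m and y^q z^n are algebraically independent over k in k(y,z), and the assignment x' ↦ (mα+r)^{-1} x, y' ↦ y^r z^m, z' ↦ y^q z^n preserves the Lie-bracket relations: [x', y'] = y', [x', z'] = βz', [y', z'] = 0 hold for the images in the fraction skewfield K(𝔤_α) = k(y,z)(x; D_α). -/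
/-!
(a) With `Y' = Y ^ r * Z ^ m`, `Z' = Y ^ q * Z ^ n` and `d = n * r - q * m`, both
`Y ^ d = Y' ^ n * Z' ^ (-m)` and `Z ^ d = Y' ^ (-q) * Z' ^ r` are Laurent monomials in `Y', Z'`.
Hence `Y` and `Z` are algebraic over `k[Y', Z']`, and two elements over which a field of
transcendence degree two is algebraic form a transcendence basis.

(b) If `[x, u] = a u` and `[x, v] = b v` with `a, b` central, then `[x, u v] = (a + b) u v` and
`[x, u⁻¹] = -a u⁻¹`, so `[x, y ^ i * z ^ j] = (i + j α) y ^ i * z ^ j`. Rescaling `x` by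
`(m α + r)⁻¹`, which exists since `α` is not a ratio of integers, gives the brackets.
-/

open Algebra Set

theorem IsAlgebraic.zpow {R K : Type*} [CommRing R] [NoZeroDivisors R] [Field K] [Algebra R K]
    {a : K} (ha : IsAlgebraic R a) (t : ℤ) : IsAlgebraic R (a ^ t) := by
  obtain ⟨s, rfl | rfl⟩ := Int.eq_nat_or_neg t
  · simpa using ha.pow s
  · simpa using (ha.pow s).inv

theorem IsAlgebraic.of_zpow {R K : Type*} [CommRing R] [Field K] [Algebra R K]
    {a : K} {t : ℤ} (ht : t ≠ 0) (ha : IsAlgebraic R (a ^ t)) : IsAlgebraic R a := by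
  obtain ⟨s, rfl | rfl⟩ := Int.eq_nat_or_neg t
  all_goals exact .of_pow (n := s) (by omega) (by simpa [IsAlgebraic.inv_iff] using ha)

theorem IsTranscendenceBasis.of_isAlgebraic_adjoin {ι R A : Type*} [Finite ι] [CommRing R]
    [Nontrivial R] [CommRing A] [NoZeroDivisors A] [Algebra R A] {x y : ι → A}
    (hx : IsTranscendenceBasis R x) (hxy : ∀ i, IsAlgebraic (adjoin R (range y)) (x i)) :
    IsTranscendenceBasis R y := by
  have : FaithfulSMul R A :=
    (faithfulSMul_iff_algebraMap_injective R A).mpr hx.1.algebraMap_injective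
  have : Algebra.IsAlgebraic (adjoin R (range y)) A :=
    ⟨fun a ↦ (hx.isAlgebraic.1 a).adjoin_of_forall_isAlgebraic
      fun _ hz ↦ by obtain ⟨⟨i, rfl⟩, -⟩ := hz; exact hxy i⟩
  exact IsAlgebraic.isTranscendenceBasis_of_lift_le_trdeg_of_finite R y
    hx.lift_cardinalMk_eq_trdeg.le

theorem IsTranscendenceBasis.fractionRing_mvPolynomial (ι R : Type*) [CommRing R] [IsDomain R] :
    IsTranscendenceBasis R
      (algebraMap (MvPolynomial ι R) (FractionRing (MvPolynomial ι R)) ∘ MvPolynomial.X) :=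
  have := IsLocalization.isAlgebraic (FractionRing (MvPolynomial ι R))
    (nonZeroDivisors (MvPolynomial ι R))
  (IsTranscendenceBasis.mvPolynomial ι R).algebraMap_comp

section LaurentMonomial

variable {F : Type*} [Field F] {Y Z : F}

theorem monomial_zpow_mul_monomial_zpow (hY : Y ≠ 0) (hZ : Z ≠ 0) (a b c d s t : ℤ) :
    (Y ^ a * Z ^ b) ^ s * (Y ^ c * Z ^ d) ^ t = Y ^ (a * s + c * t) * Z ^ (b * s + d * t) := by
  rw [mul_zpow, mul_zpow, ← zpow_mul, ← zpow_mul, ← zpow_mul, ← zpow_mul, zpow_add₀ hY,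
    zpow_add₀ hZ]
  ring

theorem isTranscendenceBasis_laurentMonomials {k : Type*} [Field k] [Algebra k F]
    (hYZ : IsTranscendenceBasis k ![Y, Z]) {n q m r : ℤ} (hdet : n * r - q * m ≠ 0) :
    IsTranscendenceBasis k ![Y ^ r * Z ^ m, Y ^ q * Z ^ n] := by
  have hY : Y ≠ 0 := by simpa using hYZ.1.ne_zero 0
  have hZ : Z ≠ 0 := by simpa using hYZ.1.ne_zero 1
  set S := adjoin k (range ![Y ^ r * Z ^ m, Y ^ q * Z ^ n])
  have hY' : IsAlgebraic S (Y ^ r * Z ^ m) :=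
    isAlgebraic_algebraMap (⟨_, subset_adjoin ⟨0, rfl⟩⟩ : S)
  have hZ' : IsAlgebraic S (Y ^ q * Z ^ n) :=
    isAlgebraic_algebraMap (⟨_, subset_adjoin ⟨1, rfl⟩⟩ : S)
  refine hYZ.of_isAlgebraic_adjoin fun i ↦ IsAlgebraic.of_zpow hdet ?_
  fin_cases i
  · have := (hY'.zpow n).mul (hZ'.zpow (-m))
    rwa [monomial_zpow_mul_monomial_zpow hY hZ, show r * n + q * -m = n * r - q * m by ring,
      show m * n + n * -m = 0 by ring, zpow_zero, mul_one] at this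
  · have := (hY'.zpow (-q)).mul (hZ'.zpow r)
    rwa [monomial_zpow_mul_monomial_zpow hY hZ, show r * -q + q * r = 0 by ring,
      show m * -q + n * r = n * r - q * m by ring, zpow_zero, one_mul] at this

end LaurentMonomial

section Commutator

variable {k D : Type*} [CommRing k] [Ring D] [Algebra k D] {x : D}

theorem commutator_mul_eq {u v : D} {a b : k} (hu : x * u - u * x = algebraMap k D a * u)
    (hv : x * v - v * x = algebraMap k D b * v) :
    x * (u * v) - u * v * x = algebraMap k D (a + b) * (u * v) := calc
  x * (u * v) - u * v * x = (x * u - u * x) * v + u * (x * v - v * x) := by noncomm_ring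
  _ = algebraMap k D (a + b) * (u * v) := by
    rw [hu, hv, ← mul_assoc u, ← Algebra.commutes, map_add, add_mul, mul_assoc, mul_assoc]

theorem commutator_pow_eq {w : D} {a : k} (h : x * w - w * x = algebraMap k D a * w) (s : ℕ) :
    x * w ^ s - w ^ s * x = algebraMap k D (s * a) * w ^ s := by
  induction s with
  | zero => simp
  | succ s ih => rw [pow_succ, commutator_mul_eq ih h, Nat.cast_succ, add_one_mul]

theorem commutator_algebraMap_mul (c : k) (w : D) :
    algebraMap k D c * x * w - w * (algebraMap k D c * x) =
      algebraMap k D c * (x * w - w * x) := by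
  rw [mul_sub, ← mul_assoc w, ← Algebra.commutes, mul_assoc, mul_assoc]

end Commutator

section CommutatorDivisionRing

variable {k D : Type*} [CommRing k] [DivisionRing D] [Algebra k D] {x w : D} {a : k}

theorem commutator_inv_eq (hw : w ≠ 0) (h : x * w - w * x = algebraMap k D a * w) :
    x * w⁻¹ - w⁻¹ * x = algebraMap k D (-a) * w⁻¹ := calc
  x * w⁻¹ - w⁻¹ * x = -(w⁻¹ * (x * w - w * x) * w⁻¹) := by
    simp only [mul_sub, sub_mul, mul_assoc, mul_inv_cancel₀ hw, inv_mul_cancel_left₀ hw,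
      mul_one, neg_sub]
  _ = algebraMap k D (-a) * w⁻¹ := by
    rw [h, Algebra.commutes, inv_mul_cancel_left₀ hw, map_neg, neg_mul]

theorem commutator_zpow_eq (hw : w ≠ 0) (h : x * w - w * x = algebraMap k D a * w) (t : ℤ) :
    x * w ^ t - w ^ t * x = algebraMap k D (t * a) * w ^ t := by
  obtain ⟨s, rfl | rfl⟩ := Int.eq_nat_or_neg t
  · simpa using commutator_pow_eq h s
  · rw [zpow_neg, zpow_natCast, commutator_inv_eq (pow_ne_zero s hw) (commutator_pow_eq h s),
      Int.cast_neg, Int.cast_natCast, neg_mul]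

end CommutatorDivisionRing

theorem int_mul_add_int_ne_zero {k : Type*} [Field k] {α : k}
    (hα : ∀ a b : ℤ, (b : k) ≠ 0 → α ≠ (a : k) / (b : k)) {m r : ℤ}
    (hmr : (m : k) ≠ 0 ∨ (r : k) ≠ 0) : (m : k) * α + r ≠ 0 := by
  intro h
  rcases eq_or_ne (m : k) 0 with hm | hm
  · exact hmr.resolve_left (not_not.mpr hm) (by simpa [hm] using h)
  · exact hα (-r) m hm (by rw [eq_div_iff hm]; push_cast; linear_combination h)

/-- Let `k` be a field, `α ∈ k \ k₀` (where `k₀` is the prime subfield, whose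
elements are the ratios of integers), and `M = (n q; m r)` an integer matrix whose determinant
is nonzero in `k`; set `β = (nα + q)/(mα + r)`. Then:
(a) `y^r z^m` and `y^q z^n` are algebraically independent over `k` in `k(y,z)`; and
(b) the assignment `x' ↦ (mα+r)⁻¹ x`, `y' ↦ y^r z^m`, `z' ↦ y^q z^n` preserves the Lie-bracket
relations `[x',y'] = y'`, `[x',z'] = βz'`, `[y',z'] = 0` in the skewfield of fractions
`K(𝔤_α)` (stated in any division ring over `k` containing elements `x, y, z` satisfying the
defining relations of `K(𝔤_α)` with `y, z ≠ 0`). -/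
theorem monomial_embedding (k : Type*) [Field k] (α : k)
    (hα : ∀ a b : ℤ, (b : k) ≠ 0 → α ≠ (a : k) / (b : k))
    (n q m r : ℤ) (hdet : ((n * r - q * m : ℤ) : k) ≠ 0)
    (β : k) (hβ : β = ((n : k) * α + (q : k)) / ((m : k) * α + (r : k))) :
    (AlgebraicIndependent k
      ![(algebraMap (MvPolynomial (Fin 2) k) (FractionRing (MvPolynomial (Fin 2) k))
            (MvPolynomial.X 0)) ^ r *
          (algebraMap (MvPolynomial (Fin 2) k) (FractionRing (MvPolynomial (Fin 2) k))
            (MvPolynomial.X 1)) ^ m,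
        (algebraMap (MvPolynomial (Fin 2) k) (FractionRing (MvPolynomial (Fin 2) k))
            (MvPolynomial.X 0)) ^ q *
          (algebraMap (MvPolynomial (Fin 2) k) (FractionRing (MvPolynomial (Fin 2) k))
            (MvPolynomial.X 1)) ^ n]) ∧
    ∀ (D : Type) [DivisionRing D] [Algebra k D] (x y z : D),
      y ≠ 0 → z ≠ 0 → y * z = z * y → x * y - y * x = y →
      x * z - z * x = algebraMap k D α * z →
      let x' : D := (algebraMap k D ((m : k) * α + (r : k)))⁻¹ * x
      let y' : D := y ^ r * z ^ m
      let z' : D := y ^ q * z ^ n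
      x' * y' - y' * x' = y' ∧ x' * z' - z' * x' = algebraMap k D β * z' ∧
        y' * z' - z' * y' = 0 := by
  have hdetZ : n * r - q * m ≠ 0 := fun h ↦ hdet (by rw [h, Int.cast_zero])
  refine ⟨(isTranscendenceBasis_laurentMonomials ?_ hdetZ).1, ?_⟩
  · convert IsTranscendenceBasis.fractionRing_mvPolynomial (Fin 2) k using 1
    · rfl -- the `CommRing` instances of the fraction field via `Field` and via `Localization`
    ext i
    fin_cases i <;> rfl
  intro D _ _ x y z hy hz hyz hxy hxz
  dsimp only
  have hs : (m : k) * α + r ≠ 0 := int_mul_add_int_ne_zero hα <| by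
    by_contra! h
    exact hdet (by push_cast; rw [h.1, h.2]; ring)
  have hx'_monomial (a b : ℤ) :
      (algebraMap k D ((m : k) * α + r))⁻¹ * x * (y ^ a * z ^ b)
        - y ^ a * z ^ b * ((algebraMap k D ((m : k) * α + r))⁻¹ * x)
        = algebraMap k D ((b * α + a) / (m * α + r)) * (y ^ a * z ^ b) := by
    have hxy' : x * y - y * x = algebraMap k D 1 * y := by rw [map_one, one_mul, hxy]
    rw [← map_inv₀, commutator_algebraMap_mul,
      commutator_mul_eq (commutator_zpow_eq hy hxy' a) (commutator_zpow_eq hz hxz b),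
      ← mul_assoc, ← map_mul, div_eq_inv_mul, mul_one, add_comm (a : k)]
  refine ⟨?_, ?_, ?_⟩
  · rw [hx'_monomial, div_self hs, map_one, one_mul]
  · rw [hx'_monomial, hβ]
  · have hyz : Commute y z := hyz
    exact sub_eq_zero_of_eq <| Commute.eq <|
      (((Commute.refl y).zpow_zpow₀ r q).mul_right (hyz.zpow_zpow₀ r n)).mul_left
        ((hyz.symm.zpow_zpow₀ m q).mul_right ((Commute.refl z).zpow_zpow₀ m n))
end
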